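/- arXiv:math/0509070 — 7 statements merged into one kernel-verified Lean document; each statement's English description precedes it below -/
import Mathlib

section
/- Let a, b > 0, let ϑ₂ : [0,a] → [0,b] be continuous and non-increasing, and let G := {(s,t) : 0 ≤ s ≤ a, 0 ≤ t ≤ ϑ₂(s)}. Let f : G × ℝⁿ × ℝⁿ × ℝⁿ → ℝⁿ be continuous and satisfy |f(σ,τ,x₁,p₁,q₁) − f(σ,τ,x₂,p₂,q₂)| ≤ L(|x₁−x₂| + |p₁−p₂| + |q₁−q₂|) for all arguments, where |·| is the Euclidean norm. Let x₁ ∈ C¹([0,a];ℝⁿ) and x₂ ∈ C¹([0,b];ℝⁿ) satisfy x₁(0) = x₂(0) =: x₀. Then there exists a unique continuous function x : G → ℝⁿ possessing continuous first partial derivatives x_s, x_t on G such that x(s,t) = x₁(s) + x₂(t) − x₀ + ∫₀ˢ ∫₀ᵗ f(σ,τ, x(σ,τ), x_σ(σ,τ), x_τ(σ,τ)) dτ dσ for all (s,t) ∈ G. -/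
/-!
Writing `u = f(·, x, x_s, x_t)`, a solution is `x = x₁(s) + x₂(t) - x₀ + ∫₀ˢ∫₀ᵗ u`, with
`x_s = x₁'(s) + ∫₀ᵗ u(s, τ) dτ` and `x_t = x₂'(t) + ∫₀ˢ u(σ, t) dσ`, so `u` is a fixed point of
`u ↦ f(·, x₁ + x₂ - x₀ + ∫∫ u, x₁' + ∫ u dτ, x₂' + ∫ u dσ)` on `G`. Since `G` contains the
rectangle `[0, s] × [0, t]` of each of its points, these three Volterra integrals only see `u` on
`G`, and in the Bielecki norm `sup e^{-λ(s+t)} |u|` each of them gains a factor `1/λ`; with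
`λ = 6|L| + 1` the map is a contraction of constant `1/2`. For uniqueness, the difference of the
right-hand sides of two solutions obeys the same Volterra inequality on every rectangle
`[0, s] × [0, t] ⊆ G` (the partial derivatives of the difference of the solutions are the single
integrals, by uniqueness of one-sided derivatives on the sides), and the same weighted estimate
forces it to vanish there.
-/

open MeasureTheory Set Real

section

variable {E : Type*} [NormedAddCommGroup E] [NormedSpace ℝ E]

noncomputable def rectIntegral (u : ℝ × ℝ → E) (p : ℝ × ℝ) : E :=
  ∫ σ in (0:ℝ)..p.1, ∫ τ in (0:ℝ)..p.2, u (σ, τ)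

noncomputable def sndIntegral (u : ℝ × ℝ → E) (p : ℝ × ℝ) : E :=
  ∫ τ in (0:ℝ)..p.2, u (p.1, τ)

noncomputable def fstIntegral (u : ℝ × ℝ → E) (p : ℝ × ℝ) : E :=
  ∫ σ in (0:ℝ)..p.1, u (σ, p.2)

variable {u v : ℝ × ℝ → E} {p : ℝ × ℝ}

theorem mk_mem_Icc_zero {σ τ : ℝ} : (σ, τ) ∈ Icc 0 p ↔ σ ∈ Icc 0 p.1 ∧ τ ∈ Icc 0 p.2 := by
  rw [Icc_prod_eq, mem_prod]; rfl

theorem rectIntegral_eq_integral_sndIntegral (u : ℝ × ℝ → E) (p : ℝ × ℝ) :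
    rectIntegral u p = ∫ σ in (0:ℝ)..p.1, sndIntegral u (σ, p.2) :=
  rfl

theorem rectIntegral_eq_integral_fstIntegral (hu : Continuous u) (p : ℝ × ℝ) :
    rectIntegral u p = ∫ τ in (0:ℝ)..p.2, fstIntegral u (p.1, τ) :=
  intervalIntegral_intervalIntegral_swap
    ((hu.continuousOn.integrableOn_compact (isCompact_uIcc.prod isCompact_uIcc)).mono_set
      (prod_mono uIoc_subset_uIcc uIoc_subset_uIcc))

theorem continuous_rectIntegral (hu : Continuous u) : Continuous (rectIntegral u) := by
  unfold rectIntegral; fun_prop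

theorem continuous_sndIntegral (hu : Continuous u) : Continuous (sndIntegral u) := by
  unfold sndIntegral; fun_prop

theorem continuous_fstIntegral (hu : Continuous u) : Continuous (fstIntegral u) := by
  unfold fstIntegral; fun_prop

theorem sndIntegral_sub (hu : Continuous u) (hv : Continuous v) :
    sndIntegral (u - v) = sndIntegral u - sndIntegral v := by
  ext p
  exact intervalIntegral.integral_sub (Continuous.intervalIntegrable (by fun_prop) _ _)
    (Continuous.intervalIntegrable (by fun_prop) _ _)

theorem fstIntegral_sub (hu : Continuous u) (hv : Continuous v) :
    fstIntegral (u - v) = fstIntegral u - fstIntegral v := by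
  ext p
  exact intervalIntegral.integral_sub (Continuous.intervalIntegrable (by fun_prop) _ _)
    (Continuous.intervalIntegrable (by fun_prop) _ _)

theorem rectIntegral_sub (hu : Continuous u) (hv : Continuous v) :
    rectIntegral (u - v) = rectIntegral u - rectIntegral v := by
  ext p
  simp only [rectIntegral_eq_integral_sndIntegral, sndIntegral_sub hu hv, Pi.sub_apply]
  have hslice : Continuous fun σ : ℝ => (σ, p.2) := by fun_prop
  exact intervalIntegral.integral_sub
    (((continuous_sndIntegral hu).comp hslice).intervalIntegrable _ _)
    (((continuous_sndIntegral hv).comp hslice).intervalIntegrable _ _)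

theorem sndIntegral_congr (hp : 0 ≤ p) (h : EqOn u v (Icc 0 p)) :
    sndIntegral u p = sndIntegral v p := by
  obtain ⟨hp₁, hp₂⟩ : (0:ℝ) ≤ p.1 ∧ (0:ℝ) ≤ p.2 := hp
  refine intervalIntegral.integral_congr fun τ hτ => h ?_
  rw [uIcc_of_le hp₂] at hτ
  exact mk_mem_Icc_zero.2 ⟨⟨hp₁, le_rfl⟩, hτ⟩

theorem fstIntegral_congr (hp : 0 ≤ p) (h : EqOn u v (Icc 0 p)) :
    fstIntegral u p = fstIntegral v p := by
  obtain ⟨hp₁, hp₂⟩ : (0:ℝ) ≤ p.1 ∧ (0:ℝ) ≤ p.2 := hp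
  refine intervalIntegral.integral_congr fun σ hσ => h ?_
  rw [uIcc_of_le hp₁] at hσ
  exact mk_mem_Icc_zero.2 ⟨hσ, ⟨hp₂, le_rfl⟩⟩

theorem rectIntegral_congr (hp : 0 ≤ p) (h : EqOn u v (Icc 0 p)) :
    rectIntegral u p = rectIntegral v p := by
  obtain ⟨hp₁, hp₂⟩ : (0:ℝ) ≤ p.1 ∧ (0:ℝ) ≤ p.2 := hp
  refine intervalIntegral.integral_congr fun σ hσ => sndIntegral_congr (p := (σ, p.2)) ?_ ?_
  all_goals rw [uIcc_of_le hp₁] at hσ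
  · exact ⟨hσ.1, hp₂⟩
  · exact h.mono (Icc_subset_Icc_right ⟨hσ.2, le_rfl⟩)

theorem norm_integral_le_of_norm_le_exp {g : ℝ → E} {C l t : ℝ} (hl : 0 < l) (ht : 0 ≤ t)
    (h : ∀ τ ∈ Icc 0 t, ‖g τ‖ ≤ C * exp (l * τ)) :
    ‖∫ τ in (0:ℝ)..t, g τ‖ ≤ C * exp (l * t) / l := by
  have hC : 0 ≤ C := by simpa using (norm_nonneg _).trans (h 0 ⟨le_rfl, ht⟩)
  have hint : ∫ τ in (0:ℝ)..t, C * exp (l * τ) = C * (exp (l * t) - 1) / l := by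
    rw [intervalIntegral.integral_const_mul, intervalIntegral.integral_comp_mul_left exp hl.ne',
      integral_exp, mul_zero, exp_zero, smul_eq_mul]
    field_simp
  calc ‖∫ τ in (0:ℝ)..t, g τ‖ ≤ ∫ τ in (0:ℝ)..t, C * exp (l * τ) :=
        intervalIntegral.norm_integral_le_of_norm_le ht
          (ae_of_all _ fun τ hτ => h τ (Ioc_subset_Icc_self hτ))
          (Continuous.intervalIntegrable (by fun_prop) _ _)
    _ ≤ C * exp (l * t) / l := by
        rw [hint]; gcongr; linarith

theorem norm_sndIntegral_le {D l : ℝ} (hl : 0 < l) (hp : 0 ≤ p)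
    (h : ∀ q ∈ Icc 0 p, ‖u q‖ ≤ D * exp (l * (q.1 + q.2))) :
    ‖sndIntegral u p‖ ≤ D * exp (l * (p.1 + p.2)) / l := by
  obtain ⟨hp₁, hp₂⟩ : (0:ℝ) ≤ p.1 ∧ (0:ℝ) ≤ p.2 := hp
  rw [mul_add, exp_add, ← mul_assoc]
  refine norm_integral_le_of_norm_le_exp hl hp₂ fun τ hτ => ?_
  simpa only [mul_add, exp_add, mul_assoc] using h _ (mk_mem_Icc_zero.2 ⟨⟨hp₁, le_rfl⟩, hτ⟩)

theorem norm_fstIntegral_le {D l : ℝ} (hl : 0 < l) (hp : 0 ≤ p)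
    (h : ∀ q ∈ Icc 0 p, ‖u q‖ ≤ D * exp (l * (q.1 + q.2))) :
    ‖fstIntegral u p‖ ≤ D * exp (l * (p.1 + p.2)) / l := by
  obtain ⟨hp₁, hp₂⟩ : (0:ℝ) ≤ p.1 ∧ (0:ℝ) ≤ p.2 := hp
  rw [add_comm, mul_add, exp_add, ← mul_assoc]
  refine norm_integral_le_of_norm_le_exp hl hp₁ fun σ hσ => ?_
  simpa only [add_comm σ, mul_add, exp_add, mul_assoc]
    using h _ (mk_mem_Icc_zero.2 ⟨hσ, ⟨hp₂, le_rfl⟩⟩)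

theorem norm_rectIntegral_le {D l : ℝ} (hl : 0 < l) (hp : 0 ≤ p)
    (h : ∀ q ∈ Icc 0 p, ‖u q‖ ≤ D * exp (l * (q.1 + q.2))) :
    ‖rectIntegral u p‖ ≤ D * exp (l * (p.1 + p.2)) / l / l := by
  obtain ⟨hp₁, hp₂⟩ : (0:ℝ) ≤ p.1 ∧ (0:ℝ) ≤ p.2 := hp
  have hσ : ∀ σ ∈ Icc 0 p.1, ‖sndIntegral u (σ, p.2)‖ ≤ D * exp (l * p.2) / l * exp (l * σ) := by
    intro σ hσ
    have hσp : (σ, p.2) ∈ Icc 0 p := mk_mem_Icc_zero.2 ⟨hσ, ⟨hp₂, le_rfl⟩⟩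
    calc ‖sndIntegral u (σ, p.2)‖ ≤ D * exp (l * (σ + p.2)) / l :=
          norm_sndIntegral_le hl hσp.1 fun q hq => h q (Icc_subset_Icc_right hσp.2 hq)
      _ = D * exp (l * p.2) / l * exp (l * σ) := by rw [mul_add, exp_add]; ring
  calc ‖rectIntegral u p‖ ≤ D * exp (l * p.2) / l * exp (l * p.1) / l :=
        norm_integral_le_of_norm_le_exp hl hp₁ hσ
    _ = D * exp (l * (p.1 + p.2)) / l / l := by rw [mul_add, exp_add]; ring

theorem bielecki_estimate {K D : ℝ} (hK : 0 ≤ K) (hp : 0 ≤ p)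
    (h : ∀ q ∈ Icc 0 p, ‖u q‖ ≤ D * exp ((6 * K + 1) * (q.1 + q.2))) :
    K * (‖rectIntegral u p‖ + ‖sndIntegral u p‖ + ‖fstIntegral u p‖) ≤
      D * exp ((6 * K + 1) * (p.1 + p.2)) / 2 := by
  have hl : 0 < 6 * K + 1 := by positivity
  have hD : 0 ≤ D := by simpa using (norm_nonneg _).trans (h 0 ⟨le_rfl, hp⟩)
  have hB : 0 ≤ D * exp ((6 * K + 1) * (p.1 + p.2)) := by positivity
  have h₁ := norm_rectIntegral_le hl hp h
  have h₂ := norm_sndIntegral_le hl hp h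
  have h₃ := norm_fstIntegral_le hl hp h
  generalize D * exp ((6 * K + 1) * (p.1 + p.2)) = B at hB h₁ h₂ h₃ ⊢
  have h₄ : B / (6 * K + 1) / (6 * K + 1) ≤ B / (6 * K + 1) :=
    div_le_self (by positivity) (by linarith)
  calc K * (‖rectIntegral u p‖ + ‖sndIntegral u p‖ + ‖fstIntegral u p‖)
      ≤ K * (3 * (B / (6 * K + 1))) := by gcongr; linarith
    _ = 3 * K / (6 * K + 1) * B := by ring
    _ ≤ 1 / 2 * B := mul_le_mul_of_nonneg_right ((div_le_iff₀ hl).2 (by linarith)) hB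
    _ = B / 2 := by ring

theorem eqOn_zero_of_norm_le_volterra {K : ℝ} (hK : 0 ≤ K) (hp : 0 ≤ p)
    (hu : ContinuousOn u (Icc 0 p))
    (h : ∀ q ∈ Icc 0 p,
      ‖u q‖ ≤ K * (‖rectIntegral u q‖ + ‖sndIntegral u q‖ + ‖fstIntegral u q‖)) :
    EqOn u 0 (Icc 0 p) := by
  obtain ⟨q₀, hq₀, hmax⟩ := isCompact_Icc.exists_isMaxOn (nonempty_Icc.2 hp)
    (f := fun q => exp (-((6 * K + 1) * (q.1 + q.2))) * ‖u q‖)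
    ((continuous_exp.comp (by fun_prop)).continuousOn.mul hu.norm)
  set M := exp (-((6 * K + 1) * (q₀.1 + q₀.2))) * ‖u q₀‖
  have hbound : ∀ q ∈ Icc 0 p, ‖u q‖ ≤ M * exp ((6 * K + 1) * (q.1 + q.2)) := by
    intro q hq
    have : exp (-((6 * K + 1) * (q.1 + q.2))) * ‖u q‖ ≤ M := hmax hq
    rwa [exp_neg, inv_mul_le_iff₀ (exp_pos _), mul_comm] at this
  have hq₀M : ‖u q₀‖ = M * exp ((6 * K + 1) * (q₀.1 + q₀.2)) := by
    rw [mul_comm, ← mul_assoc, ← exp_add, add_neg_cancel, exp_zero, one_mul]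
  have hhalf : M * exp ((6 * K + 1) * (q₀.1 + q₀.2)) ≤
      M * exp ((6 * K + 1) * (q₀.1 + q₀.2)) / 2 :=
    calc M * exp ((6 * K + 1) * (q₀.1 + q₀.2)) = ‖u q₀‖ := hq₀M.symm
      _ ≤ K * (‖rectIntegral u q₀‖ + ‖sndIntegral u q₀‖ + ‖fstIntegral u q₀‖) := h q₀ hq₀
      _ ≤ M * exp ((6 * K + 1) * (q₀.1 + q₀.2)) / 2 :=
        bielecki_estimate hK hq₀.1 fun q hq => hbound q (Icc_subset_Icc_right hq₀.2 hq)
  have hM : M ≤ 0 := by nlinarith [exp_pos ((6 * K + 1) * (q₀.1 + q₀.2))]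
  intro q hq
  exact norm_le_zero_iff.1
    ((hbound q hq).trans (mul_nonpos_of_nonpos_of_nonneg hM (exp_pos _).le))

end

structure IsGoursatDomain (G : Set (ℝ × ℝ)) : Prop where
  nonneg : ∀ p ∈ G, 0 ≤ p
  Icc_subset : ∀ p ∈ G, Icc 0 p ⊆ G
  exists_retraction : ∃ r : ℝ × ℝ → ℝ × ℝ, Continuous r ∧ (∀ p, r p ∈ G) ∧ EqOn r id G

theorem IsGoursatDomain.exists_continuous_eqOn {β : Type*} [TopologicalSpace β]
    {G : Set (ℝ × ℝ)} (hG : IsGoursatDomain G) {u : ℝ × ℝ → β} (hu : ContinuousOn u G) :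
    ∃ v : ℝ × ℝ → β, Continuous v ∧ EqOn v u G := by
  obtain ⟨r, hr, hrG, hrid⟩ := hG.exists_retraction
  exact ⟨u ∘ r, hu.comp_continuous hr hrG, fun p hp => congrArg u (hrid hp)⟩

def IsLipschitzInArgs {E : Type*} [NormedAddCommGroup E] (G : Set (ℝ × ℝ))
    (f : ℝ × ℝ → E → E → E → E) (K : ℝ) : Prop :=
  ∀ p ∈ G, ∀ x₁ p₁ q₁ x₂ p₂ q₂ : E,
    ‖f p x₁ p₁ q₁ - f p x₂ p₂ q₂‖ ≤ K * (‖x₁ - x₂‖ + ‖p₁ - p₂‖ + ‖q₁ - q₂‖)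

theorem IsLipschitzInArgs.mono {E : Type*} [NormedAddCommGroup E] {G : Set (ℝ × ℝ)}
    {f : ℝ × ℝ → E → E → E → E} {K K' : ℝ} (hf : IsLipschitzInArgs G f K) (hK : K ≤ K') :
    IsLipschitzInArgs G f K' :=
  fun p hp _ _ _ _ _ _ => (hf p hp _ _ _ _ _ _).trans (by gcongr)

section

variable {E : Type*} [NormedAddCommGroup E] [NormedSpace ℝ E]

structure IsGoursatSolution (G : Set (ℝ × ℝ)) (f : ℝ × ℝ → E → E → E → E) (x₁ x₂ : ℝ → E)
    (x₀ : E) (x xs xt : ℝ × ℝ → E) : Prop where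
  continuousOn : ContinuousOn x G
  continuousOn_xs : ContinuousOn xs G
  continuousOn_xt : ContinuousOn xt G
  hasDerivWithinAt_fst : ∀ p ∈ G,
    HasDerivWithinAt (fun σ => x (σ, p.2)) (xs p) {σ | (σ, p.2) ∈ G} p.1
  hasDerivWithinAt_snd : ∀ p ∈ G,
    HasDerivWithinAt (fun τ => x (p.1, τ)) (xt p) {τ | (p.1, τ) ∈ G} p.2
  eq_integral : ∀ p ∈ G,
    x p = x₁ p.1 + x₂ p.2 - x₀ + rectIntegral (fun q => f q (x q) (xs q) (xt q)) p

variable {G : Set (ℝ × ℝ)} {f : ℝ × ℝ → E → E → E → E} {x₁ x₂ : ℝ → E} {x₀ : E}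
  {x xs xt F c d₁ d₂ u v : ℝ × ℝ → E} {p : ℝ × ℝ}

theorem IsGoursatSolution.continuousOn_rhs
    (hf : ContinuousOn (fun q : (ℝ × ℝ) × E × E × E => f q.1 q.2.1 q.2.2.1 q.2.2.2) (G ×ˢ univ))
    (hx : IsGoursatSolution G f x₁ x₂ x₀ x xs xt) :
    ContinuousOn (fun q => f q (x q) (xs q) (xt q)) G :=
  hf.comp (continuousOn_id.prodMk (hx.continuousOn.prodMk
    (hx.continuousOn_xs.prodMk hx.continuousOn_xt))) fun _ hq => mk_mem_prod hq (mem_univ _)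

theorem IsGoursatSolution.eq_add_rectIntegral (hG : IsGoursatDomain G)
    (hx : IsGoursatSolution G f x₁ x₂ x₀ x xs xt)
    (hF : EqOn F (fun q => f q (x q) (xs q) (xt q)) G) (hp : p ∈ G) :
    x p = x₁ p.1 + x₂ p.2 - x₀ + rectIntegral F p := by
  rw [hx.eq_integral p hp, rectIntegral_congr (hG.nonneg p hp) (hF.mono (hG.Icc_subset p hp))]

noncomputable def goursatOperator (f : ℝ × ℝ → E → E → E → E) (c d₁ d₂ u : ℝ × ℝ → E)
    (p : ℝ × ℝ) : E :=
  f p (c p + rectIntegral u p) (d₁ p + sndIntegral u p) (d₂ p + fstIntegral u p)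

theorem continuousOn_goursatOperator
    (hf : ContinuousOn (fun q : (ℝ × ℝ) × E × E × E => f q.1 q.2.1 q.2.2.1 q.2.2.2) (G ×ˢ univ))
    (hc : ContinuousOn c G) (hd₁ : ContinuousOn d₁ G) (hd₂ : ContinuousOn d₂ G)
    (hu : Continuous u) : ContinuousOn (goursatOperator f c d₁ d₂ u) G :=
  hf.comp (continuousOn_id.prodMk ((hc.add (continuous_rectIntegral hu).continuousOn).prodMk
    ((hd₁.add (continuous_sndIntegral hu).continuousOn).prodMk
      (hd₂.add (continuous_fstIntegral hu).continuousOn)))) fun _ hq => mk_mem_prod hq (mem_univ _)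

theorem norm_goursatOperator_sub_le (hG : IsGoursatDomain G) {K D : ℝ} (hK : 0 ≤ K)
    (hfK : IsLipschitzInArgs G f K)
    (hu : Continuous u) (hv : Continuous v)
    (huv : ∀ q ∈ G, ‖u q - v q‖ ≤ D * exp ((6 * K + 1) * (q.1 + q.2))) (hp : p ∈ G) :
    ‖goursatOperator f c d₁ d₂ u p - goursatOperator f c d₁ d₂ v p‖ ≤
      D * exp ((6 * K + 1) * (p.1 + p.2)) / 2 := by
  refine (hfK p hp _ _ _ _ _ _).trans ?_
  simp only [add_sub_add_left_eq_sub]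
  rw [← Pi.sub_apply (rectIntegral u), ← Pi.sub_apply (sndIntegral u),
    ← Pi.sub_apply (fstIntegral u), ← rectIntegral_sub hu hv, ← sndIntegral_sub hu hv,
    ← fstIntegral_sub hu hv]
  exact bielecki_estimate hK (hG.nonneg p hp) fun q hq => huv q (hG.Icc_subset p hp hq)

end

section

variable {E : Type*} [NormedAddCommGroup E] [NormedSpace ℝ E] [CompleteSpace E]

section

variable {u z : ℝ × ℝ → E} {p q : ℝ × ℝ}

theorem hasDerivAt_rectIntegral_fst (hu : Continuous u) (p : ℝ × ℝ) :
    HasDerivAt (fun σ => rectIntegral u (σ, p.2)) (sndIntegral u p) p.1 :=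
  (((continuous_sndIntegral hu).comp (by fun_prop : Continuous fun σ : ℝ => (σ, p.2))
    ).integral_hasStrictDerivAt 0 p.1).hasDerivAt

theorem hasDerivAt_rectIntegral_snd (hu : Continuous u) (p : ℝ × ℝ) :
    HasDerivAt (fun τ => rectIntegral u (p.1, τ)) (fstIntegral u p) p.2 := by
  simp only [rectIntegral_eq_integral_fstIntegral hu]
  exact (((continuous_fstIntegral hu).comp (by fun_prop : Continuous fun τ : ℝ => (p.1, τ))
    ).integral_hasStrictDerivAt 0 p.2).hasDerivAt

theorem eq_sndIntegral_of_hasDerivWithinAt {z' : E} (hu : Continuous u) (hp : 0 < p.1)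
    (hz : EqOn z (rectIntegral u) (Icc 0 p)) (hq : q ∈ Icc 0 p)
    (hz' : HasDerivWithinAt (fun σ => z (σ, q.2)) z' (Icc 0 p.1) q.1) :
    z' = sndIntegral u q := by
  have hq' := mk_mem_Icc_zero.1 hq
  refine (uniqueDiffOn_Icc hp q.1 hq'.1).eq_deriv _ hz'
    ((hasDerivAt_rectIntegral_fst hu q).hasDerivWithinAt.congr (fun σ hσ => ?_) ?_)
  · exact hz (mk_mem_Icc_zero.2 ⟨hσ, hq'.2⟩)
  · exact hz hq

theorem eq_fstIntegral_of_hasDerivWithinAt {z' : E} (hu : Continuous u) (hp : 0 < p.2)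
    (hz : EqOn z (rectIntegral u) (Icc 0 p)) (hq : q ∈ Icc 0 p)
    (hz' : HasDerivWithinAt (fun τ => z (q.1, τ)) z' (Icc 0 p.2) q.2) :
    z' = fstIntegral u q := by
  have hq' := mk_mem_Icc_zero.1 hq
  refine (uniqueDiffOn_Icc hp q.2 hq'.2).eq_deriv _ hz'
    ((hasDerivAt_rectIntegral_snd hu q).hasDerivWithinAt.congr (fun τ hτ => ?_) ?_)
  · exact hz (mk_mem_Icc_zero.2 ⟨hq'.1, hτ⟩)
  · exact hz hq

end

variable {G : Set (ℝ × ℝ)} {f : ℝ × ℝ → E → E → E → E} {x₁ x₂ : ℝ → E} {x₀ : E}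
  {x xs xt y ys yt c d₁ d₂ : ℝ × ℝ → E}

theorem IsGoursatSolution.eqOn (hG : IsGoursatDomain G)
    (hf : ContinuousOn (fun q : (ℝ × ℝ) × E × E × E => f q.1 q.2.1 q.2.2.1 q.2.2.2) (G ×ˢ univ))
    {K : ℝ} (hK : 0 ≤ K) (hfK : IsLipschitzInArgs G f K)
    (hx : IsGoursatSolution G f x₁ x₂ x₀ x xs xt) (hy : IsGoursatSolution G f x₁ x₂ x₀ y ys yt) :
    EqOn x y G := by
  obtain ⟨Fx, hFxc, hFx⟩ := hG.exists_continuous_eqOn (hx.continuousOn_rhs hf)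
  obtain ⟨Fy, hFyc, hFy⟩ := hG.exists_continuous_eqOn (hy.continuousOn_rhs hf)
  have hΔc : Continuous (Fy - Fx) := hFyc.sub hFxc
  have hz : ∀ q ∈ G, y q - x q = rectIntegral (Fy - Fx) q := fun q hq => by
    rw [hy.eq_add_rectIntegral hG hFy hq, hx.eq_add_rectIntegral hG hFx hq,
      rectIntegral_sub hFyc hFxc, Pi.sub_apply]
    abel
  intro p hp
  have hp0 := hG.nonneg p hp
  have hpG := hG.Icc_subset p hp
  suffices rectIntegral (Fy - Fx) p = 0 by rw [eq_comm, ← sub_eq_zero, hz p hp, this]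
  -- On the axes the slices of `G` may be single points, which leave the partial derivatives of
  -- a solution undetermined; but there the double integral vanishes.
  obtain h₁ | h₁ := hp0.1.eq_or_lt
  · simp [rectIntegral, ← h₁]
  obtain h₂ | h₂ := hp0.2.eq_or_lt
  · simp [rectIntegral, ← h₂]
  have hΔ : EqOn (Fy - Fx) 0 (Icc 0 p) :=
    eqOn_zero_of_norm_le_volterra hK hp0 hΔc.continuousOn fun q hq => ?_
  · rw [rectIntegral_congr hp0 hΔ]
    simp [rectIntegral]
  have hqG := hpG hq
  have hq' := mk_mem_Icc_zero.1 hq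
  have hs := eq_sndIntegral_of_hasDerivWithinAt hΔc h₁ (fun q hq => hz q (hpG hq)) hq
    (((hy.hasDerivWithinAt_fst q hqG).sub (hx.hasDerivWithinAt_fst q hqG)).mono
      fun σ hσ => hpG (mk_mem_Icc_zero.2 ⟨hσ, hq'.2⟩))
  have ht := eq_fstIntegral_of_hasDerivWithinAt hΔc h₂ (fun q hq => hz q (hpG hq)) hq
    (((hy.hasDerivWithinAt_snd q hqG).sub (hx.hasDerivWithinAt_snd q hqG)).mono
      fun τ hτ => hpG (mk_mem_Icc_zero.2 ⟨hq'.1, hτ⟩))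
  calc ‖(Fy - Fx) q‖ = ‖f q (y q) (ys q) (yt q) - f q (x q) (xs q) (xt q)‖ := by
        rw [Pi.sub_apply, hFy hqG, hFx hqG]
    _ ≤ K * (‖y q - x q‖ + ‖ys q - xs q‖ + ‖yt q - xt q‖) := hfK q hqG _ _ _ _ _ _
    _ = K * (‖rectIntegral (Fy - Fx) q‖ + ‖sndIntegral (Fy - Fx) q‖ +
          ‖fstIntegral (Fy - Fx) q‖) := by rw [hz q hqG, hs, ht]

theorem exists_fixedPoint_goursatOperator (hG : IsGoursatDomain G) (hGc : IsCompact G)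
    (hf : ContinuousOn (fun q : (ℝ × ℝ) × E × E × E => f q.1 q.2.1 q.2.2.1 q.2.2.2) (G ×ˢ univ))
    {K : ℝ} (hK : 0 ≤ K) (hfK : IsLipschitzInArgs G f K)
    (hc : ContinuousOn c G) (hd₁ : ContinuousOn d₁ G) (hd₂ : ContinuousOn d₂ G) :
    ∃ u, Continuous u ∧ ∀ p ∈ G, u p = goursatOperator f c d₁ d₂ u p := by
  obtain ⟨r, hr, hrG, hrid⟩ := hG.exists_retraction
  have : CompactSpace G := isCompact_iff_compactSpace.mp hGc
  -- Conjugating by the weight `ω` turns the Bielecki norm into the sup norm of `C(G, E)`.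
  let ω : ℝ × ℝ → ℝ := fun p => exp ((6 * K + 1) * (p.1 + p.2))
  have hω : Continuous ω := by fun_prop
  have hω₀ : ∀ p, 0 < ω p := fun p => exp_pos _
  let extend : C(G, E) → ℝ × ℝ → E := fun w p => ω (r p) • w ⟨r p, hrG p⟩
  have hextend : ∀ w, Continuous (extend w) := fun w =>
    (hω.comp hr).smul (w.continuous.comp (hr.subtype_mk hrG))
  have hextend_eq : ∀ w p (hp : p ∈ G), extend w p = ω p • w ⟨p, hp⟩ := by
    intro w p hp
    simp only [extend, hrid hp, id]
  let S : C(G, E) → C(G, E) := fun w =>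
    ⟨G.domRestrict fun p => (ω p)⁻¹ • goursatOperator f c d₁ d₂ (extend w) p,
      ((hω.continuousOn.inv₀ fun p _ => (hω₀ p).ne').smul
        (continuousOn_goursatOperator hf hc hd₁ hd₂ (hextend w))).domRestrict⟩
  have hS : ContractingWith 2⁻¹ S := by
    refine ⟨by norm_num, LipschitzWith.of_dist_le_mul fun w₁ w₂ =>
      (ContinuousMap.dist_le (by positivity)).2 fun ⟨p, hp⟩ => ?_⟩
    have hD : ∀ q ∈ G, ‖extend w₁ q - extend w₂ q‖ ≤ dist w₁ w₂ * ω q := by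
      intro q hq
      rw [hextend_eq w₁ q hq, hextend_eq w₂ q hq, ← smul_sub, norm_smul, norm_of_nonneg (hω₀ q).le,
        mul_comm, ← dist_eq_norm]
      exact mul_le_mul_of_nonneg_right (ContinuousMap.dist_apply_le_dist _) (hω₀ q).le
    calc dist (S w₁ ⟨p, hp⟩) (S w₂ ⟨p, hp⟩) = (ω p)⁻¹ *
          ‖goursatOperator f c d₁ d₂ (extend w₁) p - goursatOperator f c d₁ d₂ (extend w₂) p‖ := by
          rw [dist_eq_norm, ← norm_of_nonneg (inv_pos.2 (hω₀ p)).le, ← norm_smul, smul_sub]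
          rfl
      _ ≤ (ω p)⁻¹ * (dist w₁ w₂ * ω p / 2) := by
          gcongr
          exact norm_goursatOperator_sub_le hG hK hfK (hextend w₁) (hextend w₂) hD hp
      _ = ((2⁻¹ : NNReal) : ℝ) * dist w₁ w₂ := by
          field_simp [(hω₀ p).ne']
          push_cast
          ring
  refine ⟨extend (ContractingWith.fixedPoint S hS), hextend _, fun p hp => ?_⟩
  have hfix := congrArg (· ⟨p, hp⟩) (ContractingWith.fixedPoint_isFixedPt (f := S) hS)
  rw [hextend_eq _ p hp, ← hfix]
  exact smul_inv_smul₀ (hω₀ p).ne' _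

theorem exists_isGoursatSolution (hG : IsGoursatDomain G) (hGc : IsCompact G) {a b : ℝ}
    (ha : 0 < a) (hb : 0 < b) (hGab : G ⊆ Icc 0 (a, b))
    (hf : ContinuousOn (fun q : (ℝ × ℝ) × E × E × E => f q.1 q.2.1 q.2.2.1 q.2.2.2) (G ×ˢ univ))
    {K : ℝ} (hK : 0 ≤ K) (hfK : IsLipschitzInArgs G f K)
    {x₁ x₂ : ℝ → E} (hx₁ : ContDiffOn ℝ 1 x₁ (Icc 0 a)) (hx₂ : ContDiffOn ℝ 1 x₂ (Icc 0 b))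
    (x₀ : E) : ∃ x xs xt, IsGoursatSolution G f x₁ x₂ x₀ x xs xt := by
  have hG₁ : MapsTo Prod.fst G (Icc 0 a) := fun p hp => ⟨(hGab hp).1.1, (hGab hp).2.1⟩
  have hG₂ : MapsTo Prod.snd G (Icc 0 b) := fun p hp => ⟨(hGab hp).1.2, (hGab hp).2.2⟩
  set x₁' := derivWithin x₁ (Icc 0 a)
  set x₂' := derivWithin x₂ (Icc 0 b)
  have hc : ContinuousOn (fun p : ℝ × ℝ => x₁ p.1 + x₂ p.2 - x₀) G :=
    ((hx₁.continuousOn.comp continuousOn_fst hG₁).add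
      (hx₂.continuousOn.comp continuousOn_snd hG₂)).sub continuousOn_const
  have hd₁ : ContinuousOn (fun p : ℝ × ℝ => x₁' p.1) G :=
    (hx₁.continuousOn_derivWithin (uniqueDiffOn_Icc ha) le_rfl).comp continuousOn_fst hG₁
  have hd₂ : ContinuousOn (fun p : ℝ × ℝ => x₂' p.2) G :=
    (hx₂.continuousOn_derivWithin (uniqueDiffOn_Icc hb) le_rfl).comp continuousOn_snd hG₂
  obtain ⟨u, hu, hfix⟩ := exists_fixedPoint_goursatOperator hG hGc hf hK hfK hc hd₁ hd₂
  refine ⟨fun p => x₁ p.1 + x₂ p.2 - x₀ + rectIntegral u p, fun p => x₁' p.1 + sndIntegral u p,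
    fun p => x₂' p.2 + fstIntegral u p, ⟨hc.add (continuous_rectIntegral hu).continuousOn,
      hd₁.add (continuous_sndIntegral hu).continuousOn,
      hd₂.add (continuous_fstIntegral hu).continuousOn, fun p hp => ?_, fun p hp => ?_,
      fun p hp => ?_⟩⟩
  · have hx₁p : HasDerivWithinAt x₁ (x₁' p.1) {σ | (σ, p.2) ∈ G} p.1 :=
      ((hx₁.differentiableOn one_ne_zero) p.1 (hG₁ hp)).hasDerivWithinAt.mono
        fun σ hσ => @hG₁ (σ, p.2) hσ
    exact ((hx₁p.add_const (x₂ p.2)).sub_const x₀).fun_add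
      (hasDerivAt_rectIntegral_fst hu p).hasDerivWithinAt
  · have hx₂p : HasDerivWithinAt x₂ (x₂' p.2) {τ | (p.1, τ) ∈ G} p.2 :=
      ((hx₂.differentiableOn one_ne_zero) p.2 (hG₂ hp)).hasDerivWithinAt.mono
        fun τ hτ => @hG₂ (p.1, τ) hτ
    exact ((hx₂p.const_add (x₁ p.1)).sub_const x₀).fun_add
      (hasDerivAt_rectIntegral_snd hu p).hasDerivWithinAt
  · exact congrArg _
      (rectIntegral_congr (hG.nonneg p hp) fun q hq => hfix q (hG.Icc_subset p hp hq))

end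

def subgraph (a : ℝ) (ϑ : ℝ → ℝ) : Set (ℝ × ℝ) :=
  {p | 0 ≤ p.1 ∧ p.1 ≤ a ∧ 0 ≤ p.2 ∧ p.2 ≤ ϑ p.1}

section

variable {a b : ℝ} {ϑ : ℝ → ℝ}

theorem subgraph_subset_Icc (hϑ : ∀ s ∈ Icc 0 a, ϑ s ∈ Icc 0 b) : subgraph a ϑ ⊆ Icc 0 (a, b) :=
  fun _ ⟨h₁, h₂, h₃, h₄⟩ => ⟨⟨h₁, h₃⟩, h₂, h₄.trans (hϑ _ ⟨h₁, h₂⟩).2⟩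

theorem isCompact_subgraph (hϑc : ContinuousOn ϑ (Icc 0 a)) (hϑ : ∀ s ∈ Icc 0 a, ϑ s ∈ Icc 0 b) :
    IsCompact (subgraph a ϑ) := by
  have hclosed : IsClosed {p ∈ Icc 0 a ×ˢ Ici 0 | p.2 ≤ ϑ p.1} :=
    (isClosed_Icc.prod isClosed_Ici).isClosed_le continuousOn_snd
      (hϑc.comp continuousOn_fst fun p hp => hp.1)
  have heq : subgraph a ϑ = {p ∈ Icc 0 a ×ˢ Ici 0 | p.2 ≤ ϑ p.1} := by
    ext p
    simp only [subgraph, mem_prod, mem_Icc, mem_Ici, mem_ofPred_eq]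
    tauto
  exact isCompact_Icc.of_isClosed_subset (heq ▸ hclosed) (subgraph_subset_Icc hϑ)

theorem isGoursatDomain_subgraph (ha : 0 ≤ a) (hϑc : ContinuousOn ϑ (Icc 0 a))
    (hϑa : AntitoneOn ϑ (Icc 0 a)) (hϑ₀ : ∀ s ∈ Icc 0 a, 0 ≤ ϑ s) :
    IsGoursatDomain (subgraph a ϑ) where
  nonneg _ hp := ⟨hp.1, hp.2.2.1⟩
  Icc_subset p hp q hq := by
    obtain ⟨⟨hq₁, hq₂⟩, hqp₁, hqp₂⟩ := hq
    exact ⟨hq₁, hqp₁.trans hp.2.1, hq₂,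
      hqp₂.trans (hp.2.2.2.trans (hϑa ⟨hq₁, hqp₁.trans hp.2.1⟩ ⟨hp.1, hp.2.1⟩ hqp₁))⟩
  exists_retraction := by
    let s : ℝ → ℝ := fun σ => projIcc 0 a ha σ
    have hs : Continuous s := continuous_subtype_val.comp continuous_projIcc
    refine ⟨fun p => (s p.1, max 0 (min (ϑ (s p.1)) p.2)), ?_, fun p => ?_, fun p hp => ?_⟩
    · have hϑs : Continuous (ϑ ∘ s) := hϑc.comp_continuous hs fun σ => (projIcc 0 a ha σ).2
      exact (hs.comp continuous_fst).prodMk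
        (continuous_const.max ((hϑs.comp continuous_fst).min continuous_snd))
    · exact ⟨(projIcc 0 a ha p.1).2.1, (projIcc 0 a ha p.1).2.2, le_max_left _ _,
        max_le (hϑ₀ _ (projIcc 0 a ha p.1).2) (min_le_left _ _)⟩
    · have hs₁ : s p.1 = p.1 := congrArg Subtype.val (projIcc_of_mem ha ⟨hp.1, hp.2.1⟩)
      simp only [hs₁, min_eq_right hp.2.2.2, max_eq_right hp.2.2.1, id]

end

theorem goursat_darboux_wellposed_general
    (n : ℕ) (a b L : ℝ) (ha : 0 < a) (hb : 0 < b)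
    (ϑ₂ : ℝ → ℝ)
    (hϑcont : ContinuousOn ϑ₂ (Icc 0 a))
    (hϑanti : AntitoneOn ϑ₂ (Icc 0 a))
    (hϑmaps : ∀ s ∈ Icc (0:ℝ) a, ϑ₂ s ∈ Icc (0:ℝ) b)
    (G : Set (ℝ × ℝ))
    (hG : G = {p : ℝ × ℝ | 0 ≤ p.1 ∧ p.1 ≤ a ∧ 0 ≤ p.2 ∧ p.2 ≤ ϑ₂ p.1})
    (f : ℝ × ℝ → EuclideanSpace ℝ (Fin n) → EuclideanSpace ℝ (Fin n) →
        EuclideanSpace ℝ (Fin n) → EuclideanSpace ℝ (Fin n))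
    (hfcont : ContinuousOn
      (fun q : (ℝ × ℝ) × EuclideanSpace ℝ (Fin n) × EuclideanSpace ℝ (Fin n) ×
          EuclideanSpace ℝ (Fin n) => f q.1 q.2.1 q.2.2.1 q.2.2.2)
      (G ×ˢ (univ : Set (EuclideanSpace ℝ (Fin n) × EuclideanSpace ℝ (Fin n) ×
          EuclideanSpace ℝ (Fin n)))))
    (hfLip : ∀ p ∈ G, ∀ x₁' p₁ q₁ x₂' p₂ q₂ : EuclideanSpace ℝ (Fin n),
      ‖f p x₁' p₁ q₁ - f p x₂' p₂ q₂‖ ≤ L * (‖x₁' - x₂'‖ + ‖p₁ - p₂‖ + ‖q₁ - q₂‖))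
    (x₁ x₂ : ℝ → EuclideanSpace ℝ (Fin n))
    (hx₁ : ContDiffOn ℝ 1 x₁ (Icc 0 a))
    (hx₂ : ContDiffOn ℝ 1 x₂ (Icc 0 b))
    (x₀ : EuclideanSpace ℝ (Fin n)) :
    ∃ x : ℝ × ℝ → EuclideanSpace ℝ (Fin n),
      (ContinuousOn x G ∧
        ∃ xs xt : ℝ × ℝ → EuclideanSpace ℝ (Fin n),
          ContinuousOn xs G ∧ ContinuousOn xt G ∧
          (∀ p ∈ G, HasDerivWithinAt (fun σ => x (σ, p.2)) (xs p)
            {σ : ℝ | (σ, p.2) ∈ G} p.1) ∧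
          (∀ p ∈ G, HasDerivWithinAt (fun τ => x (p.1, τ)) (xt p)
            {τ : ℝ | (p.1, τ) ∈ G} p.2) ∧
          (∀ p ∈ G, x p = x₁ p.1 + x₂ p.2 - x₀ +
            ∫ σ in (0:ℝ)..p.1, ∫ τ in (0:ℝ)..p.2,
              f (σ, τ) (x (σ, τ)) (xs (σ, τ)) (xt (σ, τ)))) ∧
      ∀ y : ℝ × ℝ → EuclideanSpace ℝ (Fin n),
        (ContinuousOn y G ∧
          ∃ ys yt : ℝ × ℝ → EuclideanSpace ℝ (Fin n),
            ContinuousOn ys G ∧ ContinuousOn yt G ∧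
            (∀ p ∈ G, HasDerivWithinAt (fun σ => y (σ, p.2)) (ys p)
              {σ : ℝ | (σ, p.2) ∈ G} p.1) ∧
            (∀ p ∈ G, HasDerivWithinAt (fun τ => y (p.1, τ)) (yt p)
              {τ : ℝ | (p.1, τ) ∈ G} p.2) ∧
            (∀ p ∈ G, y p = x₁ p.1 + x₂ p.2 - x₀ +
              ∫ σ in (0:ℝ)..p.1, ∫ τ in (0:ℝ)..p.2,
                f (σ, τ) (y (σ, τ)) (ys (σ, τ)) (yt (σ, τ)))) →
        Set.EqOn x y G := by
  obtain rfl : G = subgraph a ϑ₂ := hG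
  have hGdom := isGoursatDomain_subgraph ha.le hϑcont hϑanti fun s hs => (hϑmaps s hs).1
  have hfLip' : IsLipschitzInArgs _ f |L| :=
    IsLipschitzInArgs.mono (K := L) hfLip (le_abs_self L)
  obtain ⟨x, xs, xt, hx⟩ := exists_isGoursatSolution hGdom (isCompact_subgraph hϑcont hϑmaps)
    ha hb (subgraph_subset_Icc hϑmaps) hfcont (abs_nonneg L) hfLip' hx₁ hx₂ x₀
  refine ⟨x, ⟨hx.continuousOn, xs, xt, hx.continuousOn_xs, hx.continuousOn_xt,
    hx.hasDerivWithinAt_fst, hx.hasDerivWithinAt_snd, hx.eq_integral⟩, ?_⟩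
  rintro y ⟨hy, ys, yt, hys, hyt, hys', hyt', hy_eq⟩
  exact hx.eqOn hGdom hfcont (abs_nonneg L) hfLip' ⟨hy, hys, hyt, hys', hyt', hy_eq⟩

/-- Well-posedness (existence and uniqueness) of the Goursat–Darboux problem,
in its two-dimensional Volterra integral form, on the curvilinear domain `G` bounded by the
coordinate axes and the graph of a continuous non-increasing function `ϑ₂ : [0,a] → [0,b]`. -/
theorem goursat_darboux_wellposed
    (n : ℕ) (a b L : ℝ) (ha : 0 < a) (hb : 0 < b)
    (ϑ₂ : ℝ → ℝ)
    (hϑcont : ContinuousOn ϑ₂ (Icc 0 a))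
    (hϑanti : AntitoneOn ϑ₂ (Icc 0 a))
    (hϑmaps : ∀ s ∈ Icc (0:ℝ) a, ϑ₂ s ∈ Icc (0:ℝ) b)
    (G : Set (ℝ × ℝ))
    (hG : G = {p : ℝ × ℝ | 0 ≤ p.1 ∧ p.1 ≤ a ∧ 0 ≤ p.2 ∧ p.2 ≤ ϑ₂ p.1})
    (f : ℝ × ℝ → EuclideanSpace ℝ (Fin n) → EuclideanSpace ℝ (Fin n) →
        EuclideanSpace ℝ (Fin n) → EuclideanSpace ℝ (Fin n))
    (hfcont : ContinuousOn
      (fun q : (ℝ × ℝ) × EuclideanSpace ℝ (Fin n) × EuclideanSpace ℝ (Fin n) ×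
          EuclideanSpace ℝ (Fin n) => f q.1 q.2.1 q.2.2.1 q.2.2.2)
      (G ×ˢ (univ : Set (EuclideanSpace ℝ (Fin n) × EuclideanSpace ℝ (Fin n) ×
          EuclideanSpace ℝ (Fin n)))))
    (hfLip : ∀ p ∈ G, ∀ x₁' p₁ q₁ x₂' p₂ q₂ : EuclideanSpace ℝ (Fin n),
      ‖f p x₁' p₁ q₁ - f p x₂' p₂ q₂‖ ≤ L * (‖x₁' - x₂'‖ + ‖p₁ - p₂‖ + ‖q₁ - q₂‖))
    (x₁ x₂ : ℝ → EuclideanSpace ℝ (Fin n))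
    (hx₁ : ContDiffOn ℝ 1 x₁ (Icc 0 a))
    (hx₂ : ContDiffOn ℝ 1 x₂ (Icc 0 b))
    (x₀ : EuclideanSpace ℝ (Fin n))
    (hconsist : x₁ 0 = x₀ ∧ x₂ 0 = x₀) :
    ∃ x : ℝ × ℝ → EuclideanSpace ℝ (Fin n),
      (ContinuousOn x G ∧
        ∃ xs xt : ℝ × ℝ → EuclideanSpace ℝ (Fin n),
          ContinuousOn xs G ∧ ContinuousOn xt G ∧
          (∀ p ∈ G, HasDerivWithinAt (fun σ => x (σ, p.2)) (xs p)
            {σ : ℝ | (σ, p.2) ∈ G} p.1) ∧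
          (∀ p ∈ G, HasDerivWithinAt (fun τ => x (p.1, τ)) (xt p)
            {τ : ℝ | (p.1, τ) ∈ G} p.2) ∧
          (∀ p ∈ G, x p = x₁ p.1 + x₂ p.2 - x₀ +
            ∫ σ in (0:ℝ)..p.1, ∫ τ in (0:ℝ)..p.2,
              f (σ, τ) (x (σ, τ)) (xs (σ, τ)) (xt (σ, τ)))) ∧
      ∀ y : ℝ × ℝ → EuclideanSpace ℝ (Fin n),
        (ContinuousOn y G ∧
          ∃ ys yt : ℝ × ℝ → EuclideanSpace ℝ (Fin n),
            ContinuousOn ys G ∧ ContinuousOn yt G ∧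
            (∀ p ∈ G, HasDerivWithinAt (fun σ => y (σ, p.2)) (ys p)
              {σ : ℝ | (σ, p.2) ∈ G} p.1) ∧
            (∀ p ∈ G, HasDerivWithinAt (fun τ => y (p.1, τ)) (yt p)
              {τ : ℝ | (p.1, τ) ∈ G} p.2) ∧
            (∀ p ∈ G, y p = x₁ p.1 + x₂ p.2 - x₀ +
              ∫ σ in (0:ℝ)..p.1, ∫ τ in (0:ℝ)..p.2,
                f (σ, τ) (y (σ, τ)) (ys (σ, τ)) (yt (σ, τ)))) →
        Set.EqOn x y G :=
  goursat_darboux_wellposed_general n a b L ha hb ϑ₂ hϑcont hϑanti hϑmaps G hG f hfcont hfLip x₁ x₂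
    hx₁ hx₂ x₀
end

section
/- Let G ⊆ ℝ² be a bounded open set, let U := ∏_{j=1}^{m} [u̲ʲ, ūʲ] ⊂ ℝᵐ be a compact box, and let F : cl(G) × U → ℝ be continuous. Let u* : G → U be a measurable function which is continuous at a point (s₀,t₀) ∈ G. Suppose that for every continuous function v : G → ℝᵐ vanishing outside a compact subset of G and such that u*(p) + v(p) ∈ U for all p ∈ G, one has ∬_G [F(p, u*(p)+v(p)) − F(p, u*(p))] dA(p) ≥ 0. Then F((s₀,t₀), u*(s₀,t₀)) ≤ F((s₀,t₀), u₁) for every u₁ ∈ U. -/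
/-!
Extend `F` continuously to the whole space (Tietze). If `F(p₀, u*(p₀)) > F(p₀, w)`, continuity
of `u*` at `p₀` makes `F(p, u*(p) + (w - u*(p₀))) - F(p, u*(p))` negative on a neighbourhood of
`p₀`. Take a compact `S` and an open `T ⊇ S` there with `μ(T \ S)` small compared to `μ(S)`, and a
bump `φ` equal to `1` on `S` and supported in `T`: the variation `φ • (w - u*(p₀))` has negative
cost increment, since on `T \ S` the integrand is merely bounded. This variation keeps the
control in `U` as soon as `u*(p) + (w - u*(p₀)) ∈ U` near `p₀`, which holds for `w` in the relative
interior of the box; a general `u₁ ∈ U` is a limit of such points.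
-/

open Set MeasureTheory Filter
open scoped Topology ENNReal

theorem ContinuousOn.exists_continuousMap_eqOn {X : Type*} [TopologicalSpace X] [NormalSpace X]
    {s : Set X} (hs : IsClosed s) {f : X → ℝ} (hf : ContinuousOn f s) :
    ∃ g : C(X, ℝ), EqOn g f s := by
  obtain ⟨g, hg⟩ := (⟨s.domRestrict f, hf.domRestrict⟩ : C(s, ℝ)).exists_restrict_eq hs
  exact ⟨g, fun x hx => congr($hg ⟨x, hx⟩)⟩

theorem setIntegral_neg_of_le_neg_of_abs_le {X : Type*} [MeasurableSpace X] {μ : Measure X}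
    {f : X → ℝ} {s t : Set X} {c C : ℝ} (hst : s ⊆ t) (hs : MeasurableSet s)
    (ht : MeasurableSet t) (hμt : μ t ≠ ∞) (hf : AEStronglyMeasurable f μ)
    (hfs : ∀ x ∈ s, f x ≤ -c) (hft : ∀ x ∈ t, |f x| ≤ C)
    (hsmall : C * μ.real (t \ s) < c * μ.real s) :
    ∫ x in t, f x ∂μ < 0 := by
  have hint : IntegrableOn f t μ :=
    Measure.integrableOn_of_bounded hμt hf (ae_restrict_of_forall_mem ht hft)
  have hs_le : ∫ x in s, f x ∂μ ≤ -c * μ.real s :=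
    calc ∫ x in s, f x ∂μ ≤ ∫ _ in s, -c ∂μ :=
          setIntegral_mono_on (hint.mono_set hst)
            (integrableOn_const ((measure_mono hst).trans_lt hμt.lt_top).ne) hs hfs
      _ = -c * μ.real s := by rw [setIntegral_const, smul_eq_mul, mul_comm]
  have hts_le : ∫ x in t \ s, f x ∂μ ≤ C * μ.real (t \ s) := by
    refine (Real.le_norm_self _).trans ?_
    exact norm_setIntegral_le_of_norm_le_const ((measure_mono sdiff_subset).trans_lt hμt.lt_top)
      fun x hx => (Real.norm_eq_abs (f x)).trans_le (hft x hx.1)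
  rw [← integral_inter_add_sdiff hs hint, inter_eq_self_of_subset_right hst]
  linarith

theorem exists_isCompact_isOpen_measureReal_sdiff_lt {X : Type*} [TopologicalSpace X]
    [T2Space X] [LocallyCompactSpace X] [MeasurableSpace X] [OpensMeasurableSpace X]
    (μ : Measure X) [IsFiniteMeasureOnCompacts μ] [μ.IsOpenPosMeasure] [μ.OuterRegular]
    {x : X} {V : Set X} (hV : V ∈ 𝓝 x) {ε : ℝ} (hε : 0 < ε) :
    ∃ K T, IsCompact K ∧ IsOpen T ∧ K ⊆ T ∧ T ⊆ V ∧ μ.real (T \ K) < ε * μ.real K := by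
  obtain ⟨W, hWV, hWo, hxW⟩ := mem_nhds_iff.mp hV
  obtain ⟨K, hKc, hxK, hKW⟩ := exists_compact_subset hWo hxW
  have hKfin : μ K ≠ ∞ := hKc.measure_lt_top.ne
  have hK : 0 < μ.real K := ENNReal.toReal_pos
    (μ.measure_pos_of_mem_nhds (mem_interior_iff_mem_nhds.mp hxK)).ne' hKfin
  obtain ⟨T, hKT, hTo, -, hTK⟩ := hKc.measurableSet.exists_isOpen_sdiff_lt hKfin
    (ENNReal.ofReal_pos.mpr (mul_pos hε hK)).ne'
  refine ⟨K, T ∩ W, hKc, hTo.inter hWo, subset_inter hKT hKW, inter_subset_right.trans hWV,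
    ENNReal.toReal_lt_of_lt_ofReal ?_⟩
  exact (measure_mono (sdiff_subset_sdiff_left inter_subset_left)).trans_lt hTK

section Variation

variable {X E : Type*} [TopologicalSpace X] [NormedAddCommGroup E] [NormedSpace ℝ E]

def IsAdmissibleVariation (G : Set X) (U : Set E) (u v : X → E) : Prop :=
  Continuous v ∧ HasCompactSupport v ∧ tsupport v ⊆ G ∧ ∀ p ∈ G, u p + v p ∈ U

theorem isAdmissibleVariation_smul_const {G : Set X} {U : Set E} (hU : Convex ℝ U)
    {u : X → E} (hu : ∀ p ∈ G, u p ∈ U) {φ : C(X, ℝ)} (hφc : HasCompactSupport φ)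
    (hφG : tsupport φ ⊆ G) (hφ : ∀ p, φ p ∈ Icc 0 1) {d : E}
    (hd : ∀ p ∈ tsupport φ, u p + d ∈ U) :
    IsAdmissibleVariation G U u fun p => φ p • d := by
  refine ⟨φ.continuous.smul continuous_const, hφc.smul_right,
    (tsupport_smul_subset_left _ _).trans hφG, fun p hp => ?_⟩
  by_cases hpφ : p ∈ tsupport φ
  · simpa using hU.add_smul_sub_mem (hu p hp) (hd p hpφ) (hφ p)
  · simpa [image_eq_zero_of_notMem_tsupport hpφ] using hu p hp

variable [T2Space X] [LocallyCompactSpace X] [MeasurableSpace X] [BorelSpace X]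
  {μ : Measure X} [IsFiniteMeasureOnCompacts μ] [μ.IsOpenPosMeasure] [μ.OuterRegular]
  [SecondCountableTopology E] [MeasurableSpace E] [BorelSpace E]

theorem exists_isAdmissibleVariation_integral_neg {g : X × E → ℝ} (hg : Continuous g)
    {U : Set E} (hUc : IsCompact U) (hUconv : Convex ℝ U) {G : Set X} (hG : IsOpen G)
    {u : X → E} (hu : Measurable u) (hval : ∀ p ∈ G, u p ∈ U) {p₀ : X} (hp₀ : p₀ ∈ G)
    {d : E} {c : ℝ} (hc : 0 < c)
    (hd : ∀ᶠ p in 𝓝 p₀, g (p, u p + d) - g (p, u p) < -c ∧ u p + d ∈ U) :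
    ∃ v, IsAdmissibleVariation G U u v ∧
      ∫ p in G, (g (p, u p + v p) - g (p, u p)) ∂μ < 0 := by
  obtain ⟨N, hNc, hN⟩ := exists_compact_mem_nhds p₀
  obtain ⟨B, hB⟩ := (hNc.prod hUc).exists_bound_of_continuousOn hg.continuousOn
  have hB0 : 0 ≤ B :=
    (norm_nonneg _).trans (hB (p₀, u p₀) ⟨mem_of_mem_nhds hN, hval p₀ hp₀⟩)
  have hV : ∀ᶠ p in 𝓝 p₀, (p ∈ G ∧ p ∈ N) ∧
      g (p, u p + d) - g (p, u p) < -c ∧ u p + d ∈ U :=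
    ((hG.eventually_mem hp₀).and hN).and hd
  obtain ⟨S, T, hSc, hTo, hST, hTV, hTS⟩ :=
    exists_isCompact_isOpen_measureReal_sdiff_lt μ hV (by positivity : 0 < c / (2 * B + 1))
  have hTcl : IsCompact (closure T) := hNc.of_isClosed_subset isClosed_closure
    (closure_minimal (fun p hp => (hTV hp).1.2) hNc.isClosed)
  obtain ⟨φ, hφT, hφS, hφ01⟩ :=
    exists_tsupport_one_of_isOpen_isClosed hTo hTcl hSc.isClosed hST
  have hv := isAdmissibleVariation_smul_const hUconv hval
    (hTcl.of_isClosed_subset (isClosed_tsupport φ) (hφT.trans subset_closure))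
    (fun p hp => (hTV (hφT hp)).1.1) hφ01 (d := d) fun p hp => (hTV (hφT hp)).2.2
  refine ⟨_, hv, ?_⟩
  have hφ0 : ∀ p ∉ T, φ p = 0 := fun p hp =>
    image_eq_zero_of_notMem_tsupport fun hpφ => hp (hφT hpφ)
  set h : X → ℝ := fun p => g (p, u p + φ p • d) - g (p, u p)
  have hGT : ∫ p in G, h p ∂μ = ∫ p in T, h p ∂μ :=
    setIntegral_eq_of_subset_of_forall_sdiff_eq_zero hG.measurableSet
      (fun p hp => (hTV hp).1.1) fun p hp => by simp [h, hφ0 p hp.2]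
  have hhS : ∀ p ∈ S, h p ≤ -c := fun p hp => by
    simpa [h, hφS hp] using ((hTV (hST hp)).2.1).le
  have hhT : ∀ p ∈ T, |h p| ≤ 2 * B := by
    intro p hp
    have h₁ := hB (p, u p + φ p • d) ⟨(hTV hp).1.2, hv.2.2.2 p (hTV hp).1.1⟩
    have h₂ := hB (p, u p) ⟨(hTV hp).1.2, hval p (hTV hp).1.1⟩
    rw [Real.norm_eq_abs] at h₁ h₂
    exact (abs_sub _ _).trans (by linarith)
  have hsmall : 2 * B * μ.real (T \ S) < c * μ.real S := by
    rw [div_mul_eq_mul_div, lt_div_iff₀ (by positivity)] at hTS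
    nlinarith [measureReal_nonneg (μ := μ) (s := T \ S)]
  rw [hGT]
  exact setIntegral_neg_of_le_neg_of_abs_le hST hSc.measurableSet hTo.measurableSet
    (hTcl.measure_lt_top.trans_le' (measure_mono subset_closure)).ne
    ((hg.measurable.comp (measurable_id.prodMk (hu.add hv.1.measurable))).sub
      (hg.measurable.comp (measurable_id.prodMk hu))).aestronglyMeasurable hhS hhT hsmall

theorem le_of_forall_isAdmissibleVariation {g : X × E → ℝ} (hg : Continuous g) {U : Set E}
    (hUc : IsCompact U) (hUconv : Convex ℝ U) {G : Set X} (hG : IsOpen G) {u : X → E}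
    (hu : Measurable u) (hval : ∀ p ∈ G, u p ∈ U) {p₀ : X} (hp₀ : p₀ ∈ G)
    (hcont : ContinuousAt u p₀)
    (hopt : ∀ v, IsAdmissibleVariation G U u v →
      0 ≤ ∫ p in G, (g (p, u p + v p) - g (p, u p)) ∂μ)
    {w : E} (hw : ∀ᶠ p in 𝓝 p₀, u p + (w - u p₀) ∈ U) :
    g (p₀, u p₀) ≤ g (p₀, w) := by
  by_contra! hlt
  have hdecr : ∀ᶠ p in 𝓝 p₀,
      g (p, u p + (w - u p₀)) - g (p, u p) < -((g (p₀, u p₀) - g (p₀, w)) / 2) := by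
    have hc : ContinuousAt (fun p => g (p, u p + (w - u p₀)) - g (p, u p)) p₀ :=
      (hg.continuousAt.comp (continuousAt_id.prodMk (hcont.add continuousAt_const))).sub
        (hg.continuousAt.comp (continuousAt_id.prodMk hcont))
    refine hc.eventually (gt_mem_nhds ?_)
    simp only [add_sub_cancel]
    linarith
  obtain ⟨v, hv, hneg⟩ := exists_isAdmissibleVariation_integral_neg (μ := μ) hg hUc hUconv hG
    hu hval hp₀ (by linarith) (hdecr.and hw)
  linarith [hopt v hv]

end Variation

def box {ι : Type*} (lo hi : ι → ℝ) : Set (EuclideanSpace ℝ ι) :=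
  {u | ∀ j, u j ∈ Icc (lo j) (hi j)}

noncomputable def boxCenter {ι : Type*} (lo hi : ι → ℝ) : EuclideanSpace ℝ ι :=
  WithLp.toLp 2 fun j => (lo j + hi j) / 2

theorem isCompact_box {ι : Type*} [Fintype ι] (lo hi : ι → ℝ) : IsCompact (box lo hi) := by
  have : box lo hi = EuclideanSpace.equiv ι ℝ ⁻¹' univ.pi fun j => Icc (lo j) (hi j) := by
    ext u; simp only [box, mem_ofPred_eq, mem_preimage, mem_univ_pi]; rfl
  rw [this]
  exact (EuclideanSpace.equiv ι ℝ).toHomeomorph.isCompact_preimage.mpr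
    (isCompact_univ_pi fun _ => isCompact_Icc)

theorem convex_box {ι : Type*} (lo hi : ι → ℝ) : Convex ℝ (box lo hi) :=
  fun _ hx _ hy _ _ ha hb hab j => by
    simpa using convex_Icc (lo j) (hi j) (hx j) (hy j) ha hb hab

theorem add_mul_sub_midpoint_mem_Icc {lo hi a t : ℝ} (ha : a ∈ Icc lo hi) (ht : t ∈ Ioc 0 1) :
    a + t * ((lo + hi) / 2 - a) ∈ Icc lo hi ∧
      (lo < hi → a + t * ((lo + hi) / 2 - a) ∈ Ioo lo hi) := by
  obtain ⟨hla, hah⟩ := ha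
  obtain ⟨ht0, ht1⟩ := ht
  exact ⟨⟨by nlinarith, by nlinarith⟩, fun hlh => ⟨by nlinarith, by nlinarith⟩⟩

theorem eventually_add_sub_mem_Icc {lo hi c x₀ : ℝ} (hc : c ∈ Icc lo hi)
    (hc' : lo < hi → c ∈ Ioo lo hi) (hx₀ : x₀ ∈ Icc lo hi) :
    ∀ᶠ x in 𝓝[Icc lo hi] x₀, x + (c - x₀) ∈ Icc lo hi := by
  rcases (hx₀.1.trans hx₀.2).lt_or_eq with hlh | rfl
  · have hlim : Tendsto (fun x => x + (c - x₀)) (𝓝 x₀) (𝓝 c) :=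
      (continuous_id.add continuous_const).tendsto' x₀ c (by simp)
    exact (hlim.eventually (Ioo_mem_nhds (hc' hlh).1 (hc' hlh).2)).filter_mono
      nhdsWithin_le_nhds |>.mono fun _ h => Ioo_subset_Icc_self h
  · refine eventually_nhdsWithin_of_forall fun x hx => ?_
    rw [Icc_self] at hc hx hx₀
    simp_all

theorem eventually_add_sub_mem_box {ι : Type*} [Finite ι] {lo hi : ι → ℝ}
    {w u₀ : EuclideanSpace ℝ ι} (hw : w ∈ box lo hi)
    (hw' : ∀ j, lo j < hi j → w j ∈ Ioo (lo j) (hi j)) (hu₀ : u₀ ∈ box lo hi) :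
    ∀ᶠ u in 𝓝[box lo hi] u₀, u + (w - u₀) ∈ box lo hi := by
  refine eventually_all.mpr fun j => ?_
  have hj : Tendsto (fun u : EuclideanSpace ℝ ι => u j) (𝓝[box lo hi] u₀)
      (𝓝[Icc (lo j) (hi j)] (u₀ j)) :=
    tendsto_nhdsWithin_iff.mpr ⟨((EuclideanSpace.proj j).continuous.tendsto u₀).mono_left
      nhdsWithin_le_nhds, eventually_nhdsWithin_of_forall fun u hu => hu j⟩
  simpa using hj.eventually (eventually_add_sub_mem_Icc (hw j) (hw' j) (hu₀ j))

theorem add_smul_sub_boxCenter_mem_box {ι : Type*} {lo hi : ι → ℝ} {u : EuclideanSpace ℝ ι}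
    (hu : u ∈ box lo hi) {t : ℝ} (ht : t ∈ Ioc 0 1) :
    u + t • (boxCenter lo hi - u) ∈ box lo hi ∧
      ∀ j, lo j < hi j → (u + t • (boxCenter lo hi - u)) j ∈ Ioo (lo j) (hi j) :=
  ⟨fun j => by simpa [boxCenter] using (add_mul_sub_midpoint_mem_Icc (hu j) ht).1,
    fun j => by simpa [boxCenter] using (add_mul_sub_midpoint_mem_Icc (hu j) ht).2⟩

theorem needle_variation_extremum_principle_general
    (m : ℕ) (G : Set (ℝ × ℝ)) (hGopen : IsOpen G)
    (lo hi : Fin m → ℝ)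
    (U : Set (EuclideanSpace ℝ (Fin m)))
    (hU : U = {u : EuclideanSpace ℝ (Fin m) | ∀ j, u j ∈ Icc (lo j) (hi j)})
    (F : ℝ × ℝ → EuclideanSpace ℝ (Fin m) → ℝ)
    (hF : ContinuousOn (fun q : (ℝ × ℝ) × EuclideanSpace ℝ (Fin m) => F q.1 q.2)
      (closure G ×ˢ U))
    (ustar : ℝ × ℝ → EuclideanSpace ℝ (Fin m))
    (hmeas : Measurable ustar)
    (hval : ∀ p ∈ G, ustar p ∈ U)
    (p₀ : ℝ × ℝ) (hp₀ : p₀ ∈ G)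
    (hcont : ContinuousAt ustar p₀)
    (hopt : ∀ v : ℝ × ℝ → EuclideanSpace ℝ (Fin m),
      Continuous v → HasCompactSupport v → tsupport v ⊆ G →
      (∀ p ∈ G, ustar p + v p ∈ U) →
      0 ≤ ∫ p in G, (F p (ustar p + v p) - F p (ustar p))) :
    ∀ u₁ ∈ U, F p₀ (ustar p₀) ≤ F p₀ u₁ := by
  change U = box lo hi at hU
  subst hU
  obtain ⟨g, hgF⟩ :=
    hF.exists_continuousMap_eqOn (isClosed_closure.prod (isCompact_box lo hi).isClosed)
  have hgF' : ∀ p ∈ G, ∀ u ∈ box lo hi, g (p, u) = F p u :=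
    fun p hp u hu => hgF ⟨subset_closure hp, hu⟩
  have hopt' : ∀ v, IsAdmissibleVariation G (box lo hi) ustar v →
      0 ≤ ∫ p in G, (g (p, ustar p + v p) - g (p, ustar p)) := by
    rintro v ⟨hvc, hvs, hvG, hvU⟩
    rw [setIntegral_congr_fun hGopen.measurableSet
      (g := fun p => F p (ustar p + v p) - F p (ustar p))
      fun p hp => by simp only [hgF' p hp _ (hvU p hp), hgF' p hp _ (hval p hp)]]
    exact hopt v hvc hvs hvG hvU
  have hustar : Tendsto ustar (𝓝 p₀) (𝓝[box lo hi] (ustar p₀)) :=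
    tendsto_nhdsWithin_iff.mpr ⟨hcont, eventually_of_mem (hGopen.mem_nhds hp₀) hval⟩
  intro u₁ hu₁
  have happrox : ∀ t ∈ Ioc (0 : ℝ) 1,
      g (p₀, ustar p₀) ≤ g (p₀, u₁ + t • (boxCenter lo hi - u₁)) := fun t ht =>
    le_of_forall_isAdmissibleVariation g.continuous (isCompact_box lo hi) (convex_box lo hi)
      hGopen hmeas hval hp₀ hcont hopt' <| hustar.eventually <|
        eventually_add_sub_mem_box (add_smul_sub_boxCenter_mem_box hu₁ ht).1
          (add_smul_sub_boxCenter_mem_box hu₁ ht).2 (hval p₀ hp₀)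
  have hlim : Tendsto (fun t : ℝ => g (p₀, u₁ + t • (boxCenter lo hi - u₁))) (𝓝[>] 0)
      (𝓝 (g (p₀, u₁))) :=
    ((g.continuous.comp (continuous_const.prodMk (continuous_const.add
      (continuous_id.smul continuous_const)))).tendsto' 0 _ (by simp)).mono_left
      nhdsWithin_le_nhds
  rw [← hgF' p₀ hp₀ _ (hval p₀ hp₀), ← hgF' p₀ hp₀ _ hu₁]
  exact ge_of_tendsto hlim (eventually_of_mem (Ioc_mem_nhdsGT one_pos) happrox)

/-- The extremum (needle-variation) principle: if the increment of the cost
functional is nonnegative under every admissible localized continuous variation of the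
control, then at every point of continuity of the control the integrand is pointwise
minimized over the control box `U`. -/
theorem needle_variation_extremum_principle
    (m : ℕ) (G : Set (ℝ × ℝ)) (hGopen : IsOpen G) (hGbdd : Bornology.IsBounded G)
    (lo hi : Fin m → ℝ)
    (U : Set (EuclideanSpace ℝ (Fin m)))
    (hU : U = {u : EuclideanSpace ℝ (Fin m) | ∀ j, u j ∈ Icc (lo j) (hi j)})
    (F : ℝ × ℝ → EuclideanSpace ℝ (Fin m) → ℝ)
    (hF : ContinuousOn (fun q : (ℝ × ℝ) × EuclideanSpace ℝ (Fin m) => F q.1 q.2)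
      (closure G ×ˢ U))
    (ustar : ℝ × ℝ → EuclideanSpace ℝ (Fin m))
    (hmeas : Measurable ustar)
    (hval : ∀ p ∈ G, ustar p ∈ U)
    (p₀ : ℝ × ℝ) (hp₀ : p₀ ∈ G)
    (hcont : ContinuousAt ustar p₀)
    (hopt : ∀ v : ℝ × ℝ → EuclideanSpace ℝ (Fin m),
      Continuous v → HasCompactSupport v → tsupport v ⊆ G →
      (∀ p ∈ G, ustar p + v p ∈ U) →
      0 ≤ ∫ p in G, (F p (ustar p + v p) - F p (ustar p))) :
    ∀ u₁ ∈ U, F p₀ (ustar p₀) ≤ F p₀ u₁ :=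
  needle_variation_extremum_principle_general m G hGopen lo hi U hU F hF ustar hmeas hval p₀ hp₀
    hcont hopt
end

section
/- Let a, b > 0 and let ϑ₂ : [0,a] → [0,b] be a C¹ strictly decreasing bijection onto [0,b] with inverse ϑ₁ : [0,b] → [0,a]. Let φ = φ(s,t,σ,τ) be continuous on ([0,a]×[0,b])², with continuous partial derivative ∂φ/∂s. Define F(s,t) := ∫_s^{ϑ₁(t)} ∫_t^{ϑ₂(σ)} φ(s,t,σ,τ) dτ dσ. Then for every (s,t) with 0 < s < a, 0 < t < ϑ₂(s), the partial derivative ∂F/∂s exists and ∂F/∂s (s,t) = − ∫_t^{ϑ₂(s)} φ(s,t,s,τ) dτ + ∫_s^{ϑ₁(t)} ∫_t^{ϑ₂(σ)} (∂φ/∂s)(s,t,σ,τ) dτ dσ. -/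
/-! Split `∫_x^c g(x,σ) dσ = ∫_s^c g(x,σ) dσ - ∫_s^x g(x,σ) dσ`. The first piece has fixed limits
and is differentiated under the integral sign. The second has derivative `g(s,s)` at `s`, because
`g(x,σ) - g(s,s)` is uniformly small for `σ` between `s` and `x` once `x` is close to `s`. With
`g(x,σ) = ∫_t^{ϑ₂ σ} φ(x,t,σ,τ) dτ` this is the theorem, after `ϑ₂`, `φ` and `∂φ/∂s` have been
extended (Tietze) from the closed box to continuous functions everywhere, so that `g` and
`∂g/∂x` are jointly continuous. -/

open Set MeasureTheory intervalIntegral Filter Topology Metric Function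

universe u v

theorem ContinuousOn.exists_continuous_eqOn {X : Type u} {Y : Type v} [TopologicalSpace X]
    [NormalSpace X] [TopologicalSpace Y] [TietzeExtension.{u, v} Y] {s : Set X} {f : X → Y}
    (hs : IsClosed s) (hf : ContinuousOn f s) : ∃ g : X → Y, Continuous g ∧ EqOn g f s := by
  obtain ⟨g, hg⟩ := ContinuousMap.exists_restrict_eq hs ⟨s.domRestrict f, hf.domRestrict⟩
  exact ⟨g, g.continuous, fun x hx => congrFun (congrArg ContinuousMap.toFun hg) ⟨x, hx⟩⟩

variable {E : Type*} [NormedAddCommGroup E] [NormedSpace ℝ E]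

theorem hasDerivAt_integral_diagonal [CompleteSpace E] {g : ℝ → ℝ → E} {s : ℝ}
    (hg : ContinuousAt (uncurry g) (s, s))
    (hint : ∀ᶠ x in 𝓝 s, IntervalIntegrable (g x) volume s x) :
    HasDerivAt (fun x => ∫ σ in s..x, g x σ) (g s s) s := by
  rw [hasDerivAt_iff_isLittleO, Asymptotics.isLittleO_iff]
  intro ε hε
  obtain ⟨δ, hδ, hclose⟩ := Metric.continuousAt_iff.1 hg ε hε
  filter_upwards [ball_mem_nhds s hδ, hint] with x hx hxint
  have hdiff : (∫ σ in s..x, g x σ) - (∫ σ in s..s, g s σ) - (x - s) • g s s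
      = ∫ σ in s..x, (g x σ - g s s) := by
    rw [integral_same, sub_zero, integral_sub hxint intervalIntegrable_const,
      intervalIntegral.integral_const]
  rw [hdiff, Real.norm_eq_abs]
  refine norm_integral_le_of_norm_le_const fun σ hσ => ?_
  rw [← dist_eq_norm]
  refine (hclose (x := (x, σ)) ?_).le
  have hσx : |σ - s| ≤ |x - s| := abs_sub_left_of_mem_uIcc (uIoc_subset_uIcc hσ)
  rw [Prod.dist_eq, max_lt_iff, Real.dist_eq, Real.dist_eq]
  exact ⟨mem_ball_iff_norm.1 hx, hσx.trans_lt (mem_ball_iff_norm.1 hx)⟩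

theorem hasDerivAt_intervalIntegral_of_continuous_deriv {F F' : ℝ → ℝ → E} {x₀ a b : ℝ}
    {U : Set ℝ} (hU : U ∈ 𝓝 x₀) (hF : ∀ x, Continuous (F x)) (hF' : Continuous (uncurry F'))
    (hderiv : ∀ x ∈ U, ∀ τ ∈ uIcc a b, HasDerivAt (F · τ) (F' x τ) x) :
    HasDerivAt (fun x => ∫ τ in a..b, F x τ) (∫ τ in a..b, F' x₀ τ) x₀ := by
  obtain ⟨δ, hδ, hball⟩ := nhds_basis_closedBall.mem_iff.1 hU
  obtain ⟨C, hC⟩ :=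
    ((isCompact_closedBall x₀ δ).prod isCompact_uIcc).exists_bound_of_continuousOn hF'.continuousOn
  refine (hasDerivAt_integral_of_dominated_loc_of_deriv_le (bound := fun _ => C)
    (closedBall_mem_nhds x₀ hδ) ?_ ((hF x₀).intervalIntegrable _ _)
    (hF'.uncurry_left x₀).aestronglyMeasurable ?_ intervalIntegrable_const ?_).2
  · exact .of_forall fun x => (hF x).aestronglyMeasurable
  · exact ae_of_all _ fun τ hτ x hx => hC (x, τ) ⟨hx, uIoc_subset_uIcc hτ⟩
  · exact ae_of_all _ fun τ hτ x hx => hderiv x (hball hx) τ (uIoc_subset_uIcc hτ)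

theorem hasDerivAt_integral_lower_limit_of_continuous [CompleteSpace E] {g g' : ℝ → ℝ → E}
    {s c : ℝ} {U : Set ℝ} (hU : U ∈ 𝓝 s) (hg : Continuous (uncurry g))
    (hg' : Continuous (uncurry g'))
    (hderiv : ∀ x ∈ U, ∀ σ ∈ uIcc s c, HasDerivAt (g · σ) (g' x σ) x) :
    HasDerivAt (fun x => ∫ σ in x..c, g x σ) ((∫ σ in s..c, g' s σ) - g s s) s := by
  have hint : ∀ x u v, IntervalIntegrable (g x) volume u v := fun x _ _ =>
    (hg.uncurry_left x).intervalIntegrable _ _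
  have hfixed := hasDerivAt_intervalIntegral_of_continuous_deriv hU hg.uncurry_left hg' hderiv
  have hdiag := hasDerivAt_integral_diagonal hg.continuousAt (.of_forall fun x => hint x s x)
  refine (hfixed.sub hdiag).congr_of_eventuallyEq (.of_forall fun x => ?_)
  exact (integral_interval_sub_left (hint x s c) (hint x s x)).symm

theorem hasDerivAt_integral_integral_moving_corner_of_continuous [CompleteSpace E]
    {ψ ψ' : ℝ → ℝ → ℝ → E} {Θ : ℝ → ℝ} {s c t : ℝ} {U : Set ℝ} (hU : IsOpen U) (hs : s ∈ U)
    (hψ : Continuous fun p : ℝ × ℝ × ℝ => ψ p.1 p.2.1 p.2.2)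
    (hψ' : Continuous fun p : ℝ × ℝ × ℝ => ψ' p.1 p.2.1 p.2.2) (hΘ : Continuous Θ)
    (hderiv : ∀ x ∈ U, ∀ σ ∈ uIcc s c, ∀ τ ∈ uIcc t (Θ σ),
      HasDerivAt (ψ · σ τ) (ψ' x σ τ) x) :
    HasDerivAt (fun x => ∫ σ in x..c, ∫ τ in t..Θ σ, ψ x σ τ)
      ((∫ σ in s..c, ∫ τ in t..Θ σ, ψ' s σ τ) - ∫ τ in t..Θ s, ψ s s τ) s := by
  have hcont : ∀ {χ : ℝ → ℝ → ℝ → E}, (Continuous fun p : ℝ × ℝ × ℝ => χ p.1 p.2.1 p.2.2) →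
      Continuous (uncurry fun x σ => ∫ τ in t..Θ σ, χ x σ τ) := fun {χ} hχ =>
    continuous_parametric_intervalIntegral_of_continuous (f := fun p : ℝ × ℝ => χ p.1 p.2)
      (hχ.comp (continuous_fst.fst.prodMk (continuous_fst.snd.prodMk continuous_snd)))
      (hΘ.comp continuous_snd)
  refine hasDerivAt_integral_lower_limit_of_continuous (hU.mem_nhds hs) (hcont hψ) (hcont hψ')
    fun x hx σ hσ => hasDerivAt_intervalIntegral_of_continuous_deriv (F' := (ψ' · σ ·))
      (hU.mem_nhds hx)
      (fun x' => hψ.comp (.prodMk continuous_const (.prodMk continuous_const continuous_id)))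
      (hψ'.comp (continuous_fst.prodMk (continuous_const.prodMk continuous_snd)))
      fun x' hx' τ hτ => hderiv x' hx' σ hσ τ hτ

theorem hasDerivAt_integral_integral_moving_corner_of_continuousOn
    {ψ ψ' : ℝ → ℝ → ℝ → ℝ} {Θ : ℝ → ℝ} {a₀ a₁ b₀ b₁ s c t : ℝ}
    (hs : s ∈ Ioo a₀ a₁) (hc : c ∈ Icc a₀ a₁) (ht : t ∈ Icc b₀ b₁)
    (hΘ : ContinuousOn Θ (Icc a₀ a₁)) (hΘmaps : MapsTo Θ (Icc a₀ a₁) (Icc b₀ b₁))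
    (hψ : ContinuousOn (fun p : ℝ × ℝ × ℝ => ψ p.1 p.2.1 p.2.2)
      (Icc a₀ a₁ ×ˢ Icc a₀ a₁ ×ˢ Icc b₀ b₁))
    (hψ' : ContinuousOn (fun p : ℝ × ℝ × ℝ => ψ' p.1 p.2.1 p.2.2)
      (Icc a₀ a₁ ×ˢ Icc a₀ a₁ ×ˢ Icc b₀ b₁))
    (hderiv : ∀ x ∈ Icc a₀ a₁, ∀ σ ∈ Icc a₀ a₁, ∀ τ ∈ Icc b₀ b₁,
      HasDerivWithinAt (ψ · σ τ) (ψ' x σ τ) (Icc a₀ a₁) x) :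
    HasDerivAt (fun x => ∫ σ in x..c, ∫ τ in t..Θ σ, ψ x σ τ)
      ((∫ σ in s..c, ∫ τ in t..Θ σ, ψ' s σ τ) - ∫ τ in t..Θ s, ψ s s τ) s := by
  set box := Icc a₀ a₁ ×ˢ Icc a₀ a₁ ×ˢ Icc b₀ b₁
  have hbox : IsClosed box := isClosed_Icc.prod (isClosed_Icc.prod isClosed_Icc)
  obtain ⟨Θ', hΘ', hΘeq⟩ := hΘ.exists_continuous_eqOn isClosed_Icc
  obtain ⟨Ψ, hΨ, hΨeq⟩ := hψ.exists_continuous_eqOn hbox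
  obtain ⟨Ψ', hΨ', hΨ'eq⟩ := hψ'.exists_continuous_eqOn hbox
  have hsI := Ioo_subset_Icc_self hs
  have hσI : uIcc s c ⊆ Icc a₀ a₁ := uIcc_subset_Icc hsI hc
  have hmem : ∀ {x σ τ}, x ∈ Icc a₀ a₁ → σ ∈ Icc a₀ a₁ → τ ∈ uIcc t (Θ' σ) → (x, σ, τ) ∈ box :=
    fun hx hσ hτ => ⟨hx, hσ, uIcc_subset_Icc ht (hΘeq hσ ▸ hΘmaps hσ) hτ⟩
  have hinner : ∀ {Ξ : ℝ × ℝ × ℝ → ℝ} {χ : ℝ → ℝ → ℝ → ℝ}, EqOn Ξ (fun p => χ p.1 p.2.1 p.2.2) box →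
      ∀ {x σ}, x ∈ Icc a₀ a₁ → σ ∈ Icc a₀ a₁ →
        ∫ τ in t..Θ' σ, Ξ (x, σ, τ) = ∫ τ in t..Θ σ, χ x σ τ := fun hΞ x σ hx hσ => by
    rw [← hΘeq hσ]
    exact integral_congr fun τ hτ => hΞ (hmem hx hσ hτ)
  have key := hasDerivAt_integral_integral_moving_corner_of_continuous (c := c) (t := t)
    (ψ := fun x σ τ => Ψ (x, σ, τ)) (ψ' := fun x σ τ => Ψ' (x, σ, τ)) isOpen_Ioo hs hΨ hΨ' hΘ'
    fun x hx σ hσ τ hτ => by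
      have hxI := Ioo_subset_Icc_self hx
      rw [show Ψ' (x, σ, τ) = ψ' x σ τ from hΨ'eq (hmem hxI (hσI hσ) hτ)]
      exact ((hderiv x hxI σ (hσI hσ) τ (hmem hxI (hσI hσ) hτ).2.2).congr
        (fun y hy => hΨeq (hmem hy (hσI hσ) hτ)) (hΨeq (hmem hxI (hσI hσ) hτ))).hasDerivAt
        (Icc_mem_nhds hx.1 hx.2)
  refine (key.congr_of_eventuallyEq ?_).congr_deriv ?_
  · filter_upwards [Ioo_mem_nhds hs.1 hs.2] with x hx
    exact integral_congr fun σ hσ => (hinner hΨeq (Ioo_subset_Icc_self hx)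
      (uIcc_subset_Icc (Ioo_subset_Icc_self hx) hc hσ)).symm
  · rw [hinner hΨeq hsI hsI, integral_congr fun σ hσ => hinner hΨ'eq hsI (hσI hσ)]

theorem deriv_double_integral_moving_corner_general
    (a b : ℝ)
    (ϑ₂ ϑ₁ : ℝ → ℝ)
    (hϑC1 : ContDiffOn ℝ 1 ϑ₂ (Icc 0 a))
    (hϑimg : ϑ₂ '' Icc 0 a = Icc 0 b)
    (hϑ₁maps : ∀ t ∈ Icc (0:ℝ) b, ϑ₁ t ∈ Icc (0:ℝ) a)
    (φ φs : ℝ → ℝ → ℝ → ℝ → ℝ)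
    (hφ : ContinuousOn (fun q : (ℝ × ℝ) × ℝ × ℝ => φ q.1.1 q.1.2 q.2.1 q.2.2)
      ((Icc 0 a ×ˢ Icc 0 b) ×ˢ (Icc 0 a ×ˢ Icc 0 b)))
    (hφs : ContinuousOn (fun q : (ℝ × ℝ) × ℝ × ℝ => φs q.1.1 q.1.2 q.2.1 q.2.2)
      ((Icc 0 a ×ˢ Icc 0 b) ×ˢ (Icc 0 a ×ˢ Icc 0 b)))
    (hφderiv : ∀ s ∈ Icc (0:ℝ) a, ∀ t ∈ Icc (0:ℝ) b, ∀ σ ∈ Icc (0:ℝ) a, ∀ τ ∈ Icc (0:ℝ) b,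
      HasDerivWithinAt (fun s' => φ s' t σ τ) (φs s t σ τ) (Icc 0 a) s) :
    ∀ s t : ℝ, 0 < s → s < a → 0 < t → t < ϑ₂ s →
      HasDerivAt (fun s' => ∫ σ in s'..ϑ₁ t, ∫ τ in t..ϑ₂ σ, φ s' t σ τ)
        (-(∫ τ in t..ϑ₂ s, φ s t s τ) +
          ∫ σ in s..ϑ₁ t, ∫ τ in t..ϑ₂ σ, φs s t σ τ) s := by
  intro s t hs0 hsa ht0 htϑ
  have hmaps : MapsTo ϑ₂ (Icc 0 a) (Icc 0 b) := hϑimg ▸ mapsTo_image ϑ₂ _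
  have htI : t ∈ Icc 0 b := ⟨ht0.le, htϑ.le.trans (hmaps ⟨hs0.le, hsa.le⟩).2⟩
  have hslice : MapsTo (fun p : ℝ × ℝ × ℝ => ((p.1, t), p.2)) (Icc 0 a ×ˢ Icc 0 a ×ˢ Icc 0 b)
      ((Icc 0 a ×ˢ Icc 0 b) ×ˢ (Icc 0 a ×ˢ Icc 0 b)) := fun p hp => ⟨⟨hp.1, htI⟩, hp.2⟩
  have h := hasDerivAt_integral_integral_moving_corner_of_continuousOn
    (ψ := fun x σ τ => φ x t σ τ) (ψ' := fun x σ τ => φs x t σ τ) ⟨hs0, hsa⟩ (hϑ₁maps t htI)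
    htI hϑC1.continuousOn hmaps (hφ.comp (by fun_prop) hslice) (hφs.comp (by fun_prop) hslice)
    fun x hx σ hσ τ hτ => hφderiv x hx t htI σ hσ τ hτ
  exact h.congr_deriv (by ring)

/-- The differentiation formula (A.6) in `s` for the parameter-dependent
double integral `F(s,t) = ∫_s^{ϑ₁(t)} ∫_t^{ϑ₂(σ)} φ(s,t,σ,τ) dτ dσ` over the curvilinear
region `E(s,t)` cut off by the decreasing curve `τ = ϑ₂(σ)`. -/
theorem deriv_double_integral_moving_corner
    (a b : ℝ) (ha : 0 < a) (hb : 0 < b)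
    (ϑ₂ ϑ₁ : ℝ → ℝ)
    (hϑC1 : ContDiffOn ℝ 1 ϑ₂ (Icc 0 a))
    (hϑanti : StrictAntiOn ϑ₂ (Icc 0 a))
    (hϑimg : ϑ₂ '' Icc 0 a = Icc 0 b)
    (hinv₁ : ∀ s ∈ Icc (0:ℝ) a, ϑ₁ (ϑ₂ s) = s)
    (hinv₂ : ∀ t ∈ Icc (0:ℝ) b, ϑ₂ (ϑ₁ t) = t)
    (hϑ₁maps : ∀ t ∈ Icc (0:ℝ) b, ϑ₁ t ∈ Icc (0:ℝ) a)
    (φ φs : ℝ → ℝ → ℝ → ℝ → ℝ)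
    (hφ : ContinuousOn (fun q : (ℝ × ℝ) × ℝ × ℝ => φ q.1.1 q.1.2 q.2.1 q.2.2)
      ((Icc 0 a ×ˢ Icc 0 b) ×ˢ (Icc 0 a ×ˢ Icc 0 b)))
    (hφs : ContinuousOn (fun q : (ℝ × ℝ) × ℝ × ℝ => φs q.1.1 q.1.2 q.2.1 q.2.2)
      ((Icc 0 a ×ˢ Icc 0 b) ×ˢ (Icc 0 a ×ˢ Icc 0 b)))
    (hφderiv : ∀ s ∈ Icc (0:ℝ) a, ∀ t ∈ Icc (0:ℝ) b, ∀ σ ∈ Icc (0:ℝ) a, ∀ τ ∈ Icc (0:ℝ) b,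
      HasDerivWithinAt (fun s' => φ s' t σ τ) (φs s t σ τ) (Icc 0 a) s) :
    ∀ s t : ℝ, 0 < s → s < a → 0 < t → t < ϑ₂ s →
      HasDerivAt (fun s' => ∫ σ in s'..ϑ₁ t, ∫ τ in t..ϑ₂ σ, φ s' t σ τ)
        (-(∫ τ in t..ϑ₂ s, φ s t s τ) +
          ∫ σ in s..ϑ₁ t, ∫ τ in t..ϑ₂ σ, φs s t σ τ) s :=
  deriv_double_integral_moving_corner_general a b ϑ₂ ϑ₁ hϑC1 hϑimg hϑ₁maps φ φs hφ hφs hφderiv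
end

section
/- Let a, b > 0 and let ϑ₂ : [0,a] → [0,b] be a C¹ strictly decreasing bijection onto [0,b] with inverse ϑ₁ : [0,b] → [0,a]. Let φ = φ(s,t,σ,τ) be continuous on ([0,a]×[0,b])², twice continuously differentiable in (s,t) with continuous ∂φ/∂s, ∂φ/∂t, ∂²φ/∂s∂t. Define F(s,t) := ∫_s^{ϑ₁(t)} ∫_t^{ϑ₂(σ)} φ(s,t,σ,τ) dτ dσ. Then for every (s,t) with 0 < s < a, 0 < t < ϑ₂(s), the mixed second derivative of F exists and ∂²F/∂s∂t (s,t) = φ(s,t,s,t) − ∫_s^{ϑ₁(t)} (∂φ/∂s)(s,t,σ,t) dσ − ∫_t^{ϑ₂(s)} (∂φ/∂t)(s,t,s,τ) dτ + ∫_s^{ϑ₁(t)} ∫_t^{ϑ₂(σ)} (∂²φ/∂s∂t)(s,t,σ,τ) dτ dσ. -/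
/-!
Write `F(s,t) = ∫_s^{ϑ₁ t} g(s,σ) dσ` with `g(s,σ) = ∫_t^{ϑ₂ σ} φ(s,t,σ,τ) dτ`. Leibniz's rule
for a moving lower limit gives `∂F/∂s = ∫_s^{ϑ₁ t} ∫_t^{ϑ₂ σ} ∂φ/∂s − ∫_t^{ϑ₂ s} φ(s,t,s,τ) dτ`.
Differentiating the second term in `t` is again Leibniz's rule. For the first, the moving upper
limit `ϑ₁ t` contributes nothing: on the strip between `ϑ₁ t` and `ϑ₁ y` the inner integral runs
from `y` to `ϑ₂ σ`, and `ϑ₂ σ` lies between `t` and `y` because `ϑ₂` is monotone and inverse to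
`ϑ₁`, so the strip contributes `O(|y − t| · |ϑ₁ y − ϑ₁ t|) = o(|y − t|)`. No differentiability of
`ϑ₁` is needed, only its continuity. To use global calculus lemmas, every variable of `φ` is first
projected onto its interval, which changes nothing in the interior.
-/

open Set MeasureTheory intervalIntegral Filter Topology Function Asymptotics

section ParametricIntervalIntegral

variable {E : Type*} [NormedAddCommGroup E] [NormedSpace ℝ E]

theorem continuous_intervalIntegral_of_continuous_limits {X : Type*} [TopologicalSpace X]
    {f : X → ℝ → E} (hf : Continuous (uncurry f)) {u v : X → ℝ} (hu : Continuous u)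
    (hv : Continuous v) :
    Continuous fun x => ∫ τ in u x..v x, f x τ := by
  have hsplit : (fun x => ∫ τ in u x..v x, f x τ)
      = fun x => (∫ τ in (0 : ℝ)..v x, f x τ) - ∫ τ in (0 : ℝ)..u x, f x τ :=
    funext fun x => (integral_interval_sub_left ((hf.uncurry_left x).intervalIntegrable _ _)
      ((hf.uncurry_left x).intervalIntegrable _ _)).symm
  rw [hsplit]
  exact (continuous_parametric_intervalIntegral_of_continuous hf hv).sub
    (continuous_parametric_intervalIntegral_of_continuous hf hu)

theorem hasDerivAt_intervalIntegral_of_continuous {f f' : ℝ → ℝ → E}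
    (hf : Continuous (uncurry f)) (hf' : Continuous (uncurry f')) {x : ℝ}
    (hderiv : ∀ᶠ y in 𝓝 x, ∀ σ, HasDerivAt (f · σ) (f' y σ) y) (c d : ℝ) :
    HasDerivAt (fun y => ∫ σ in c..d, f y σ) (∫ σ in c..d, f' x σ) x := by
  obtain ⟨ε, hε, hball⟩ := Metric.eventually_nhds_iff_ball.1 hderiv
  obtain ⟨M, hM⟩ := ((isCompact_closedBall x (ε / 2)).prod (isCompact_uIcc (a := c) (b := d)))
    |>.exists_bound_of_continuousOn hf'.continuousOn
  refine (hasDerivAt_integral_of_dominated_loc_of_deriv_le (bound := fun _ => M)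
    (Metric.ball_mem_nhds x (half_pos hε))
    (.of_forall fun y => (hf.uncurry_left y).aestronglyMeasurable)
    ((hf.uncurry_left x).intervalIntegrable c d) (hf'.uncurry_left x).aestronglyMeasurable
    (.of_forall fun σ hσ y hy => hM (y, σ) ⟨Metric.ball_subset_closedBall hy, uIoc_subset_uIcc hσ⟩)
    intervalIntegrable_const
    (.of_forall fun σ _ y hy => hball y (Metric.ball_subset_ball (by linarith) hy) σ)).2

/-- The integrand is frozen at `(x, x)` up to an error that is uniformly small near `x`. -/
theorem hasDerivAt_intervalIntegral_diag [CompleteSpace E] {g : ℝ → ℝ → E}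
    (hg : Continuous (uncurry g)) (x : ℝ) :
    HasDerivAt (fun y => ∫ σ in x..y, g y σ) (g x x) x := by
  rw [hasDerivAt_iff_isLittleO, isLittleO_iff]
  intro C hC
  obtain ⟨δ, hδ, hclose⟩ := Metric.continuousAt_iff.1 (hg.continuousAt (x := (x, x))) C hC
  filter_upwards [Metric.ball_mem_nhds x hδ] with y hy
  rw [Metric.mem_ball] at hy
  have hconst : (∫ _ in x..y, g x x) = (y - x) • g x x := by simp
  rw [integral_same, sub_zero, ← hconst,
    ← integral_sub ((hg.uncurry_left y).intervalIntegrable x y) intervalIntegrable_const]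
  refine norm_integral_le_of_norm_le_const fun σ hσ => ?_
  have hσy : dist σ x ≤ dist y x := by
    simpa [Real.dist_eq] using abs_sub_left_of_mem_uIcc (uIoc_subset_uIcc hσ)
  have hpt : dist (y, σ) (x, x) < δ := by
    rw [Prod.dist_eq]; exact max_lt hy (hσy.trans_lt hy)
  simpa [dist_eq_norm] using (hclose hpt).le

theorem hasDerivAt_intervalIntegral_lower_param [CompleteSpace E] {g g' : ℝ → ℝ → E}
    (hg : Continuous (uncurry g)) (hg' : Continuous (uncurry g')) {x : ℝ}
    (hderiv : ∀ᶠ y in 𝓝 x, ∀ σ, HasDerivAt (g · σ) (g' y σ) y) (c : ℝ) :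
    HasDerivAt (fun y => ∫ σ in y..c, g y σ) ((∫ σ in x..c, g' x σ) - g x x) x := by
  have hsplit : (fun y => ∫ σ in y..c, g y σ)
      = fun y => (∫ σ in x..c, g y σ) - ∫ σ in x..y, g y σ :=
    funext fun y => (integral_interval_sub_left ((hg.uncurry_left y).intervalIntegrable _ _)
      ((hg.uncurry_left y).intervalIntegrable _ _)).symm
  rw [hsplit]
  exact (hasDerivAt_intervalIntegral_of_continuous hg hg' hderiv x c).sub
    (hasDerivAt_intervalIntegral_diag hg x)

theorem hasDerivAt_intervalIntegral_of_norm_le_mul {h : ℝ → ℝ → E} {u : ℝ → ℝ} {t K : ℝ}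
    (hu : ContinuousAt u t)
    (hbound : ∀ᶠ y in 𝓝 t, ∀ σ ∈ uIoc (u t) (u y), ‖h y σ‖ ≤ K * |y - t|) :
    HasDerivAt (fun y => ∫ σ in u t..u y, h y σ) 0 t := by
  rw [hasDerivAt_iff_isLittleO]
  simp only [integral_same, sub_zero, smul_zero]
  have hbigO : (fun y => ∫ σ in u t..u y, h y σ) =O[𝓝 t] fun y => (y - t) * (u y - u t) := by
    refine IsBigO.of_bound |K| (hbound.mono fun y hy => ?_)
    refine (norm_integral_le_of_norm_le_const hy).trans ?_
    rw [norm_mul, Real.norm_eq_abs, Real.norm_eq_abs, ← mul_assoc]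
    gcongr
    exact le_abs_self K
  have hsmall : (fun y => (y - t) * (u y - u t)) =o[𝓝 t] fun y => (y - t) * 1 :=
    (isBigO_refl _ _).mul_isLittleO ((isLittleO_one_iff ℝ).2 (tendsto_sub_nhds_zero_iff.2 hu))
  simpa using hbigO.trans_isLittleO hsmall

end ParametricIntervalIntegral

theorem continuousOn_of_invOn_of_isCompact {X Y : Type*} [TopologicalSpace X] [TopologicalSpace Y]
    [T2Space Y] {f : X → Y} {g : Y → X} {s : Set X} {t : Set Y} (hs : IsCompact s)
    (hf : ContinuousOn f s) (hg : MapsTo g t s) (hinv : InvOn g f s t) : ContinuousOn g t := by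
  refine continuousOn_iff_isClosed.2 fun C hC => ⟨f '' (C ∩ s), ?_, ?_⟩
  · exact ((hs.inter_left hC).image_of_continuousOn (hf.mono inter_subset_right)).isClosed
  · ext y
    constructor
    · rintro ⟨hyC, hy⟩
      exact ⟨⟨g y, ⟨hyC, hg hy⟩, hinv.2 hy⟩, hy⟩
    · rintro ⟨⟨x, ⟨hxC, hx⟩, rfl⟩, hy⟩
      exact ⟨by rwa [mem_preimage, hinv.1 hx], hy⟩

theorem AntitoneOn.mapsTo_uIcc_of_rightInvOn {α β : Type*} [LinearOrder α] [LinearOrder β]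
    {f : α → β} {g : β → α} {s : Set α} {t : Set β} (hf : AntitoneOn f s) (hs : s.OrdConnected)
    (hg : MapsTo g t s) (hfg : RightInvOn g f t) {x y : β} (hx : x ∈ t) (hy : y ∈ t) :
    MapsTo f (uIcc (g x) (g y)) (uIcc x y) := by
  have h := (hf.mono (hs.uIcc_subset (hg hx) (hg hy))).mapsTo_uIcc
  rwa [hfg hx, hfg hy] at h

theorem ContinuousOn.comp_projIcc {α β : Type*} [LinearOrder α] [TopologicalSpace α]
    [OrderTopology α] [TopologicalSpace β] {f : α → β} {a b : α} (hf : ContinuousOn f (Icc a b))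
    (h : a ≤ b) : Continuous fun x => f (projIcc a b h x) :=
  hf.comp_continuous (continuous_subtype_val.comp continuous_projIcc) fun x => (projIcc a b h x).2

theorem Continuous.apply₄ {E : Type*} [TopologicalSpace E] {Φ : ℝ → ℝ → ℝ → ℝ → E}
    (hΦ : Continuous fun q : (ℝ × ℝ) × ℝ × ℝ => Φ q.1.1 q.1.2 q.2.1 q.2.2)
    {X : Type*} [TopologicalSpace X] {m₁ m₂ m₃ m₄ : X → ℝ} (h₁ : Continuous m₁)
    (h₂ : Continuous m₂) (h₃ : Continuous m₃) (h₄ : Continuous m₄) :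
    Continuous fun x => Φ (m₁ x) (m₂ x) (m₃ x) (m₄ x) :=
  hΦ.comp ((h₁.prodMk h₂).prodMk (h₃.prodMk h₄))

section CornerIntegral

variable {E : Type*} [NormedAddCommGroup E] [NormedSpace ℝ E]

/-- With `u = ϑ₁` and `v = ϑ₂` this is `F(s,t)`. -/
noncomputable def cornerIntegral (u v : ℝ → ℝ) (Φ : ℝ → ℝ → ℝ → ℝ → E) (s t : ℝ) : E :=
  ∫ σ in s..u t, ∫ τ in t..v σ, Φ s t σ τ

variable {u v : ℝ → ℝ}

/-- On the strip between `u t` and `u y` the inner integral runs between `y` and `v σ`, which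
lies between `t` and `y`; so the strip contributes `O(|y - t| · |u y - u t|)`. -/
theorem hasDerivAt_integral_strip {Ψ : ℝ → ℝ → ℝ → E} {M t : ℝ} (hu : ContinuousAt u t)
    (hbdd : ∀ y σ τ, ‖Ψ y σ τ‖ ≤ M)
    (hsandwich : ∀ᶠ y in 𝓝 t, ∀ σ ∈ uIcc (u t) (u y), v σ ∈ uIcc t y) :
    HasDerivAt (fun y => ∫ σ in u t..u y, ∫ τ in y..v σ, Ψ y σ τ) 0 t := by
  refine hasDerivAt_intervalIntegral_of_norm_le_mul (K := M) hu
    (hsandwich.mono fun y hy σ hσ => ?_)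
  have hM : 0 ≤ M := (norm_nonneg _).trans (hbdd t t t)
  calc ‖∫ τ in y..v σ, Ψ y σ τ‖ ≤ M * |v σ - y| :=
        norm_integral_le_of_norm_le_const fun τ _ => hbdd y σ τ
    _ ≤ M * |y - t| := by
        refine mul_le_mul_of_nonneg_left ?_ hM
        rw [abs_sub_comm y t]
        exact abs_sub_left_of_mem_uIcc (uIcc_comm t y ▸ hy σ (uIoc_subset_uIcc hσ))

variable [CompleteSpace E]

theorem hasDerivAt_cornerIntegral_fst {Φ Φs : ℝ → ℝ → ℝ → ℝ → E} (hv : Continuous v)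
    (hΦ : Continuous fun q : (ℝ × ℝ) × ℝ × ℝ => Φ q.1.1 q.1.2 q.2.1 q.2.2)
    (hΦs : Continuous fun q : (ℝ × ℝ) × ℝ × ℝ => Φs q.1.1 q.1.2 q.2.1 q.2.2) {s : ℝ} (t : ℝ)
    (hderiv : ∀ᶠ y in 𝓝 s, ∀ σ τ, HasDerivAt (Φ · t σ τ) (Φs y t σ τ) y) :
    HasDerivAt (fun y => cornerIntegral u v Φ y t)
      (cornerIntegral u v Φs s t - ∫ τ in t..v s, Φ s t s τ) s := by
  have hinner : ∀ {Ψ : ℝ → ℝ → ℝ → ℝ → E},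
      (Continuous fun q : (ℝ × ℝ) × ℝ × ℝ => Ψ q.1.1 q.1.2 q.2.1 q.2.2) →
      Continuous (uncurry fun y σ => ∫ τ in t..v σ, Ψ y t σ τ) := fun {Ψ} hΨ =>
    continuous_intervalIntegral_of_continuous_limits (f := fun p τ => Ψ p.1 t p.2 τ)
      (hΨ.apply₄ (continuous_fst.comp continuous_fst) continuous_const
        (continuous_snd.comp continuous_fst) continuous_snd)
      continuous_const (hv.comp continuous_snd)
  refine hasDerivAt_intervalIntegral_lower_param (hinner hΦ) (hinner hΦs)
    (hderiv.eventually_nhds.mono fun y hy σ => ?_) (u t)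
  exact hasDerivAt_intervalIntegral_of_continuous (f := fun y τ => Φ y t σ τ)
    (f' := fun y τ => Φs y t σ τ)
    (hΦ.apply₄ continuous_fst continuous_const continuous_const continuous_snd)
    (hΦs.apply₄ continuous_fst continuous_const continuous_const continuous_snd)
    (hy.mono fun z hz => hz σ) t (v σ)

theorem hasDerivAt_cornerIntegral_snd {Ψ Ψt : ℝ → ℝ → ℝ → ℝ → E} {M : ℝ} {s t : ℝ}
    (hu : ContinuousAt u t) (hv : Continuous v)
    (hΨ : Continuous fun q : (ℝ × ℝ) × ℝ × ℝ => Ψ q.1.1 q.1.2 q.2.1 q.2.2)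
    (hΨt : Continuous fun q : (ℝ × ℝ) × ℝ × ℝ => Ψt q.1.1 q.1.2 q.2.1 q.2.2)
    (hbdd : ∀ y σ τ, ‖Ψ s y σ τ‖ ≤ M)
    (hderiv : ∀ᶠ y in 𝓝 t, ∀ σ τ, HasDerivAt (Ψ s · σ τ) (Ψt s y σ τ) y)
    (hsandwich : ∀ᶠ y in 𝓝 t, ∀ σ ∈ uIcc (u t) (u y), v σ ∈ uIcc t y) :
    HasDerivAt (fun y => cornerIntegral u v Ψ s y)
      (cornerIntegral u v Ψt s t - ∫ σ in s..u t, Ψ s t σ t) t := by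
  set G : ℝ → ℝ → E := fun y σ => ∫ τ in y..v σ, Ψ s y σ τ
  set G' : ℝ → ℝ → E := fun y σ => (∫ τ in y..v σ, Ψt s y σ τ) - Ψ s y σ y
  have hG : Continuous (uncurry G) := by
    exact continuous_intervalIntegral_of_continuous_limits (f := fun p τ => Ψ s p.1 p.2 τ)
      (hΨ.apply₄ continuous_const (continuous_fst.comp continuous_fst)
        (continuous_snd.comp continuous_fst) continuous_snd) continuous_fst (hv.comp continuous_snd)
  have hG' : Continuous (uncurry G') := by
    exact (continuous_intervalIntegral_of_continuous_limits (f := fun p τ => Ψt s p.1 p.2 τ)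
      (hΨt.apply₄ continuous_const (continuous_fst.comp continuous_fst)
        (continuous_snd.comp continuous_fst) continuous_snd) continuous_fst
        (hv.comp continuous_snd)).sub
      (hΨ.apply₄ continuous_const continuous_fst continuous_snd continuous_fst)
  have hGderiv : ∀ᶠ y in 𝓝 t, ∀ σ, HasDerivAt (G · σ) (G' y σ) y :=
    hderiv.eventually_nhds.mono fun y hy σ => hasDerivAt_intervalIntegral_lower_param
      (g := fun z τ => Ψ s z σ τ) (g' := fun z τ => Ψt s z σ τ)
      (hΨ.apply₄ continuous_const continuous_fst continuous_const continuous_snd)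
      (hΨt.apply₄ continuous_const continuous_fst continuous_const continuous_snd)
      (hy.mono fun z hz => hz σ) (v σ)
  have hsplit : (fun y => cornerIntegral u v Ψ s y)
      = fun y => (∫ σ in s..u t, G y σ) + ∫ σ in u t..u y, G y σ :=
    funext fun y => (integral_add_adjacent_intervals ((hG.uncurry_left y).intervalIntegrable _ _)
      ((hG.uncurry_left y).intervalIntegrable _ _)).symm
  have hvalue : (∫ σ in s..u t, G' t σ) + 0
      = cornerIntegral u v Ψt s t - ∫ σ in s..u t, Ψ s t σ t := by
    have hinner : Continuous fun σ => ∫ τ in t..v σ, Ψt s t σ τ := by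
      exact continuous_intervalIntegral_of_continuous_limits (f := fun σ τ => Ψt s t σ τ)
        (hΨt.apply₄ continuous_const continuous_const continuous_fst continuous_snd)
        continuous_const hv
    rw [add_zero]
    exact integral_sub (hinner.intervalIntegrable _ _)
      ((hΨ.apply₄ continuous_const continuous_const continuous_id continuous_const
        ).intervalIntegrable _ _)
  rw [hsplit, ← hvalue]
  exact (hasDerivAt_intervalIntegral_of_continuous hG hG' hGderiv s (u t)).add
    (hasDerivAt_integral_strip hu hbdd hsandwich)

end CornerIntegral

section Box

variable {E : Type*} {a b : ℝ}

noncomputable def boxExtend (ha : 0 ≤ a) (hb : 0 ≤ b) (φ : ℝ → ℝ → ℝ → ℝ → E)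
    (s t σ τ : ℝ) : E :=
  φ (projIcc 0 a ha s) (projIcc 0 b hb t) (projIcc 0 a ha σ) (projIcc 0 b hb τ)

def ContinuousOnBox [TopologicalSpace E] (a b : ℝ) (φ : ℝ → ℝ → ℝ → ℝ → E) : Prop :=
  ContinuousOn (fun q : (ℝ × ℝ) × ℝ × ℝ => φ q.1.1 q.1.2 q.2.1 q.2.2)
    ((Icc 0 a ×ˢ Icc 0 b) ×ˢ (Icc 0 a ×ˢ Icc 0 b))

def HasFstDerivOnBox [NormedAddCommGroup E] [NormedSpace ℝ E] (a b : ℝ)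
    (φ φs : ℝ → ℝ → ℝ → ℝ → E) : Prop :=
  ∀ s ∈ Icc (0:ℝ) a, ∀ t ∈ Icc (0:ℝ) b, ∀ σ ∈ Icc (0:ℝ) a, ∀ τ ∈ Icc (0:ℝ) b,
    HasDerivWithinAt (fun s' => φ s' t σ τ) (φs s t σ τ) (Icc 0 a) s

def HasSndDerivOnBox [NormedAddCommGroup E] [NormedSpace ℝ E] (a b : ℝ)
    (φ φt : ℝ → ℝ → ℝ → ℝ → E) : Prop :=
  ∀ s ∈ Icc (0:ℝ) a, ∀ t ∈ Icc (0:ℝ) b, ∀ σ ∈ Icc (0:ℝ) a, ∀ τ ∈ Icc (0:ℝ) b,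
    HasDerivWithinAt (fun t' => φ s t' σ τ) (φt s t σ τ) (Icc 0 b) t

variable {ha : 0 ≤ a} {hb : 0 ≤ b}

theorem boxExtend_of_mem (φ : ℝ → ℝ → ℝ → ℝ → E) {s t σ τ : ℝ} (hs : s ∈ Icc 0 a)
    (ht : t ∈ Icc 0 b) (hσ : σ ∈ Icc 0 a) (hτ : τ ∈ Icc 0 b) :
    boxExtend ha hb φ s t σ τ = φ s t σ τ := by
  simp [boxExtend, projIcc_of_mem, *]

theorem continuous_boxExtend [TopologicalSpace E] {φ : ℝ → ℝ → ℝ → ℝ → E}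
    (hφ : ContinuousOnBox a b φ) :
    Continuous fun q : (ℝ × ℝ) × ℝ × ℝ => boxExtend ha hb φ q.1.1 q.1.2 q.2.1 q.2.2 := by
  have hproj : Continuous fun q : (ℝ × ℝ) × ℝ × ℝ => (((projIcc 0 a ha q.1.1 : ℝ),
      (projIcc 0 b hb q.1.2 : ℝ)), ((projIcc 0 a ha q.2.1 : ℝ), (projIcc 0 b hb q.2.2 : ℝ))) := by
    fun_prop
  refine ContinuousOn.comp_continuous hφ hproj fun q => ?_
  exact ⟨⟨Subtype.prop _, Subtype.prop _⟩, Subtype.prop _, Subtype.prop _⟩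

variable [NormedAddCommGroup E]

theorem exists_norm_boxExtend_le {φ : ℝ → ℝ → ℝ → ℝ → E} (hφ : ContinuousOnBox a b φ) :
    ∃ M, ∀ s t σ τ, ‖boxExtend ha hb φ s t σ τ‖ ≤ M := by
  obtain ⟨M, hM⟩ := ((isCompact_Icc.prod isCompact_Icc).prod (isCompact_Icc.prod isCompact_Icc))
    |>.exists_bound_of_continuousOn hφ
  exact ⟨M, fun s t σ τ => hM ((_, _), (_, _)) ⟨⟨(projIcc 0 a ha s).2, (projIcc 0 b hb t).2⟩,
    (projIcc 0 a ha σ).2, (projIcc 0 b hb τ).2⟩⟩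

variable [NormedSpace ℝ E]

theorem cornerIntegral_boxExtend {ϑ₁ ϑ₂ : ℝ → ℝ} (hϑ₁ : MapsTo ϑ₁ (Icc 0 b) (Icc 0 a))
    (hϑ₂ : MapsTo ϑ₂ (Icc 0 a) (Icc 0 b)) (φ : ℝ → ℝ → ℝ → ℝ → E) {s t : ℝ} (hs : s ∈ Icc 0 a)
    (ht : t ∈ Icc 0 b) :
    cornerIntegral (fun t => ϑ₁ (projIcc 0 b hb t)) (fun σ => ϑ₂ (projIcc 0 a ha σ))
      (boxExtend ha hb φ) s t = cornerIntegral ϑ₁ ϑ₂ φ s t := by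
  simp only [cornerIntegral, projIcc_of_mem _ ht]
  refine integral_congr fun σ hσ => ?_
  have hσ' : σ ∈ Icc 0 a := uIcc_subset_Icc hs (hϑ₁ ht) hσ
  simp only [projIcc_of_mem _ hσ']
  exact integral_congr fun τ hτ =>
    boxExtend_of_mem φ hs ht hσ' (uIcc_subset_Icc ht (hϑ₂ hσ') hτ)

theorem integral_boxExtend_vertical_edge {ϑ₂ : ℝ → ℝ} (hϑ₂ : MapsTo ϑ₂ (Icc 0 a) (Icc 0 b))
    (φ : ℝ → ℝ → ℝ → ℝ → E) {s t : ℝ} (hs : s ∈ Icc 0 a) (ht : t ∈ Icc 0 b) :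
    ∫ τ in t..ϑ₂ (projIcc 0 a ha s), boxExtend ha hb φ s t s τ = ∫ τ in t..ϑ₂ s, φ s t s τ := by
  rw [projIcc_of_mem _ hs]
  exact integral_congr fun τ hτ => boxExtend_of_mem φ hs ht hs (uIcc_subset_Icc ht (hϑ₂ hs) hτ)

theorem integral_boxExtend_horizontal_edge {ϑ₁ : ℝ → ℝ} (hϑ₁ : MapsTo ϑ₁ (Icc 0 b) (Icc 0 a))
    (φ : ℝ → ℝ → ℝ → ℝ → E) {s t : ℝ} (hs : s ∈ Icc 0 a) (ht : t ∈ Icc 0 b) :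
    ∫ σ in s..ϑ₁ (projIcc 0 b hb t), boxExtend ha hb φ s t σ t = ∫ σ in s..ϑ₁ t, φ s t σ t := by
  rw [projIcc_of_mem _ ht]
  exact integral_congr fun σ hσ => boxExtend_of_mem φ hs ht (uIcc_subset_Icc hs (hϑ₁ ht) hσ) ht

theorem HasFstDerivOnBox.hasDerivAt_boxExtend {φ φs : ℝ → ℝ → ℝ → ℝ → E}
    (hds : HasFstDerivOnBox a b φ φs) {s : ℝ} (hs : s ∈ Ioo 0 a) (t σ τ : ℝ) :
    HasDerivAt (boxExtend ha hb φ · t σ τ) (boxExtend ha hb φs s t σ τ) s := by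
  have hIcc : Icc 0 a ∈ 𝓝 s := Icc_mem_nhds hs.1 hs.2
  have h := (hds s (Ioo_subset_Icc_self hs) _ (projIcc 0 b hb t).2 _ (projIcc 0 a ha σ).2 _
    (projIcc 0 b hb τ).2).hasDerivAt hIcc
  simp only [boxExtend, projIcc_of_mem _ (Ioo_subset_Icc_self hs)]
  exact h.congr_of_eventuallyEq (eventually_of_mem hIcc fun y hy => by
    simp only [projIcc_of_mem _ hy])

theorem HasSndDerivOnBox.hasDerivAt_boxExtend {φ φt : ℝ → ℝ → ℝ → ℝ → E}
    (hdt : HasSndDerivOnBox a b φ φt) {t : ℝ} (ht : t ∈ Ioo 0 b) (s σ τ : ℝ) :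
    HasDerivAt (boxExtend ha hb φ s · σ τ) (boxExtend ha hb φt s t σ τ) t := by
  have hIcc : Icc 0 b ∈ 𝓝 t := Icc_mem_nhds ht.1 ht.2
  have h := (hdt _ (projIcc 0 a ha s).2 t (Ioo_subset_Icc_self ht) _ (projIcc 0 a ha σ).2 _
    (projIcc 0 b hb τ).2).hasDerivAt hIcc
  simp only [boxExtend, projIcc_of_mem _ (Ioo_subset_Icc_self ht)]
  exact h.congr_of_eventuallyEq (eventually_of_mem hIcc fun y hy => by
    simp only [projIcc_of_mem _ hy])

variable [CompleteSpace E] {ϑ₁ ϑ₂ : ℝ → ℝ}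

theorem HasFstDerivOnBox.hasDerivAt_cornerIntegral {φ φs : ℝ → ℝ → ℝ → ℝ → E}
    (hds : HasFstDerivOnBox a b φ φs) (hφ : ContinuousOnBox a b φ)
    (hφs : ContinuousOnBox a b φs) (hϑ₁ : MapsTo ϑ₁ (Icc 0 b) (Icc 0 a))
    (hϑ₂ : MapsTo ϑ₂ (Icc 0 a) (Icc 0 b)) (hϑ₂c : ContinuousOn ϑ₂ (Icc 0 a)) {s t : ℝ}
    (hs : s ∈ Ioo 0 a) (ht : t ∈ Icc 0 b) :
    HasDerivAt (fun y => cornerIntegral ϑ₁ ϑ₂ φ y t)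
      (cornerIntegral ϑ₁ ϑ₂ φs s t - ∫ τ in t..ϑ₂ s, φ s t s τ) s := by
  have ha : 0 ≤ a := hs.1.le.trans hs.2.le
  have hb : 0 ≤ b := ht.1.trans ht.2
  have hsI : s ∈ Icc 0 a := Ioo_subset_Icc_self hs
  have h := hasDerivAt_cornerIntegral_fst (u := fun t => ϑ₁ (projIcc 0 b hb t))
    (Φ := boxExtend ha hb φ) (Φs := boxExtend ha hb φs)
    (hϑ₂c.comp_projIcc ha) (continuous_boxExtend hφ) (continuous_boxExtend hφs) t
    (eventually_of_mem (Ioo_mem_nhds hs.1 hs.2) fun y hy σ τ => hds.hasDerivAt_boxExtend hy t σ τ)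
  rw [cornerIntegral_boxExtend hϑ₁ hϑ₂ φs hsI ht,
    integral_boxExtend_vertical_edge hϑ₂ φ hsI ht] at h
  refine h.congr_of_eventuallyEq ?_
  filter_upwards [Icc_mem_nhds hs.1 hs.2] with y hy
  exact (cornerIntegral_boxExtend hϑ₁ hϑ₂ φ hy ht).symm

theorem HasSndDerivOnBox.hasDerivAt_integral_vertical_edge {φ φt : ℝ → ℝ → ℝ → ℝ → E}
    (hdt : HasSndDerivOnBox a b φ φt) (hφ : ContinuousOnBox a b φ)
    (hφt : ContinuousOnBox a b φt) (hϑ₂ : MapsTo ϑ₂ (Icc 0 a) (Icc 0 b)) {s t : ℝ}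
    (hs : s ∈ Icc 0 a) (ht : t ∈ Ioo 0 b) :
    HasDerivAt (fun y => ∫ τ in y..ϑ₂ s, φ s y s τ)
      ((∫ τ in t..ϑ₂ s, φt s t s τ) - φ s t s t) t := by
  have ha : 0 ≤ a := hs.1.trans hs.2
  have hb : 0 ≤ b := ht.1.le.trans ht.2.le
  have htI : t ∈ Icc 0 b := Ioo_subset_Icc_self ht
  have h := hasDerivAt_intervalIntegral_lower_param
    (g := fun y τ => boxExtend ha hb φ s y s τ) (g' := fun y τ => boxExtend ha hb φt s y s τ)
    ((continuous_boxExtend hφ).apply₄ continuous_const continuous_fst continuous_const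
      continuous_snd)
    ((continuous_boxExtend hφt).apply₄ continuous_const continuous_fst continuous_const
      continuous_snd)
    (eventually_of_mem (Ioo_mem_nhds ht.1 ht.2) fun y hy τ => hdt.hasDerivAt_boxExtend hy s s τ)
    (ϑ₂ (projIcc 0 a ha s))
  rw [integral_boxExtend_vertical_edge hϑ₂ φt hs htI, boxExtend_of_mem φ hs htI hs htI] at h
  refine h.congr_of_eventuallyEq ?_
  filter_upwards [Icc_mem_nhds ht.1 ht.2] with y hy
  exact (integral_boxExtend_vertical_edge hϑ₂ φ hs hy).symm

theorem HasSndDerivOnBox.hasDerivAt_cornerIntegral {φ φt : ℝ → ℝ → ℝ → ℝ → E}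
    (hdt : HasSndDerivOnBox a b φ φt) (hφ : ContinuousOnBox a b φ)
    (hφt : ContinuousOnBox a b φt) (hϑ₁ : MapsTo ϑ₁ (Icc 0 b) (Icc 0 a))
    (hϑ₁c : ContinuousOn ϑ₁ (Icc 0 b)) (hϑ₂ : MapsTo ϑ₂ (Icc 0 a) (Icc 0 b))
    (hϑ₂c : ContinuousOn ϑ₂ (Icc 0 a)) (hanti : AntitoneOn ϑ₂ (Icc 0 a))
    (hinv : RightInvOn ϑ₁ ϑ₂ (Icc 0 b)) {s t : ℝ} (hs : s ∈ Icc 0 a) (ht : t ∈ Ioo 0 b) :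
    HasDerivAt (fun y => cornerIntegral ϑ₁ ϑ₂ φ s y)
      (cornerIntegral ϑ₁ ϑ₂ φt s t - ∫ σ in s..ϑ₁ t, φ s t σ t) t := by
  have ha : 0 ≤ a := hs.1.trans hs.2
  have hb : 0 ≤ b := ht.1.le.trans ht.2.le
  have htI : t ∈ Icc 0 b := Ioo_subset_Icc_self ht
  set u := fun t => ϑ₁ (projIcc 0 b hb t)
  set v := fun σ => ϑ₂ (projIcc 0 a ha σ)
  have hsandwich : ∀ᶠ y in 𝓝 t, ∀ σ ∈ uIcc (u t) (u y), v σ ∈ uIcc t y := by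
    filter_upwards [Icc_mem_nhds ht.1 ht.2] with y hy σ hσ
    simp only [u, projIcc_of_mem _ htI, projIcc_of_mem _ hy] at hσ
    have hσI : σ ∈ Icc 0 a := uIcc_subset_Icc (hϑ₁ htI) (hϑ₁ hy) hσ
    simp only [v, projIcc_of_mem _ hσI]
    exact hanti.mapsTo_uIcc_of_rightInvOn ordConnected_Icc hϑ₁ hinv htI hy hσ
  obtain ⟨M, hM⟩ := exists_norm_boxExtend_le (ha := ha) (hb := hb) hφ
  have h := hasDerivAt_cornerIntegral_snd (Ψ := boxExtend ha hb φ) (Ψt := boxExtend ha hb φt)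
    (hϑ₁c.comp_projIcc hb).continuousAt
    (hϑ₂c.comp_projIcc ha) (continuous_boxExtend hφ) (continuous_boxExtend hφt) (hM s)
    (eventually_of_mem (Ioo_mem_nhds ht.1 ht.2) fun y hy σ τ => hdt.hasDerivAt_boxExtend hy s σ τ)
    hsandwich
  rw [cornerIntegral_boxExtend hϑ₁ hϑ₂ φt hs htI,
    integral_boxExtend_horizontal_edge hϑ₁ φ hs htI] at h
  refine h.congr_of_eventuallyEq ?_
  filter_upwards [Icc_mem_nhds ht.1 ht.2] with y hy
  exact (cornerIntegral_boxExtend hϑ₁ hϑ₂ φ hs hy).symm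

end Box

theorem mixed_deriv_double_integral_moving_corner_general
    (a b : ℝ)
    (ϑ₂ ϑ₁ : ℝ → ℝ)
    (hϑC1 : ContDiffOn ℝ 1 ϑ₂ (Icc 0 a))
    (hϑanti : StrictAntiOn ϑ₂ (Icc 0 a))
    (hϑimg : ϑ₂ '' Icc 0 a = Icc 0 b)
    (hinv₁ : ∀ s ∈ Icc (0:ℝ) a, ϑ₁ (ϑ₂ s) = s)
    (hinv₂ : ∀ t ∈ Icc (0:ℝ) b, ϑ₂ (ϑ₁ t) = t)
    (hϑ₁maps : ∀ t ∈ Icc (0:ℝ) b, ϑ₁ t ∈ Icc (0:ℝ) a)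
    (φ φs φt φst : ℝ → ℝ → ℝ → ℝ → ℝ)
    (hφ : ContinuousOn (fun q : (ℝ × ℝ) × ℝ × ℝ => φ q.1.1 q.1.2 q.2.1 q.2.2)
      ((Icc 0 a ×ˢ Icc 0 b) ×ˢ (Icc 0 a ×ˢ Icc 0 b)))
    (hφs : ContinuousOn (fun q : (ℝ × ℝ) × ℝ × ℝ => φs q.1.1 q.1.2 q.2.1 q.2.2)
      ((Icc 0 a ×ˢ Icc 0 b) ×ˢ (Icc 0 a ×ˢ Icc 0 b)))
    (hφt : ContinuousOn (fun q : (ℝ × ℝ) × ℝ × ℝ => φt q.1.1 q.1.2 q.2.1 q.2.2)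
      ((Icc 0 a ×ˢ Icc 0 b) ×ˢ (Icc 0 a ×ˢ Icc 0 b)))
    (hφst : ContinuousOn (fun q : (ℝ × ℝ) × ℝ × ℝ => φst q.1.1 q.1.2 q.2.1 q.2.2)
      ((Icc 0 a ×ˢ Icc 0 b) ×ˢ (Icc 0 a ×ˢ Icc 0 b)))
    (hds : ∀ s ∈ Icc (0:ℝ) a, ∀ t ∈ Icc (0:ℝ) b, ∀ σ ∈ Icc (0:ℝ) a, ∀ τ ∈ Icc (0:ℝ) b,
      HasDerivWithinAt (fun s' => φ s' t σ τ) (φs s t σ τ) (Icc 0 a) s)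
    (hdt : ∀ s ∈ Icc (0:ℝ) a, ∀ t ∈ Icc (0:ℝ) b, ∀ σ ∈ Icc (0:ℝ) a, ∀ τ ∈ Icc (0:ℝ) b,
      HasDerivWithinAt (fun t' => φ s t' σ τ) (φt s t σ τ) (Icc 0 b) t)
    (hdst : ∀ s ∈ Icc (0:ℝ) a, ∀ t ∈ Icc (0:ℝ) b, ∀ σ ∈ Icc (0:ℝ) a, ∀ τ ∈ Icc (0:ℝ) b,
      HasDerivWithinAt (fun t' => φs s t' σ τ) (φst s t σ τ) (Icc 0 b) t) :
    ∃ Fs : ℝ → ℝ → ℝ,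
      (∀ s' ∈ Ioo (0:ℝ) a, ∀ t' ∈ Ioo (0:ℝ) (ϑ₂ s'),
        HasDerivAt (fun σ' => ∫ σ in σ'..ϑ₁ t', ∫ τ in t'..ϑ₂ σ, φ σ' t' σ τ)
          (Fs s' t') s') ∧
      (∀ s ∈ Ioo (0:ℝ) a, ∀ t ∈ Ioo (0:ℝ) (ϑ₂ s),
        HasDerivAt (fun t' => Fs s t')
          (φ s t s t - (∫ σ in s..ϑ₁ t, φs s t σ t) - (∫ τ in t..ϑ₂ s, φt s t s τ) +
            ∫ σ in s..ϑ₁ t, ∫ τ in t..ϑ₂ σ, φst s t σ τ) t) := by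
  have hϑ₂maps : MapsTo ϑ₂ (Icc 0 a) (Icc 0 b) := hϑimg ▸ mapsTo_image ϑ₂ _
  have hϑ₁cont : ContinuousOn ϑ₁ (Icc 0 b) :=
    continuousOn_of_invOn_of_isCompact isCompact_Icc hϑC1.continuousOn hϑ₁maps ⟨hinv₁, hinv₂⟩
  refine ⟨fun s t => cornerIntegral ϑ₁ ϑ₂ φs s t - ∫ τ in t..ϑ₂ s, φ s t s τ,
    fun s hs t ht => ?_, fun s hs t ht => ?_⟩
  · exact HasFstDerivOnBox.hasDerivAt_cornerIntegral hds hφ hφs hϑ₁maps hϑ₂maps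
      hϑC1.continuousOn hs ⟨ht.1.le, ht.2.le.trans (hϑ₂maps (Ioo_subset_Icc_self hs)).2⟩
  · have hsI : s ∈ Icc 0 a := Ioo_subset_Icc_self hs
    have htb : t ∈ Ioo 0 b := ⟨ht.1, ht.2.trans_le (hϑ₂maps hsI).2⟩
    have hcorner := HasSndDerivOnBox.hasDerivAt_cornerIntegral hdst hφs hφst hϑ₁maps
      hϑ₁cont hϑ₂maps hϑC1.continuousOn hϑanti.antitoneOn hinv₂ hsI htb
    have hedge := HasSndDerivOnBox.hasDerivAt_integral_vertical_edge hdt hφ hφt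
      hϑ₂maps hsI htb
    refine (hcorner.sub hedge).congr_deriv ?_
    rw [cornerIntegral]
    ring

/-- The mixed second-order differentiation formula (A.8) for the
parameter-dependent double integral
`F(s,t) = ∫_s^{ϑ₁(t)} ∫_t^{ϑ₂(σ)} φ(s,t,σ,τ) dτ dσ`. -/
theorem mixed_deriv_double_integral_moving_corner
    (a b : ℝ) (ha : 0 < a) (hb : 0 < b)
    (ϑ₂ ϑ₁ : ℝ → ℝ)
    (hϑC1 : ContDiffOn ℝ 1 ϑ₂ (Icc 0 a))
    (hϑanti : StrictAntiOn ϑ₂ (Icc 0 a))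
    (hϑimg : ϑ₂ '' Icc 0 a = Icc 0 b)
    (hinv₁ : ∀ s ∈ Icc (0:ℝ) a, ϑ₁ (ϑ₂ s) = s)
    (hinv₂ : ∀ t ∈ Icc (0:ℝ) b, ϑ₂ (ϑ₁ t) = t)
    (hϑ₁maps : ∀ t ∈ Icc (0:ℝ) b, ϑ₁ t ∈ Icc (0:ℝ) a)
    (φ φs φt φst : ℝ → ℝ → ℝ → ℝ → ℝ)
    (hφ : ContinuousOn (fun q : (ℝ × ℝ) × ℝ × ℝ => φ q.1.1 q.1.2 q.2.1 q.2.2)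
      ((Icc 0 a ×ˢ Icc 0 b) ×ˢ (Icc 0 a ×ˢ Icc 0 b)))
    (hφs : ContinuousOn (fun q : (ℝ × ℝ) × ℝ × ℝ => φs q.1.1 q.1.2 q.2.1 q.2.2)
      ((Icc 0 a ×ˢ Icc 0 b) ×ˢ (Icc 0 a ×ˢ Icc 0 b)))
    (hφt : ContinuousOn (fun q : (ℝ × ℝ) × ℝ × ℝ => φt q.1.1 q.1.2 q.2.1 q.2.2)
      ((Icc 0 a ×ˢ Icc 0 b) ×ˢ (Icc 0 a ×ˢ Icc 0 b)))
    (hφst : ContinuousOn (fun q : (ℝ × ℝ) × ℝ × ℝ => φst q.1.1 q.1.2 q.2.1 q.2.2)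
      ((Icc 0 a ×ˢ Icc 0 b) ×ˢ (Icc 0 a ×ˢ Icc 0 b)))
    (hds : ∀ s ∈ Icc (0:ℝ) a, ∀ t ∈ Icc (0:ℝ) b, ∀ σ ∈ Icc (0:ℝ) a, ∀ τ ∈ Icc (0:ℝ) b,
      HasDerivWithinAt (fun s' => φ s' t σ τ) (φs s t σ τ) (Icc 0 a) s)
    (hdt : ∀ s ∈ Icc (0:ℝ) a, ∀ t ∈ Icc (0:ℝ) b, ∀ σ ∈ Icc (0:ℝ) a, ∀ τ ∈ Icc (0:ℝ) b,
      HasDerivWithinAt (fun t' => φ s t' σ τ) (φt s t σ τ) (Icc 0 b) t)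
    (hdst : ∀ s ∈ Icc (0:ℝ) a, ∀ t ∈ Icc (0:ℝ) b, ∀ σ ∈ Icc (0:ℝ) a, ∀ τ ∈ Icc (0:ℝ) b,
      HasDerivWithinAt (fun t' => φs s t' σ τ) (φst s t σ τ) (Icc 0 b) t) :
    ∃ Fs : ℝ → ℝ → ℝ,
      (∀ s' ∈ Ioo (0:ℝ) a, ∀ t' ∈ Ioo (0:ℝ) (ϑ₂ s'),
        HasDerivAt (fun σ' => ∫ σ in σ'..ϑ₁ t', ∫ τ in t'..ϑ₂ σ, φ σ' t' σ τ)
          (Fs s' t') s') ∧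
      (∀ s ∈ Ioo (0:ℝ) a, ∀ t ∈ Ioo (0:ℝ) (ϑ₂ s),
        HasDerivAt (fun t' => Fs s t')
          (φ s t s t - (∫ σ in s..ϑ₁ t, φs s t σ t) - (∫ τ in t..ϑ₂ s, φt s t s τ) +
            ∫ σ in s..ϑ₁ t, ∫ τ in t..ϑ₂ σ, φst s t σ τ) t) :=
  mixed_deriv_double_integral_moving_corner_general a b ϑ₂ ϑ₁ hϑC1 hϑanti hϑimg hinv₁ hinv₂ hϑ₁maps
    φ φs φt φst hφ hφs hφt hφst hds hdt hdst
end

section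
/- Let ϑ₂ : [α,β] → ℝ be a C¹ strictly decreasing function with inverse ϑ₁ defined on [ϑ₂(β), ϑ₂(α)]. Let ψ be a real-valued C² function on the curvilinear triangle D := {(σ,τ) : α ≤ σ ≤ β, ϑ₂(β) ≤ τ ≤ ϑ₂(σ)}. Then for every (s,t) ∈ D with t ≤ ϑ₂(s): ψ(s,t) = ½ ( ψ(s,ϑ₂(s)) + ψ(ϑ₁(t),t) ) + ∫_s^{ϑ₁(t)} ∫_t^{ϑ₂(σ)} (∂²ψ/∂σ∂τ)(σ,τ) dτ dσ − ½ ∫_s^{ϑ₁(t)} [ (∂ψ/∂σ)(σ,ϑ₂(σ)) − ϑ₂'(σ) (∂ψ/∂τ)(σ,ϑ₂(σ)) ] dσ. -/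
open Set MeasureTheory intervalIntegral

/-!
Integrating `ψστ` in `τ` turns the double integral into `∫ (ψσ(σ, ϑ₂ σ) - ψσ(σ, t)) dσ`. The
second part is `ψ(A_t) - ψ(s, t)` by the fundamental theorem of calculus along the horizontal side,
and the first part combines with the boundary integral once the fundamental theorem of calculus is
applied to `σ ↦ ψ(σ, ϑ₂ σ)`, whose derivative is `ψσ + ϑ₂' ψτ`.

That chain rule is the only delicate point: `ψ` has continuous partial derivatives only within
`D`, and the curve runs along the boundary of `D`. Any two points of the curve are joined inside
`D` by a horizontal and a vertical segment, and the mean value inequality along each segment shows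
that `ψ` is differentiable at a point of the curve within the set of points so joined to it.
-/

theorem abs_sub_sub_mul_le_of_hasDerivWithinAt {f f' : ℝ → ℝ} {a b c ε : ℝ}
    (hf : ∀ x ∈ uIcc a b, HasDerivWithinAt f (f' x) (uIcc a b) x)
    (hf' : ∀ x ∈ uIcc a b, |f' x - c| ≤ ε) :
    |f b - f a - (b - a) * c| ≤ ε * |b - a| := by
  have h := Convex.norm_image_sub_le_of_norm_hasDerivWithin_le (f := fun x => f x - x * c)
    (fun x hx => ((hf x hx).sub ((hasDerivWithinAt_id x _).mul_const c)).congr_deriv (by ring))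
    hf' (convex_uIcc a b) left_mem_uIcc right_mem_uIcc
  simp only [Real.norm_eq_abs] at h
  convert h using 2
  ring

theorem integral_eq_sub_of_hasDerivWithinAt_uIcc {f f' : ℝ → ℝ} {a b : ℝ}
    (hf : ∀ x ∈ uIcc a b, HasDerivWithinAt f (f' x) (uIcc a b) x)
    (hf' : ContinuousOn f' (uIcc a b)) : ∫ x in a..b, f' x = f b - f a :=
  integral_eq_sub_of_hasDeriv_right (fun x hx => (hf x hx).continuousWithinAt)
    (fun x hx => ((hf x (Ioo_subset_Icc_self hx)).hasDerivAt
      (Icc_mem_nhds hx.1 hx.2)).hasDerivWithinAt)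
    hf'.intervalIntegrable

def JoinedByLPath (D : Set (ℝ × ℝ)) (p q : ℝ × ℝ) : Prop :=
  ((∀ v ∈ uIcc p.2 q.2, (p.1, v) ∈ D) ∧ ∀ u ∈ uIcc p.1 q.1, (u, q.2) ∈ D) ∨
    ((∀ u ∈ uIcc p.1 q.1, (u, p.2) ∈ D) ∧ ∀ v ∈ uIcc p.2 q.2, (q.1, v) ∈ D)

theorem joinedByLPath_graph {ϑ : ℝ → ℝ} {α β x₀ x : ℝ} (hϑ : AntitoneOn ϑ (Icc α β))
    (hx₀ : x₀ ∈ Icc α β) (hx : x ∈ Icc α β) :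
    JoinedByLPath {p : ℝ × ℝ | α ≤ p.1 ∧ p.1 ≤ β ∧ ϑ β ≤ p.2 ∧ p.2 ≤ ϑ p.1}
      (x₀, ϑ x₀) (x, ϑ x) := by
  have hβ : ∀ {u}, u ∈ Icc α β → ϑ β ≤ ϑ u := fun hu => hϑ hu ⟨hu.1.trans hu.2, le_rfl⟩ hu.2
  rcases le_total x₀ x with h | h
  · refine Or.inl ⟨fun v hv => ?_, fun u hu => ?_⟩
    · rw [uIcc_of_ge (hϑ hx₀ hx h)] at hv
      exact ⟨hx₀.1, hx₀.2, (hβ hx).trans hv.1, hv.2⟩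
    · rw [uIcc_of_le h] at hu
      have huI : u ∈ Icc α β := ⟨hx₀.1.trans hu.1, hu.2.trans hx.2⟩
      exact ⟨huI.1, huI.2, hβ hx, hϑ huI hx hu.2⟩
  · refine Or.inr ⟨fun u hu => ?_, fun v hv => ?_⟩
    · rw [uIcc_of_ge h] at hu
      have huI : u ∈ Icc α β := ⟨hx.1.trans hu.1, hu.2.trans hx₀.2⟩
      exact ⟨huI.1, huI.2, hβ hx₀, hϑ huI hx₀ hu.2⟩
    · rw [uIcc_of_le (hϑ hx hx₀ h)] at hv
      exact ⟨hx.1, hx.2, (hβ hx₀).trans hv.1, hv.2⟩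

section Partials

variable {D : Set (ℝ × ℝ)} {f fσ fτ fστ : ℝ × ℝ → ℝ}

theorem hasDerivWithinAt_uIcc_of_horizontal
    (hfσ : ∀ p ∈ D, HasDerivWithinAt (fun σ => f (σ, p.2)) (fσ p) {σ | (σ, p.2) ∈ D} p.1)
    {a b y : ℝ} (hseg : ∀ u ∈ uIcc a b, (u, y) ∈ D) :
    ∀ u ∈ uIcc a b, HasDerivWithinAt (fun σ => f (σ, y)) (fσ (u, y)) (uIcc a b) u :=
  fun u hu => (hfσ (u, y) (hseg u hu)).mono hseg

theorem hasDerivWithinAt_uIcc_of_vertical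
    (hfτ : ∀ p ∈ D, HasDerivWithinAt (fun τ => f (p.1, τ)) (fτ p) {τ | (p.1, τ) ∈ D} p.2)
    {a b x : ℝ} (hseg : ∀ v ∈ uIcc a b, (x, v) ∈ D) :
    ∀ v ∈ uIcc a b, HasDerivWithinAt (fun τ => f (x, τ)) (fτ (x, v)) (uIcc a b) v :=
  fun v hv => (hfτ (x, v) (hseg v hv)).mono hseg

theorem integral_horizontal_eq_sub
    (hfσ : ∀ p ∈ D, HasDerivWithinAt (fun σ => f (σ, p.2)) (fσ p) {σ | (σ, p.2) ∈ D} p.1)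
    (hfσc : ContinuousOn fσ D) {a b y : ℝ} (hseg : ∀ u ∈ uIcc a b, (u, y) ∈ D) :
    ∫ u in a..b, fσ (u, y) = f (b, y) - f (a, y) :=
  integral_eq_sub_of_hasDerivWithinAt_uIcc (hasDerivWithinAt_uIcc_of_horizontal hfσ hseg)
    (hfσc.comp (by fun_prop) hseg)

theorem integral_vertical_eq_sub
    (hfτ : ∀ p ∈ D, HasDerivWithinAt (fun τ => f (p.1, τ)) (fτ p) {τ | (p.1, τ) ∈ D} p.2)
    (hfτc : ContinuousOn fτ D) {a b x : ℝ} (hseg : ∀ v ∈ uIcc a b, (x, v) ∈ D) :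
    ∫ v in a..b, fτ (x, v) = f (x, b) - f (x, a) :=
  integral_eq_sub_of_hasDerivWithinAt_uIcc (hasDerivWithinAt_uIcc_of_vertical hfτ hseg)
    (hfτc.comp (by fun_prop) hseg)

theorem abs_sub_sub_le_of_joinedByLPath {p₀ p : ℝ × ℝ} {ε : ℝ}
    (hfσ : ∀ p ∈ D, HasDerivWithinAt (fun σ => f (σ, p.2)) (fσ p) {σ | (σ, p.2) ∈ D} p.1)
    (hfτ : ∀ p ∈ D, HasDerivWithinAt (fun τ => f (p.1, τ)) (fτ p) {τ | (p.1, τ) ∈ D} p.2)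
    (hp : JoinedByLPath D p₀ p)
    (hσ : ∀ q ∈ D, q.1 ∈ uIcc p₀.1 p.1 → q.2 ∈ uIcc p₀.2 p.2 → |fσ q - fσ p₀| ≤ ε)
    (hτ : ∀ q ∈ D, q.1 ∈ uIcc p₀.1 p.1 → q.2 ∈ uIcc p₀.2 p.2 → |fτ q - fτ p₀| ≤ ε) :
    |f p - f p₀ - ((p.1 - p₀.1) * fσ p₀ + (p.2 - p₀.2) * fτ p₀)| ≤
      ε * |p.1 - p₀.1| + ε * |p.2 - p₀.2| := by
  obtain ⟨x₀, y₀⟩ := p₀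
  obtain ⟨x, y⟩ := p
  rcases hp with ⟨hv, hh⟩ | ⟨hh, hv⟩
  · have h₁ := abs_sub_sub_mul_le_of_hasDerivWithinAt
      (hasDerivWithinAt_uIcc_of_horizontal hfσ hh) (fun u hu => hσ _ (hh u hu) hu right_mem_uIcc)
    have h₂ := abs_sub_sub_mul_le_of_hasDerivWithinAt
      (hasDerivWithinAt_uIcc_of_vertical hfτ hv) (fun v hv' => hτ _ (hv v hv') left_mem_uIcc hv')
    calc _ = |(f (x, y) - f (x₀, y) - (x - x₀) * fσ (x₀, y₀)) +
          (f (x₀, y) - f (x₀, y₀) - (y - y₀) * fτ (x₀, y₀))| := by ring_nf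
      _ ≤ _ := (abs_add_le _ _).trans (add_le_add h₁ h₂)
  · have h₁ := abs_sub_sub_mul_le_of_hasDerivWithinAt
      (hasDerivWithinAt_uIcc_of_horizontal hfσ hh) (fun u hu => hσ _ (hh u hu) hu left_mem_uIcc)
    have h₂ := abs_sub_sub_mul_le_of_hasDerivWithinAt
      (hasDerivWithinAt_uIcc_of_vertical hfτ hv) (fun v hv' => hτ _ (hv v hv') right_mem_uIcc hv')
    calc _ = |(f (x, y₀) - f (x₀, y₀) - (x - x₀) * fσ (x₀, y₀)) +
          (f (x, y) - f (x, y₀) - (y - y₀) * fτ (x₀, y₀))| := by ring_nf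
      _ ≤ _ := (abs_add_le _ _).trans (add_le_add h₁ h₂)

theorem hasFDerivWithinAt_of_partials {p₀ : ℝ × ℝ}
    (hfσ : ∀ p ∈ D, HasDerivWithinAt (fun σ => f (σ, p.2)) (fσ p) {σ | (σ, p.2) ∈ D} p.1)
    (hfτ : ∀ p ∈ D, HasDerivWithinAt (fun τ => f (p.1, τ)) (fτ p) {τ | (p.1, τ) ∈ D} p.2)
    (hσc : ContinuousWithinAt fσ D p₀) (hτc : ContinuousWithinAt fτ D p₀) :
    HasFDerivWithinAt f
      (fσ p₀ • ContinuousLinearMap.fst ℝ ℝ ℝ + fτ p₀ • ContinuousLinearMap.snd ℝ ℝ ℝ)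
      {p | JoinedByLPath D p₀ p} p₀ := by
  rw [hasFDerivWithinAt_iff_isLittleO, Asymptotics.isLittleO_iff]
  intro c hc
  obtain ⟨δσ, hδσ, hσ⟩ := Metric.continuousWithinAt_iff.mp hσc (c / 2) (half_pos hc)
  obtain ⟨δτ, hδτ, hτ⟩ := Metric.continuousWithinAt_iff.mp hτc (c / 2) (half_pos hc)
  filter_upwards [self_mem_nhdsWithin,
    nhdsWithin_le_nhds (Metric.ball_mem_nhds p₀ (lt_min hδσ hδτ))] with p hp hball
  have hbox : ∀ q : ℝ × ℝ, q.1 ∈ uIcc p₀.1 p.1 → q.2 ∈ uIcc p₀.2 p.2 →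
      dist q p₀ < min δσ δτ := fun q h₁ h₂ => by
    refine lt_of_le_of_lt ?_ hball
    simp only [Prod.dist_eq, Real.dist_eq]
    exact max_le_max (abs_sub_left_of_mem_uIcc h₁) (abs_sub_left_of_mem_uIcc h₂)
  have key := abs_sub_sub_le_of_joinedByLPath hfσ hfτ hp
    (fun q hq h₁ h₂ => (hσ hq ((hbox q h₁ h₂).trans_le (min_le_left _ _))).le)
    (fun q hq h₁ h₂ => (hτ hq ((hbox q h₁ h₂).trans_le (min_le_right _ _))).le)
  simp only [add_apply, smul_apply, ContinuousLinearMap.coe_fst', ContinuousLinearMap.coe_snd',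
    smul_eq_mul, Real.norm_eq_abs, Prod.norm_def, Prod.fst_sub, Prod.snd_sub]
  calc _ ≤ c / 2 * |p.1 - p₀.1| + c / 2 * |p.2 - p₀.2| := by
        convert key using 3; ring
    _ ≤ c * max |p.1 - p₀.1| |p.2 - p₀.2| := by
        nlinarith [le_max_left |p.1 - p₀.1| |p.2 - p₀.2|, le_max_right |p.1 - p₀.1| |p.2 - p₀.2|]

theorem hasDerivWithinAt_comp_graph_of_partials {φ : ℝ → ℝ} {S : Set ℝ} {x₀ d : ℝ}
    (hfσ : ∀ p ∈ D, HasDerivWithinAt (fun σ => f (σ, p.2)) (fσ p) {σ | (σ, p.2) ∈ D} p.1)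
    (hfτ : ∀ p ∈ D, HasDerivWithinAt (fun τ => f (p.1, τ)) (fτ p) {τ | (p.1, τ) ∈ D} p.2)
    (hσc : ContinuousWithinAt fσ D (x₀, φ x₀)) (hτc : ContinuousWithinAt fτ D (x₀, φ x₀))
    (hφ : HasDerivWithinAt φ d S x₀) (hjoin : ∀ x ∈ S, JoinedByLPath D (x₀, φ x₀) (x, φ x)) :
    HasDerivWithinAt (fun x => f (x, φ x)) (fσ (x₀, φ x₀) + d * fτ (x₀, φ x₀)) S x₀ := by
  have h := (hasFDerivWithinAt_of_partials hfσ hfτ hσc hτc).comp_hasDerivWithinAt x₀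
    ((hasDerivWithinAt_id x₀ S).prodMk hφ) fun x hx => hjoin x hx
  exact h.congr_deriv (by simp [mul_comm])

theorem eq_boundary_average_add_integral_mixed_partial {φ d : ℝ → ℝ} {s a t : ℝ}
    (hfσ : ∀ p ∈ D, HasDerivWithinAt (fun σ => f (σ, p.2)) (fσ p) {σ | (σ, p.2) ∈ D} p.1)
    (hfτ : ∀ p ∈ D, HasDerivWithinAt (fun τ => f (p.1, τ)) (fτ p) {τ | (p.1, τ) ∈ D} p.2)
    (hfστ : ∀ p ∈ D, HasDerivWithinAt (fun τ => fσ (p.1, τ)) (fστ p) {τ | (p.1, τ) ∈ D} p.2)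
    (hfσc : ContinuousOn fσ D) (hfτc : ContinuousOn fτ D) (hfστc : ContinuousOn fστ D)
    (hφ : ∀ x ∈ uIcc s a, HasDerivWithinAt φ (d x) (uIcc s a) x) (hd : ContinuousOn d (uIcc s a))
    (hφa : φ a = t) (hcol : ∀ σ ∈ uIcc s a, ∀ τ ∈ uIcc t (φ σ), (σ, τ) ∈ D)
    (hjoin : ∀ x₀ ∈ uIcc s a, ∀ x ∈ uIcc s a, JoinedByLPath D (x₀, φ x₀) (x, φ x)) :
    f (s, t) = (f (s, φ s) + f (a, t)) / 2 + (∫ σ in s..a, ∫ τ in t..φ σ, fστ (σ, τ)) -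
      (1 / 2) * ∫ σ in s..a, (fσ (σ, φ σ) - d σ * fτ (σ, φ σ)) := by
  have hcurve : ∀ σ ∈ uIcc s a, (σ, φ σ) ∈ D := fun σ hσ => hcol σ hσ _ right_mem_uIcc
  have hlevel : ∀ σ ∈ uIcc s a, (σ, t) ∈ D := fun σ hσ => hcol σ hσ _ left_mem_uIcc
  have hγ : ContinuousOn (fun σ => (σ, φ σ)) (uIcc s a) :=
    continuousOn_id.prodMk fun σ hσ => (hφ σ hσ).continuousWithinAt
  have hU : ContinuousOn (fun σ => fσ (σ, φ σ)) (uIcc s a) := hfσc.comp hγ hcurve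
  have hV : ContinuousOn (fun σ => d σ * fτ (σ, φ σ)) (uIcc s a) :=
    hd.mul (hfτc.comp hγ hcurve)
  have hW : ContinuousOn (fun σ => fσ (σ, t)) (uIcc s a) := hfσc.comp (by fun_prop) hlevel
  have hbdry : ∫ σ in s..a, (fσ (σ, φ σ) + d σ * fτ (σ, φ σ)) = f (a, t) - f (s, φ s) := by
    have h := integral_eq_sub_of_hasDerivWithinAt_uIcc (fun σ₀ hσ₀ =>
      hasDerivWithinAt_comp_graph_of_partials hfσ hfτ (hfσc _ (hcurve σ₀ hσ₀))
        (hfτc _ (hcurve σ₀ hσ₀)) (hφ σ₀ hσ₀) (hjoin σ₀ hσ₀)) (hU.add hV)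
    rwa [hφa] at h
  have hhor : ∫ σ in s..a, fσ (σ, t) = f (a, t) - f (s, t) :=
    integral_horizontal_eq_sub hfσ hfσc hlevel
  have hinner : ∀ σ ∈ uIcc s a, ∫ τ in t..φ σ, fστ (σ, τ) = fσ (σ, φ σ) - fσ (σ, t) :=
    fun σ hσ => integral_vertical_eq_sub hfστ hfστc (hcol σ hσ)
  rw [integral_congr hinner, integral_sub hU.intervalIntegrable hW.intervalIntegrable,
    integral_sub hU.intervalIntegrable hV.intervalIntegrable]
  rw [integral_add hU.intervalIntegrable hV.intervalIntegrable] at hbdry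
  linarith

end Partials

theorem gauss_green_curvilinear_triangle_general
    (α β : ℝ)
    (ϑ₂ ϑ₁ d₂ : ℝ → ℝ)
    (hϑanti : StrictAntiOn ϑ₂ (Icc α β))
    (hd₂ : ∀ σ ∈ Icc α β, HasDerivWithinAt ϑ₂ (d₂ σ) (Icc α β) σ)
    (hd₂cont : ContinuousOn d₂ (Icc α β))
    (hinv₂ : ∀ τ ∈ Icc (ϑ₂ β) (ϑ₂ α), ϑ₂ (ϑ₁ τ) = τ)
    (hϑ₁maps : ∀ τ ∈ Icc (ϑ₂ β) (ϑ₂ α), ϑ₁ τ ∈ Icc α β)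
    (D : Set (ℝ × ℝ))
    (hD : D = {p : ℝ × ℝ | α ≤ p.1 ∧ p.1 ≤ β ∧ ϑ₂ β ≤ p.2 ∧ p.2 ≤ ϑ₂ p.1})
    -- `ψ` is C² on `D`, with first partials `ψσ`, `ψτ` and mixed second partial `ψστ`
    (ψ ψσ ψτ ψστ : ℝ × ℝ → ℝ)
    (hψσcont : ContinuousOn ψσ D)
    (hψτcont : ContinuousOn ψτ D) (hψστcont : ContinuousOn ψστ D)
    (hψσ : ∀ p ∈ D, HasDerivWithinAt (fun σ => ψ (σ, p.2)) (ψσ p)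
      {σ : ℝ | (σ, p.2) ∈ D} p.1)
    (hψτ : ∀ p ∈ D, HasDerivWithinAt (fun τ => ψ (p.1, τ)) (ψτ p)
      {τ : ℝ | (p.1, τ) ∈ D} p.2)
    (hψστ : ∀ p ∈ D, HasDerivWithinAt (fun τ => ψσ (p.1, τ)) (ψστ p)
      {τ : ℝ | (p.1, τ) ∈ D} p.2) :
    ∀ p ∈ D,
      ψ p = (ψ (p.1, ϑ₂ p.1) + ψ (ϑ₁ p.2, p.2)) / 2 +
        (∫ σ in p.1..ϑ₁ p.2, ∫ τ in p.2..ϑ₂ σ, ψστ (σ, τ)) -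
        (1 / 2) * ∫ σ in p.1..ϑ₁ p.2,
          (ψσ (σ, ϑ₂ σ) - d₂ σ * ψτ (σ, ϑ₂ σ)) := by
  rintro ⟨s, t⟩ hp
  rw [hD] at hp
  obtain ⟨hαs, hsβ, hβt, hts⟩ := hp
  have hϑ := hϑanti.antitoneOn
  have htI : t ∈ Icc (ϑ₂ β) (ϑ₂ α) :=
    ⟨hβt, hts.trans (hϑ ⟨le_rfl, hαs.trans hsβ⟩ ⟨hαs, hsβ⟩ hαs)⟩
  have hϑa : ϑ₂ (ϑ₁ t) = t := hinv₂ t htI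
  have hsa : s ≤ ϑ₁ t := (hϑanti.le_iff_ge (hϑ₁maps t htI) ⟨hαs, hsβ⟩).mp (hϑa.symm ▸ hts)
  have hsub : uIcc s (ϑ₁ t) ⊆ Icc α β := by
    rw [uIcc_of_le hsa]; exact Icc_subset_Icc hαs (hϑ₁maps t htI).2
  refine eq_boundary_average_add_integral_mixed_partial hψσ hψτ hψστ hψσcont hψτcont hψστcont
    (fun σ hσ => (hd₂ σ (hsub hσ)).mono hsub) (hd₂cont.mono hsub) hϑa (fun σ hσ τ hτ => ?_)
    (fun σ₀ hσ₀ σ hσ => hD ▸ joinedByLPath_graph hϑ (hsub hσ₀) (hsub hσ))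
  have htσ : t ≤ ϑ₂ σ := hϑa ▸ hϑ (hsub hσ) (hϑ₁maps t htI) (uIcc_of_le hsa ▸ hσ).2
  rw [uIcc_of_le htσ] at hτ
  rw [hD]
  exact ⟨(hsub hσ).1, (hsub hσ).2, hβt.trans hτ.1, hτ.2⟩

/-- The Gauss–Green representation (4.18) of a C² function on the
curvilinear triangle `D` bounded by the decreasing curve `τ = ϑ₂(σ)`:
`ψ(s,t) = ½(ψ(B_s) + ψ(A_t)) + ∬_{E(s,t)} ψ_{στ} − ½ ∫_{A_t}^{B_s} ψ_{n*} dμ`. -/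
theorem gauss_green_curvilinear_triangle
    (α β : ℝ) (hαβ : α ≤ β)
    (ϑ₂ ϑ₁ d₂ : ℝ → ℝ)
    (hϑanti : StrictAntiOn ϑ₂ (Icc α β))
    (hd₂ : ∀ σ ∈ Icc α β, HasDerivWithinAt ϑ₂ (d₂ σ) (Icc α β) σ)
    (hd₂cont : ContinuousOn d₂ (Icc α β))
    (hinv₁ : ∀ σ ∈ Icc α β, ϑ₁ (ϑ₂ σ) = σ)
    (hinv₂ : ∀ τ ∈ Icc (ϑ₂ β) (ϑ₂ α), ϑ₂ (ϑ₁ τ) = τ)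
    (hϑ₁maps : ∀ τ ∈ Icc (ϑ₂ β) (ϑ₂ α), ϑ₁ τ ∈ Icc α β)
    (D : Set (ℝ × ℝ))
    (hD : D = {p : ℝ × ℝ | α ≤ p.1 ∧ p.1 ≤ β ∧ ϑ₂ β ≤ p.2 ∧ p.2 ≤ ϑ₂ p.1})
    -- `ψ` is C² on `D`, with first partials `ψσ`, `ψτ` and mixed second partial `ψστ`
    (ψ ψσ ψτ ψστ : ℝ × ℝ → ℝ)
    (hψcont : ContinuousOn ψ D) (hψσcont : ContinuousOn ψσ D)
    (hψτcont : ContinuousOn ψτ D) (hψστcont : ContinuousOn ψστ D)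
    (hψσ : ∀ p ∈ D, HasDerivWithinAt (fun σ => ψ (σ, p.2)) (ψσ p)
      {σ : ℝ | (σ, p.2) ∈ D} p.1)
    (hψτ : ∀ p ∈ D, HasDerivWithinAt (fun τ => ψ (p.1, τ)) (ψτ p)
      {τ : ℝ | (p.1, τ) ∈ D} p.2)
    (hψστ : ∀ p ∈ D, HasDerivWithinAt (fun τ => ψσ (p.1, τ)) (ψστ p)
      {τ : ℝ | (p.1, τ) ∈ D} p.2) :
    ∀ p ∈ D,
      ψ p = (ψ (p.1, ϑ₂ p.1) + ψ (ϑ₁ p.2, p.2)) / 2 +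
        (∫ σ in p.1..ϑ₁ p.2, ∫ τ in p.2..ϑ₂ σ, ψστ (σ, τ)) -
        (1 / 2) * ∫ σ in p.1..ϑ₁ p.2,
          (ψσ (σ, ϑ₂ σ) - d₂ σ * ψτ (σ, ϑ₂ σ)) :=
  gauss_green_curvilinear_triangle_general α β ϑ₂ ϑ₁ d₂ hϑanti hd₂ hd₂cont hinv₂ hϑ₁maps D hD ψ ψσ
    ψτ ψστ hψσcont hψτcont hψστcont hψσ hψτ hψστ
end

section
/- Let a, b, L, ρ > 0, let D be a compact subset of [0,a]×[0,b], and for (s,t) ∈ D set E(s,t) := D ∩ ([s,a]×[t,b]). Let g : D × ℝⁿ × ℝⁿ × ℝⁿ → ℝⁿ be continuous and satisfy |g(σ,τ,Ψ₁,P₁,Q₁) − g(σ,τ,Ψ₂,P₂,Q₂)| ≤ L(|Ψ₁−Ψ₂| + |P₁−P₂| + |Q₁−Q₂|) for all arguments, where |·| is the Euclidean norm on ℝⁿ. Let ψ₀ : D → ℝⁿ be continuous, and for continuous (ψ,P,Q) : D → (ℝⁿ)³ define (𝚿(ψ,P,Q))(s,t) := ψ₀(s,t) + ∬_{E(s,t)}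 g(σ,τ,ψ(σ,τ),P(σ,τ),Q(σ,τ)) dA(σ,τ). Define the weighted norm ‖f‖_ρ := max_{(s,t)∈D} e^{−ρ(a−s+b−t)} |f(s,t)|. Then for all continuous triples (ψ₁,P₁,Q₁) and (ψ₂,P₂,Q₂) and all (s,t) ∈ D: e^{−ρ(a−s+b−t)} |(𝚿(ψ₁,P₁,Q₁))(s,t) − (𝚿(ψ₂,P₂,Q₂))(s,t)| ≤ L · ((1−e^{−ρa})(1−e^{−ρb})/ρ²) · ( ‖ψ₁−ψ₂‖_ρ + ‖P₁−P₂‖_ρ + ‖Q₁−Q₂‖_ρ ). -/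
/-!
Since `g` is `L`-Lipschitz, the integrand difference at `(σ, τ)` is bounded by
`L e^{ρ(a-σ+b-τ)} (‖ψ₁-ψ₂‖_ρ + ‖P₁-P₂‖_ρ + ‖Q₁-Q₂‖_ρ)`. Multiplying by the weight at `(s, t)`
leaves the kernel `e^{-ρ(σ-s)} e^{-ρ(τ-t)}`, whose integral over `E(s,t) ⊆ [s,a] × [t,b]` is at most
`(1 - e^{-ρ(a-s)})(1 - e^{-ρ(b-t)})/ρ²`, and this only grows as `(s, t)` moves down to the origin.
-/

open Set MeasureTheory Real

theorem mul_norm_le_iSup_mul_norm_of_isCompact {X V : Type*} [TopologicalSpace X]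
    [SeminormedAddCommGroup V] {D : Set X} (hD : IsCompact D) {w : X → ℝ} (hw : ContinuousOn w D)
    {f : X → V} (hf : ContinuousOn f D) {x : X} (hx : x ∈ D) :
    w x * ‖f x‖ ≤ ⨆ y : D, w y * ‖f y‖ :=
  le_ciSup (f := fun y : D => w y * ‖f y‖)
    (by rw [← image_eq_range (fun y => w y * ‖f y‖)]; exact hD.bddAbove_image (hw.mul hf.norm))
    ⟨x, hx⟩

theorem mul_norm_setIntegral_le_of_forall_mul_norm_le {α V : Type*} [MeasurableSpace α]
    [NormedAddCommGroup V] [NormedSpace ℝ V] {μ : Measure α} {E : Set α} (hE : MeasurableSet E)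
    {F : α → V} {k : α → ℝ} (hk : IntegrableOn k E μ) {c : ℝ} (hc : 0 ≤ c)
    (hle : ∀ q ∈ E, c * ‖F q‖ ≤ k q) :
    c * ‖∫ q in E, F q ∂μ‖ ≤ ∫ q in E, k q ∂μ := by
  have hnorm : ∀ v : V, ‖c • v‖ = c * ‖v‖ := fun v => by
    rw [norm_smul, norm_of_nonneg hc]
  rw [← hnorm, ← integral_smul]
  exact norm_integral_le_of_norm_le hk
    (ae_restrict_of_forall_mem hE fun q hq => (hnorm _).trans_le (hle q hq))

theorem integral_Icc_exp_neg_mul_sub {ρ s a : ℝ} (hρ : ρ ≠ 0) (hsa : s ≤ a) :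
    ∫ x in Icc s a, exp (-ρ * (x - s)) = (1 - exp (-ρ * (a - s))) / ρ := by
  rw [integral_Icc_eq_integral_Ioc, ← intervalIntegral.integral_of_le hsa,
    intervalIntegral.integral_comp_sub_right (fun x => exp (-ρ * x)),
    intervalIntegral.integral_comp_mul_left exp (neg_ne_zero.mpr hρ), integral_exp]
  simp only [neg_mul, sub_self, mul_zero, exp_zero, smul_eq_mul]
  field_simp
  ring

theorem setIntegral_exp_neg_mul_le_of_subset_Icc {ρ s t a b : ℝ} (hρ : ρ ≠ 0) (hsa : s ≤ a)
    (htb : t ≤ b) {E : Set (ℝ × ℝ)} (hE : E ⊆ Icc (s, t) (a, b)) :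
    ∫ q in E, exp (-ρ * (q.1 - s)) * exp (-ρ * (q.2 - t)) ≤
      (1 - exp (-ρ * (a - s))) / ρ * ((1 - exp (-ρ * (b - t))) / ρ) := by
  have hcont : Continuous fun q : ℝ × ℝ => exp (-ρ * (q.1 - s)) * exp (-ρ * (q.2 - t)) := by
    fun_prop
  calc ∫ q in E, exp (-ρ * (q.1 - s)) * exp (-ρ * (q.2 - t))
      ≤ ∫ q in Icc (s, t) (a, b), exp (-ρ * (q.1 - s)) * exp (-ρ * (q.2 - t)) :=
        setIntegral_mono_set (hcont.continuousOn.integrableOn_compact isCompact_Icc)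
          (.of_forall fun q => by positivity) hE.eventuallyLE
    _ = _ := by
        rw [← Icc_prod_Icc, Measure.volume_eq_prod, setIntegral_prod_mul
          (fun x => exp (-ρ * (x - s))) (fun y => exp (-ρ * (y - t))),
          integral_Icc_exp_neg_mul_sub hρ hsa, integral_Icc_exp_neg_mul_sub hρ htb]

theorem one_sub_exp_neg_mul_div_mul_le {ρ s t a b : ℝ} (hρ : 0 ≤ ρ) (hs : 0 ≤ s) (hsa : s ≤ a)
    (ht : 0 ≤ t) (htb : t ≤ b) :
    (1 - exp (-ρ * (a - s))) / ρ * ((1 - exp (-ρ * (b - t))) / ρ) ≤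
      (1 - exp (-ρ * a)) * (1 - exp (-ρ * b)) / ρ ^ 2 := by
  have hnonneg : ∀ x, 0 ≤ x → 0 ≤ (1 - exp (-ρ * x)) / ρ := fun x hx =>
    div_nonneg (sub_nonneg.mpr (exp_le_one_iff.mpr (by nlinarith))) hρ
  have hmono : ∀ x y, x ≤ y → (1 - exp (-ρ * x)) / ρ ≤ (1 - exp (-ρ * y)) / ρ := fun x y hxy =>
    div_le_div_of_nonneg_right (sub_le_sub_left (exp_le_exp.mpr (by nlinarith)) 1) hρ
  rw [sq, ← div_mul_div_comm]
  exact mul_le_mul (hmono _ _ (by linarith)) (hmono _ _ (by linarith))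
    (hnonneg _ (by linarith)) (hnonneg _ (by linarith))

theorem exp_neg_mul_norm_setIntegral_le {V : Type*} [NormedAddCommGroup V] [NormedSpace ℝ V]
    {ρ a b C : ℝ} (hρ : 0 < ρ) {D : Set (ℝ × ℝ)} (hD : IsCompact D)
    (hDsub : D ⊆ Icc (0 : ℝ) a ×ˢ Icc (0 : ℝ) b) {F : ℝ × ℝ → V}
    (hF : ∀ q ∈ D, exp (-ρ * (a - q.1 + b - q.2)) * ‖F q‖ ≤ C) {p : ℝ × ℝ} (hp : p ∈ D) :
    exp (-ρ * (a - p.1 + b - p.2)) * ‖∫ q in D ∩ Icc (p.1, p.2) (a, b), F q‖ ≤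
      C * ((1 - exp (-ρ * a)) * (1 - exp (-ρ * b)) / ρ ^ 2) := by
  obtain ⟨⟨hs0, hsa⟩, ht0, htb⟩ := hDsub hp
  set E := D ∩ Icc (p.1, p.2) (a, b)
  have hE : IsCompact E := hD.inter_right isClosed_Icc
  have hC : 0 ≤ C := (by positivity : (0 : ℝ) ≤ _).trans (hF p hp)
  have hkernel : ∀ q ∈ E, exp (-ρ * (a - p.1 + b - p.2)) * ‖F q‖ ≤
      C * (exp (-ρ * (q.1 - p.1)) * exp (-ρ * (q.2 - p.2))) := by
    intro q hq
    have hsplit : exp (-ρ * (a - p.1 + b - p.2)) = exp (-ρ * (q.1 - p.1)) *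
        exp (-ρ * (q.2 - p.2)) * exp (-ρ * (a - q.1 + b - q.2)) := by
      rw [← exp_add, ← exp_add]; ring_nf
    rw [hsplit, mul_assoc, mul_comm C]
    exact mul_le_mul_of_nonneg_left (hF q hq.1) (by positivity)
  calc _ ≤ ∫ q in E, C * (exp (-ρ * (q.1 - p.1)) * exp (-ρ * (q.2 - p.2))) :=
        mul_norm_setIntegral_le_of_forall_mul_norm_le hE.measurableSet
          ((continuous_const.mul (by fun_prop)).continuousOn.integrableOn_compact hE)
          (exp_pos _).le hkernel
    _ = C * ∫ q in E, exp (-ρ * (q.1 - p.1)) * exp (-ρ * (q.2 - p.2)) :=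
        integral_const_mul _ _
    _ ≤ C * ((1 - exp (-ρ * a)) * (1 - exp (-ρ * b)) / ρ ^ 2) := by
        gcongr
        exact (setIntegral_exp_neg_mul_le_of_subset_Icc hρ.ne' hsa htb inter_subset_right).trans
          (one_sub_exp_neg_mul_div_mul_le hρ.le hs0 hsa ht0 htb)

theorem bielecki_estimate_double_integral_operator_general
    (n : ℕ) (a b L ρ : ℝ) (hL : 0 < L) (hρ : 0 < ρ)
    (D : Set (ℝ × ℝ)) (hDcompact : IsCompact D)
    (hDsub : D ⊆ Icc (0:ℝ) a ×ˢ Icc (0:ℝ) b)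
    (g : ℝ × ℝ → EuclideanSpace ℝ (Fin n) → EuclideanSpace ℝ (Fin n) →
        EuclideanSpace ℝ (Fin n) → EuclideanSpace ℝ (Fin n))
    (hgcont : ContinuousOn
      (fun q : (ℝ × ℝ) × EuclideanSpace ℝ (Fin n) × EuclideanSpace ℝ (Fin n) ×
          EuclideanSpace ℝ (Fin n) => g q.1 q.2.1 q.2.2.1 q.2.2.2)
      (D ×ˢ (univ : Set (EuclideanSpace ℝ (Fin n) × EuclideanSpace ℝ (Fin n) ×
          EuclideanSpace ℝ (Fin n)))))
    (hgLip : ∀ p ∈ D, ∀ Ψ₁ P₁ Q₁ Ψ₂ P₂ Q₂ : EuclideanSpace ℝ (Fin n),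
      ‖g p Ψ₁ P₁ Q₁ - g p Ψ₂ P₂ Q₂‖ ≤ L * (‖Ψ₁ - Ψ₂‖ + ‖P₁ - P₂‖ + ‖Q₁ - Q₂‖))
    (ψ₀ : ℝ × ℝ → EuclideanSpace ℝ (Fin n))
    -- the weighted norm ‖·‖_ρ
    (normρ : (ℝ × ℝ → EuclideanSpace ℝ (Fin n)) → ℝ)
    (hnormρ : ∀ f : ℝ × ℝ → EuclideanSpace ℝ (Fin n),
      normρ f = ⨆ q : D, Real.exp (-ρ * (a - (q : ℝ × ℝ).1 + b - (q : ℝ × ℝ).2)) * ‖f q‖)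
    (ψ₁ P₁ Q₁ ψ₂ P₂ Q₂ : ℝ × ℝ → EuclideanSpace ℝ (Fin n))
    (h₁ : ContinuousOn ψ₁ D ∧ ContinuousOn P₁ D ∧ ContinuousOn Q₁ D)
    (h₂ : ContinuousOn ψ₂ D ∧ ContinuousOn P₂ D ∧ ContinuousOn Q₂ D) :
    ∀ p ∈ D,
      Real.exp (-ρ * (a - p.1 + b - p.2)) *
        ‖(ψ₀ p + ∫ q in D ∩ Icc (p.1, p.2) (a, b), g q (ψ₁ q) (P₁ q) (Q₁ q)) -
          (ψ₀ p + ∫ q in D ∩ Icc (p.1, p.2) (a, b), g q (ψ₂ q) (P₂ q) (Q₂ q))‖ ≤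
      L * ((1 - Real.exp (-ρ * a)) * (1 - Real.exp (-ρ * b)) / ρ ^ 2) *
        (normρ (ψ₁ - ψ₂) + normρ (P₁ - P₂) + normρ (Q₁ - Q₂)) := by
  intro p hp
  set S := normρ (ψ₁ - ψ₂) + normρ (P₁ - P₂) + normρ (Q₁ - Q₂)
  have hweighted : ∀ f, ContinuousOn f D → ∀ q ∈ D,
      exp (-ρ * (a - q.1 + b - q.2)) * ‖f q‖ ≤ normρ f := fun f hf q hq => by
    rw [hnormρ]
    exact mul_norm_le_iSup_mul_norm_of_isCompact (w := fun q => exp (-ρ * (a - q.1 + b - q.2)))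
      hDcompact (by fun_prop) hf hq
  have hintegrand : ∀ q ∈ D, exp (-ρ * (a - q.1 + b - q.2)) *
      ‖g q (ψ₁ q) (P₁ q) (Q₁ q) - g q (ψ₂ q) (P₂ q) (Q₂ q)‖ ≤ L * S := by
    intro q hq
    have hψ := hweighted _ (h₁.1.sub h₂.1) q hq
    have hP := hweighted _ (h₁.2.1.sub h₂.2.1) q hq
    have hQ := hweighted _ (h₁.2.2.sub h₂.2.2) q hq
    simp only [Pi.sub_apply] at hψ hP hQ
    have hLip := mul_le_mul_of_nonneg_left (hgLip q hq (ψ₁ q) (P₁ q) (Q₁ q) (ψ₂ q) (P₂ q) (Q₂ q))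
      (exp_pos (-ρ * (a - q.1 + b - q.2))).le
    nlinarith
  have hint : ∀ ψ P Q : ℝ × ℝ → EuclideanSpace ℝ (Fin n),
      ContinuousOn ψ D → ContinuousOn P D → ContinuousOn Q D →
      IntegrableOn (fun q => g q (ψ q) (P q) (Q q)) (D ∩ Icc (p.1, p.2) (a, b)) :=
    fun ψ P Q hψ hP hQ => ((hgcont.comp (continuousOn_id.prodMk (hψ.prodMk (hP.prodMk hQ)))
      fun q hq => ⟨hq, trivial⟩).mono inter_subset_left).integrableOn_compact
        (hDcompact.inter_right isClosed_Icc)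
  rw [add_sub_add_left_eq_sub, ← integral_sub (hint _ _ _ h₁.1 h₁.2.1 h₁.2.2)
    (hint _ _ _ h₂.1 h₂.2.1 h₂.2.2)]
  exact (exp_neg_mul_norm_setIntegral_le hρ hDcompact hDsub hintegrand hp).trans_eq (by ring)

/-- The contraction estimate (B.8), in the weighted (Bielecki) norm
`‖f‖_ρ = max_{(s,t)∈D} e^{−ρ(a−s+b−t)}|f(s,t)|`, for the double-integral operator
`𝚿(ψ,P,Q)(s,t) = ψ₀(s,t) + ∬_{E(s,t)} g(σ,τ,ψ,P,Q) dA`. -/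
theorem bielecki_estimate_double_integral_operator
    (n : ℕ) (a b L ρ : ℝ) (ha : 0 < a) (hb : 0 < b) (hL : 0 < L) (hρ : 0 < ρ)
    (D : Set (ℝ × ℝ)) (hDcompact : IsCompact D)
    (hDsub : D ⊆ Icc (0:ℝ) a ×ˢ Icc (0:ℝ) b)
    (g : ℝ × ℝ → EuclideanSpace ℝ (Fin n) → EuclideanSpace ℝ (Fin n) →
        EuclideanSpace ℝ (Fin n) → EuclideanSpace ℝ (Fin n))
    (hgcont : ContinuousOn
      (fun q : (ℝ × ℝ) × EuclideanSpace ℝ (Fin n) × EuclideanSpace ℝ (Fin n) ×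
          EuclideanSpace ℝ (Fin n) => g q.1 q.2.1 q.2.2.1 q.2.2.2)
      (D ×ˢ (univ : Set (EuclideanSpace ℝ (Fin n) × EuclideanSpace ℝ (Fin n) ×
          EuclideanSpace ℝ (Fin n)))))
    (hgLip : ∀ p ∈ D, ∀ Ψ₁ P₁ Q₁ Ψ₂ P₂ Q₂ : EuclideanSpace ℝ (Fin n),
      ‖g p Ψ₁ P₁ Q₁ - g p Ψ₂ P₂ Q₂‖ ≤ L * (‖Ψ₁ - Ψ₂‖ + ‖P₁ - P₂‖ + ‖Q₁ - Q₂‖))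
    (ψ₀ : ℝ × ℝ → EuclideanSpace ℝ (Fin n)) (hψ₀ : ContinuousOn ψ₀ D)
    -- the weighted norm ‖·‖_ρ
    (normρ : (ℝ × ℝ → EuclideanSpace ℝ (Fin n)) → ℝ)
    (hnormρ : ∀ f : ℝ × ℝ → EuclideanSpace ℝ (Fin n),
      normρ f = ⨆ q : D, Real.exp (-ρ * (a - (q : ℝ × ℝ).1 + b - (q : ℝ × ℝ).2)) * ‖f q‖)
    (ψ₁ P₁ Q₁ ψ₂ P₂ Q₂ : ℝ × ℝ → EuclideanSpace ℝ (Fin n))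
    (h₁ : ContinuousOn ψ₁ D ∧ ContinuousOn P₁ D ∧ ContinuousOn Q₁ D)
    (h₂ : ContinuousOn ψ₂ D ∧ ContinuousOn P₂ D ∧ ContinuousOn Q₂ D) :
    ∀ p ∈ D,
      Real.exp (-ρ * (a - p.1 + b - p.2)) *
        ‖(ψ₀ p + ∫ q in D ∩ Icc (p.1, p.2) (a, b), g q (ψ₁ q) (P₁ q) (Q₁ q)) -
          (ψ₀ p + ∫ q in D ∩ Icc (p.1, p.2) (a, b), g q (ψ₂ q) (P₂ q) (Q₂ q))‖ ≤
      L * ((1 - Real.exp (-ρ * a)) * (1 - Real.exp (-ρ * b)) / ρ ^ 2) *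
        (normρ (ψ₁ - ψ₂) + normρ (P₁ - P₂) + normρ (Q₁ - Q₂)) :=
  bielecki_estimate_double_integral_operator_general n a b L ρ hL hρ D hDcompact hDsub g hgcont
    hgLip ψ₀ normρ hnormρ ψ₁ P₁ Q₁ ψ₂ P₂ Q₂ h₁ h₂
end

section
/- Let a, b, L, ρ > 0, let ϑ₂ : [0,a] → [0,b] be continuous, and let D := {(s,t) : 0 ≤ s ≤ a, 0 ≤ t ≤ ϑ₂(s)}. Let g : D × ℝⁿ × ℝⁿ × ℝⁿ → ℝⁿ be continuous and satisfy |g(σ,τ,Ψ₁,P₁,Q₁) − g(σ,τ,Ψ₂,P₂,Q₂)| ≤ L(|Ψ₁−Ψ₂| + |P₁−P₂| + |Q₁−Q₂|) for all arguments, where |·| is the Euclidean norm on ℝⁿ. Let p₀ : D → ℝⁿ be continuous, and for continuous (ψ,P,Q) : D → (ℝⁿ)³ define (𝐏(ψ,P,Q))(s,t) := p₀(s,t) − ∫_t^{ϑ₂(s)} g(s,τ,ψ(s,τ),P(s,τ),Q(s,τ)) dτ. Define the weighted norm ‖f‖_ρ := max_{(s,t)∈D} e^{−ρ(a−s+b−t)}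 |f(s,t)|. Then for all continuous triples (ψ₁,P₁,Q₁) and (ψ₂,P₂,Q₂) and all (s,t) ∈ D: e^{−ρ(a−s+b−t)} |(𝐏(ψ₁,P₁,Q₁))(s,t) − (𝐏(ψ₂,P₂,Q₂))(s,t)| ≤ L · ((1−e^{−ρb})/ρ) · ( ‖ψ₁−ψ₂‖_ρ + ‖P₁−P₂‖_ρ + ‖Q₁−Q₂‖_ρ ). -/
open Set MeasureTheory intervalIntegral

/-!
On the vertical segment from `(s, t)` to `(s, ϑ₂ s)` the two integrals combine into one, whose
integrand is bounded, by the Lipschitz condition and the definition of `‖·‖_ρ`, by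
`L N e^{ρ(a-s+b-τ)}` with `N` the sum of the three weighted distances. Integrating,
`e^{-ρ(a-s+b-t)} ∫_t^{ϑ₂ s} e^{ρ(a-s+b-τ)} dτ = (1 - e^{-ρ(ϑ₂ s - t)})/ρ ≤ (1 - e^{-ρb})/ρ`.
The supremum defining `‖·‖_ρ` dominates its terms (rather than being the junk value `0`)
because `D` is compact.
-/

open Real in
theorem integral_exp_mul_sub {ρ : ℝ} (hρ : ρ ≠ 0) (c t T : ℝ) :
    ∫ τ in t..T, exp (ρ * (c - τ)) = (exp (ρ * (c - t)) - exp (ρ * (c - T))) / ρ := by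
  simp_rw [mul_sub]
  rw [integral_comp_sub_mul (fun x ↦ exp x) hρ, integral_exp, smul_eq_mul]
  field_simp

theorem IsCompact.le_ciSup_of_continuousOn {X : Type*} [TopologicalSpace X] {K : Set X}
    (hK : IsCompact K) {F : X → ℝ} (hF : ContinuousOn F K) {q : X} (hq : q ∈ K) :
    F q ≤ ⨆ x : K, F x :=
  le_ciSup (image_eq_range F K ▸ hK.bddAbove_image hF) ⟨q, hq⟩

theorem ContinuousOn.isCompact_region_under_graph {a : ℝ} {ϑ : ℝ → ℝ}
    (hϑ : ContinuousOn ϑ (Icc 0 a)) :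
    IsCompact {p : ℝ × ℝ | 0 ≤ p.1 ∧ p.1 ≤ a ∧ 0 ≤ p.2 ∧ p.2 ≤ ϑ p.1} := by
  obtain ⟨M, hM⟩ := isCompact_Icc.bddAbove_image hϑ
  have hclosed : IsClosed {p : ℝ × ℝ | 0 ≤ p.1 ∧ p.1 ≤ a ∧ 0 ≤ p.2 ∧ p.2 ≤ ϑ p.1} := by
    have := ContinuousOn.preimage_isClosed_of_isClosed (s := Icc 0 a ×ˢ Ici 0)
      (f := fun p : ℝ × ℝ ↦ (p.2, ϑ p.1)) ?_ (isClosed_Icc.prod isClosed_Ici)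
      (isClosed_le continuous_fst continuous_snd)
    · convert this using 1
      ext p; simp [and_assoc]
    · exact continuous_snd.continuousOn.prodMk
        (hϑ.comp continuous_fst.continuousOn fun _ hp ↦ hp.1)
  refine isCompact_Icc.of_isClosed_subset hclosed (s := Icc (0, 0) (a, M)) ?_
  rintro p ⟨h0, ha, ht0, htϑ⟩
  exact ⟨⟨h0, ht0⟩, ha, htϑ.trans (hM (mem_image_of_mem ϑ ⟨h0, ha⟩))⟩

theorem norm_le_exp_mul_iSup_exp_neg_mul_norm {X E : Type*} [TopologicalSpace X]
    [NormedAddCommGroup E] {K : Set X} (hK : IsCompact K) {w : X → ℝ} (hw : ContinuousOn w K)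
    {f : X → E} (hf : ContinuousOn f K) {q : X} (hq : q ∈ K) :
    ‖f q‖ ≤ Real.exp (w q) * ⨆ x : K, Real.exp (-w x) * ‖f x‖ := by
  have hq := hK.le_ciSup_of_continuousOn (F := fun x ↦ Real.exp (-w x) * ‖f x‖)
    ((hw.neg.rexp).mul hf.norm) hq
  rwa [Real.exp_neg, inv_mul_le_iff₀ (Real.exp_pos _)] at hq

theorem ContinuousOn.comp_along_curve {X Y E F : Type*} [TopologicalSpace X]
    [TopologicalSpace Y] [TopologicalSpace E] [TopologicalSpace F] {D : Set Y}
    {g : Y → E → E → E → F}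
    (hg : ContinuousOn (fun q : Y × E × E × E ↦ g q.1 q.2.1 q.2.2.1 q.2.2.2) (D ×ˢ univ))
    {ψ P Q : Y → E} (hψ : ContinuousOn ψ D) (hP : ContinuousOn P D) (hQ : ContinuousOn Q D)
    {γ : X → Y} {I : Set X} (hγ : ContinuousOn γ I) (hγI : MapsTo γ I D) :
    ContinuousOn (fun x ↦ g (γ x) (ψ (γ x)) (P (γ x)) (Q (γ x))) I :=
  hg.comp (hγ.prodMk ((hψ.comp hγ hγI).prodMk ((hP.comp hγ hγI).prodMk (hQ.comp hγ hγI))))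
    fun _ hx ↦ ⟨hγI hx, trivial⟩

theorem norm_sub_le_of_lipschitz {E F : Type*} [SeminormedAddCommGroup E]
    [SeminormedAddCommGroup F] {g : E → E → E → F} {L : ℝ} (hL : 0 ≤ L)
    (hg : ∀ Ψ₁ P₁ Q₁ Ψ₂ P₂ Q₂ : E,
      ‖g Ψ₁ P₁ Q₁ - g Ψ₂ P₂ Q₂‖ ≤ L * (‖Ψ₁ - Ψ₂‖ + ‖P₁ - P₂‖ + ‖Q₁ - Q₂‖))
    {Ψ₁ P₁ Q₁ Ψ₂ P₂ Q₂ : E} {e N₁ N₂ N₃ : ℝ} (hΨ : ‖Ψ₁ - Ψ₂‖ ≤ e * N₁)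
    (hP : ‖P₁ - P₂‖ ≤ e * N₂) (hQ : ‖Q₁ - Q₂‖ ≤ e * N₃) :
    ‖g Ψ₁ P₁ Q₁ - g Ψ₂ P₂ Q₂‖ ≤ L * (N₁ + N₂ + N₃) * e :=
  calc ‖g Ψ₁ P₁ Q₁ - g Ψ₂ P₂ Q₂‖ ≤ L * (‖Ψ₁ - Ψ₂‖ + ‖P₁ - P₂‖ + ‖Q₁ - Q₂‖) := hg ..
    _ ≤ L * (e * N₁ + e * N₂ + e * N₃) := by gcongr
    _ = L * (N₁ + N₂ + N₃) * e := by ring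

open Real in
theorem exp_neg_mul_norm_integral_le {E : Type*} [NormedAddCommGroup E] [NormedSpace ℝ E]
    {F : ℝ → E} {K ρ c t T h : ℝ} (hρ : 0 < ρ) (hK : 0 ≤ K) (htT : t ≤ T) (hh : T - t ≤ h)
    (hF : ∀ τ ∈ Ioc t T, ‖F τ‖ ≤ K * exp (ρ * (c - τ))) :
    exp (-ρ * (c - t)) * ‖∫ τ in t..T, F τ‖ ≤ K * ((1 - exp (-ρ * h)) / ρ) := by
  have hbound : ‖∫ τ in t..T, F τ‖ ≤ ∫ τ in t..T, K * exp (ρ * (c - τ)) :=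
    intervalIntegral.norm_integral_le_of_norm_le htT (ae_of_all _ hF)
      ((by fun_prop : Continuous _).intervalIntegrable _ _)
  calc exp (-ρ * (c - t)) * ‖∫ τ in t..T, F τ‖
      ≤ exp (-ρ * (c - t)) * ∫ τ in t..T, K * exp (ρ * (c - τ)) := by gcongr
    _ = K * ((1 - exp (-ρ * (T - t))) / ρ) := by
      rw [intervalIntegral.integral_const_mul, integral_exp_mul_sub hρ.ne', mul_left_comm,
        mul_div_assoc', mul_sub, ← exp_add, ← exp_add, neg_mul, neg_add_cancel, exp_zero]
      congr 4
      ring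
    _ ≤ K * ((1 - exp (-ρ * h)) / ρ) := by
      gcongr K * ((1 - ?_) / ρ)
      exact exp_le_exp.2 (by nlinarith)

theorem bielecki_estimate_single_integral_operator_general
    (n : ℕ) (a b L ρ : ℝ) (hL : 0 < L) (hρ : 0 < ρ)
    (ϑ₂ : ℝ → ℝ) (hϑcont : ContinuousOn ϑ₂ (Icc 0 a))
    (hϑmaps : ∀ s ∈ Icc (0:ℝ) a, ϑ₂ s ∈ Icc (0:ℝ) b)
    (D : Set (ℝ × ℝ))
    (hD : D = {p : ℝ × ℝ | 0 ≤ p.1 ∧ p.1 ≤ a ∧ 0 ≤ p.2 ∧ p.2 ≤ ϑ₂ p.1})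
    (g : ℝ × ℝ → EuclideanSpace ℝ (Fin n) → EuclideanSpace ℝ (Fin n) →
        EuclideanSpace ℝ (Fin n) → EuclideanSpace ℝ (Fin n))
    (hgcont : ContinuousOn
      (fun q : (ℝ × ℝ) × EuclideanSpace ℝ (Fin n) × EuclideanSpace ℝ (Fin n) ×
          EuclideanSpace ℝ (Fin n) => g q.1 q.2.1 q.2.2.1 q.2.2.2)
      (D ×ˢ (univ : Set (EuclideanSpace ℝ (Fin n) × EuclideanSpace ℝ (Fin n) ×
          EuclideanSpace ℝ (Fin n)))))
    (hgLip : ∀ p ∈ D, ∀ Ψ₁ P₁ Q₁ Ψ₂ P₂ Q₂ : EuclideanSpace ℝ (Fin n),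
      ‖g p Ψ₁ P₁ Q₁ - g p Ψ₂ P₂ Q₂‖ ≤ L * (‖Ψ₁ - Ψ₂‖ + ‖P₁ - P₂‖ + ‖Q₁ - Q₂‖))
    (p₀ : ℝ × ℝ → EuclideanSpace ℝ (Fin n))
    (normρ : (ℝ × ℝ → EuclideanSpace ℝ (Fin n)) → ℝ)
    (hnormρ : ∀ f : ℝ × ℝ → EuclideanSpace ℝ (Fin n),
      normρ f = ⨆ q : D, Real.exp (-ρ * (a - (q : ℝ × ℝ).1 + b - (q : ℝ × ℝ).2)) * ‖f q‖)
    (ψ₁ P₁ Q₁ ψ₂ P₂ Q₂ : ℝ × ℝ → EuclideanSpace ℝ (Fin n))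
    (h₁ : ContinuousOn ψ₁ D ∧ ContinuousOn P₁ D ∧ ContinuousOn Q₁ D)
    (h₂ : ContinuousOn ψ₂ D ∧ ContinuousOn P₂ D ∧ ContinuousOn Q₂ D) :
    ∀ p ∈ D,
      Real.exp (-ρ * (a - p.1 + b - p.2)) *
        ‖(p₀ p - ∫ τ in p.2..ϑ₂ p.1, g (p.1, τ) (ψ₁ (p.1, τ)) (P₁ (p.1, τ)) (Q₁ (p.1, τ))) -
          (p₀ p - ∫ τ in p.2..ϑ₂ p.1, g (p.1, τ) (ψ₂ (p.1, τ)) (P₂ (p.1, τ)) (Q₂ (p.1, τ)))‖ ≤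
      L * ((1 - Real.exp (-ρ * b)) / ρ) *
        (normρ (ψ₁ - ψ₂) + normρ (P₁ - P₂) + normρ (Q₁ - Q₂)) := by
  rintro ⟨s, t⟩ hp
  obtain ⟨hs0, hsa, ht0, htϑ⟩ : 0 ≤ s ∧ s ≤ a ∧ 0 ≤ t ∧ t ≤ ϑ₂ s := by
    rwa [hD] at hp
  have hDc : IsCompact D := hD ▸ hϑcont.isCompact_region_under_graph
  have hseg : MapsTo (fun τ ↦ (s, τ)) (Icc t (ϑ₂ s)) D := fun τ hτ ↦
    hD ▸ ⟨hs0, hsa, ht0.trans hτ.1, hτ.2⟩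
  have hweight : ContinuousOn (fun q : ℝ × ℝ ↦ ρ * (a - q.1 + b - q.2)) D := by fun_prop
  have hnorm_le : ∀ f : ℝ × ℝ → EuclideanSpace ℝ (Fin n), ContinuousOn f D → ∀ q ∈ D,
      ‖f q‖ ≤ Real.exp (ρ * (a - q.1 + b - q.2)) * normρ f := fun f hf q hq ↦ by
    simpa only [hnormρ, neg_mul] using norm_le_exp_mul_iSup_exp_neg_mul_norm hDc hweight hf hq
  have hnormρ_nonneg : ∀ f, 0 ≤ normρ f := fun f ↦
    hnormρ f ▸ Real.iSup_nonneg fun _ ↦ by positivity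
  set N := normρ (ψ₁ - ψ₂) + normρ (P₁ - P₂) + normρ (Q₁ - Q₂)
  have hN : 0 ≤ N :=
    add_nonneg (add_nonneg (hnormρ_nonneg _) (hnormρ_nonneg _)) (hnormρ_nonneg _)
  have hγ : ContinuousOn (fun τ : ℝ ↦ (s, τ)) (Icc t (ϑ₂ s)) := by fun_prop
  have hint₁ := (hgcont.comp_along_curve h₁.1 h₁.2.1 h₁.2.2 hγ hseg).intervalIntegrable_of_Icc
    (μ := volume) htϑ
  have hint₂ := (hgcont.comp_along_curve h₂.1 h₂.2.1 h₂.2.2 hγ hseg).intervalIntegrable_of_Icc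
    (μ := volume) htϑ
  dsimp only
  rw [sub_sub_sub_cancel_left, norm_sub_rev, ← intervalIntegral.integral_sub hint₁ hint₂,
    mul_right_comm]
  refine exp_neg_mul_norm_integral_le hρ (mul_nonneg hL.le hN) htϑ
    (by linarith [(hϑmaps s ⟨hs0, hsa⟩).2]) fun τ hτ ↦ ?_
  have hq := hseg (Ioc_subset_Icc_self hτ)
  exact norm_sub_le_of_lipschitz hL.le (hgLip _ hq) (hnorm_le _ (h₁.1.sub h₂.1) _ hq)
    (hnorm_le _ (h₁.2.1.sub h₂.2.1) _ hq) (hnorm_le _ (h₁.2.2.sub h₂.2.2) _ hq)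

/-- The contraction estimate (B.9), in the weighted (Bielecki) norm
`‖f‖_ρ = max_{(s,t)∈D} e^{−ρ(a−s+b−t)}|f(s,t)|`, for the single-integral operator
`𝐏(ψ,P,Q)(s,t) = p₀(s,t) − ∫_t^{ϑ₂(s)} g(s,τ,ψ,P,Q) dτ`. -/
theorem bielecki_estimate_single_integral_operator
    (n : ℕ) (a b L ρ : ℝ) (ha : 0 < a) (hb : 0 < b) (hL : 0 < L) (hρ : 0 < ρ)
    (ϑ₂ : ℝ → ℝ) (hϑcont : ContinuousOn ϑ₂ (Icc 0 a))
    (hϑmaps : ∀ s ∈ Icc (0:ℝ) a, ϑ₂ s ∈ Icc (0:ℝ) b)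
    (D : Set (ℝ × ℝ))
    (hD : D = {p : ℝ × ℝ | 0 ≤ p.1 ∧ p.1 ≤ a ∧ 0 ≤ p.2 ∧ p.2 ≤ ϑ₂ p.1})
    (g : ℝ × ℝ → EuclideanSpace ℝ (Fin n) → EuclideanSpace ℝ (Fin n) →
        EuclideanSpace ℝ (Fin n) → EuclideanSpace ℝ (Fin n))
    (hgcont : ContinuousOn
      (fun q : (ℝ × ℝ) × EuclideanSpace ℝ (Fin n) × EuclideanSpace ℝ (Fin n) ×
          EuclideanSpace ℝ (Fin n) => g q.1 q.2.1 q.2.2.1 q.2.2.2)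
      (D ×ˢ (univ : Set (EuclideanSpace ℝ (Fin n) × EuclideanSpace ℝ (Fin n) ×
          EuclideanSpace ℝ (Fin n)))))
    (hgLip : ∀ p ∈ D, ∀ Ψ₁ P₁ Q₁ Ψ₂ P₂ Q₂ : EuclideanSpace ℝ (Fin n),
      ‖g p Ψ₁ P₁ Q₁ - g p Ψ₂ P₂ Q₂‖ ≤ L * (‖Ψ₁ - Ψ₂‖ + ‖P₁ - P₂‖ + ‖Q₁ - Q₂‖))
    (p₀ : ℝ × ℝ → EuclideanSpace ℝ (Fin n)) (hp₀ : ContinuousOn p₀ D)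
    (normρ : (ℝ × ℝ → EuclideanSpace ℝ (Fin n)) → ℝ)
    (hnormρ : ∀ f : ℝ × ℝ → EuclideanSpace ℝ (Fin n),
      normρ f = ⨆ q : D, Real.exp (-ρ * (a - (q : ℝ × ℝ).1 + b - (q : ℝ × ℝ).2)) * ‖f q‖)
    (ψ₁ P₁ Q₁ ψ₂ P₂ Q₂ : ℝ × ℝ → EuclideanSpace ℝ (Fin n))
    (h₁ : ContinuousOn ψ₁ D ∧ ContinuousOn P₁ D ∧ ContinuousOn Q₁ D)
    (h₂ : ContinuousOn ψ₂ D ∧ ContinuousOn P₂ D ∧ ContinuousOn Q₂ D) :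
    ∀ p ∈ D,
      Real.exp (-ρ * (a - p.1 + b - p.2)) *
        ‖(p₀ p - ∫ τ in p.2..ϑ₂ p.1, g (p.1, τ) (ψ₁ (p.1, τ)) (P₁ (p.1, τ)) (Q₁ (p.1, τ))) -
          (p₀ p - ∫ τ in p.2..ϑ₂ p.1, g (p.1, τ) (ψ₂ (p.1, τ)) (P₂ (p.1, τ)) (Q₂ (p.1, τ)))‖ ≤
      L * ((1 - Real.exp (-ρ * b)) / ρ) *
        (normρ (ψ₁ - ψ₂) + normρ (P₁ - P₂) + normρ (Q₁ - Q₂)) :=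
  bielecki_estimate_single_integral_operator_general n a b L ρ hL hρ ϑ₂ hϑcont hϑmaps D hD g hgcont
    hgLip p₀ normρ hnormρ ψ₁ P₁ Q₁ ψ₂ P₂ Q₂ h₁ h₂
end
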